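/- arXiv:1406.4096 — 5 statements merged into one kernel-verified Lean document; each statement's English description precedes it below -/
import Mathlib

section
/- Let H₀ > 0, ρ > 0, let ζ(t,X), b(X) be smooth with h := H₀ + ζ − b > 0, and let V(t,X,z) ∈ ℝ², w(t,X,z) ∈ ℝ, P(t,X,z) ∈ ℝ be smooth functions satisfying, for −H₀ + b(X) ≤ z ≤ ζ(t,X): (i) the horizontal Euler equation ∂_t V + (V·∇_X)V + w ∂_z V = −(1/ρ)∇_X P; (ii) incompressibility ∇_X·V + ∂_z w = 0; (iii) the kinematic surface condition ∂_t ζ = −∇ζ·V|_{z=ζ} + w|_{z=ζ}; (iv) the bottom condition −∇b·V|_{z=−H₀+b} + w|_{z=−H₀+b} = 0. Then the averaged Euler (momentum) equation holds exactly: ∂_t(h V̄) + ∇·(h V̄ ⊗ V̄) + ∇·( ∫_{−H₀+b}^{ζ} V* ⊗ V* dz ) + (1/ρ)∫_{−H₀+b}^{ζ} ∇_X P dz = 0, where V̄ = (1/h)∫_{−H₀+b}^{ζ} V dz and V* = V − V̄. -/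
noncomputable section

open intervalIntegral

def Smooth2 (f : ℝ → ℝ → ℝ) : Prop :=
  ContDiff ℝ (⊤ : ℕ∞) fun p : ℝ × ℝ => f p.1 p.2

def Smooth3 (f : ℝ → ℝ → ℝ → ℝ) : Prop :=
  ContDiff ℝ (⊤ : ℕ∞) fun p : ℝ × ℝ × ℝ => f p.1 p.2.1 p.2.2

def Smooth4 (f : ℝ → ℝ → ℝ → ℝ → ℝ) : Prop :=
  ContDiff ℝ (⊤ : ℕ∞) fun p : ℝ × ℝ × ℝ × ℝ => f p.1 p.2.1 p.2.2.1 p.2.2.2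

noncomputable def pt (f : ℝ → ℝ → ℝ → ℝ) (t x y : ℝ) : ℝ := deriv (fun s => f s x y) t
/-- i-th horizontal derivative of a function of (t, x, y) -/
noncomputable def pd3 (i : Fin 2) (f : ℝ → ℝ → ℝ → ℝ) (t x y : ℝ) : ℝ :=
  if i = 0 then deriv (fun u => f t u y) x else deriv (fun u => f t x u) y
/-- i-th horizontal derivative of a function of (t, x, y, z), at fixed z -/
noncomputable def pd4 (i : Fin 2) (f : ℝ → ℝ → ℝ → ℝ → ℝ) (t x y z : ℝ) : ℝ :=
  if i = 0 then deriv (fun u => f t u y z) x else deriv (fun u => f t x u z) y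
/-- z-derivative of a function of (t, x, y, z) -/
noncomputable def pz (f : ℝ → ℝ → ℝ → ℝ → ℝ) (t x y z : ℝ) : ℝ := deriv (fun u => f t x y u) z
noncomputable def qx (f : ℝ → ℝ → ℝ) (x y : ℝ) : ℝ := deriv (fun u => f u y) x
noncomputable def qy (f : ℝ → ℝ → ℝ) (x y : ℝ) : ℝ := deriv (fun u => f x u) y

/-- vertical average of the horizontal velocity -/
noncomputable def Vbar (H₀ : ℝ) (ζ : ℝ → ℝ → ℝ → ℝ) (b : ℝ → ℝ → ℝ)
    (Vi : ℝ → ℝ → ℝ → ℝ → ℝ) (t x y : ℝ) : ℝ :=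
  (H₀ + ζ t x y - b x y)⁻¹ * ∫ z in (-H₀ + b x y)..(ζ t x y), Vi t x y z

/-- zero-mean fluctuation of the horizontal velocity -/
noncomputable def Vstar (H₀ : ℝ) (ζ : ℝ → ℝ → ℝ → ℝ) (b : ℝ → ℝ → ℝ)
    (Vi : ℝ → ℝ → ℝ → ℝ → ℝ) (t x y z : ℝ) : ℝ :=
  Vi t x y z - Vbar H₀ ζ b Vi t x y


open intervalIntegral MeasureTheory Metric Set Filter
open scoped Topology Interval

section Leib

variable {F : ℝ → ℝ → ℝ}

/-- partial derivative in first variable, continuity etc. -/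
lemma hasDerivAt_param (hF : ContDiff ℝ (⊤ : ℕ∞) fun p : ℝ × ℝ => F p.1 p.2) (s z : ℝ) :
    HasDerivAt (fun s' => F s' z)
      ((fderiv ℝ (fun p : ℝ × ℝ => F p.1 p.2) (s, z)) (1, 0)) s := by
  have h1 : HasFDerivAt (fun p : ℝ × ℝ => F p.1 p.2)
      (fderiv ℝ (fun p : ℝ × ℝ => F p.1 p.2) (s, z)) (s, z) :=
    (hF.differentiable (by simp) (s, z)).hasFDerivAt
  have h2 : HasDerivAt (fun s' : ℝ => ((s', z) : ℝ × ℝ)) ((1 : ℝ), (0 : ℝ)) s :=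
    (hasDerivAt_id s).prodMk (hasDerivAt_const s z)
  exact h1.comp_hasDerivAt s h2

lemma cont_param_deriv (hF : ContDiff ℝ (⊤ : ℕ∞) fun p : ℝ × ℝ => F p.1 p.2) :
    Continuous fun p : ℝ × ℝ => (fderiv ℝ (fun q : ℝ × ℝ => F q.1 q.2) p) ((1:ℝ), (0:ℝ)) :=
  (hF.continuous_fderiv (by simp)).clm_apply continuous_const

lemma cont_slice (hF : ContDiff ℝ (⊤ : ℕ∞) fun p : ℝ × ℝ => F p.1 p.2) (s : ℝ) :
    Continuous (F s) :=
  hF.continuous.comp (continuous_const.prodMk continuous_id)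

end Leib

section Leib2
variable {F : ℝ → ℝ → ℝ}

/-- derivative of the remainder `s ↦ ∫_{c₀}^{c s} (F s z - F s₀ z)` is 0. -/
lemma hasDerivAt_rem (hF : ContDiff ℝ (⊤ : ℕ∞) fun p : ℝ × ℝ => F p.1 p.2)
    {c : ℝ → ℝ} {s₀ : ℝ} (hc : ContinuousAt c s₀) :
    HasDerivAt (fun s => ∫ z in c s₀..c s, (F s z - F s₀ z)) 0 s₀ := by
  rw [hasDerivAt_iff_isLittleO, Asymptotics.isLittleO_iff]
  intro ε hε
  obtain ⟨K, U, hU, hlip⟩ :=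
    ((hF.contDiffAt (x := (s₀, c s₀))).of_le (by simp) :
      ContDiffAt ℝ 1 _ _).exists_lipschitzOnWith
  obtain ⟨δ, hδ, hball⟩ := Metric.mem_nhds_iff.1 hU
  have hKpos : (0:ℝ) < (K:ℝ) + 1 := by positivity
  have h1 : ∀ᶠ s in 𝓝 s₀, dist (c s) (c s₀) < min δ (ε / ((K:ℝ)+1)) :=
    Metric.tendsto_nhds.1 hc _ (lt_min hδ (by positivity))
  have h2 : ∀ᶠ s in 𝓝 s₀, dist s s₀ < δ :=
    Metric.tendsto_nhds.1 (continuousAt_id (x := s₀)) _ hδ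
  filter_upwards [h1, h2] with s hs1 hs2
  have hmem : ∀ z ∈ Set.uIoc (c s₀) (c s), ∀ s' : ℝ, dist s' s₀ < δ →
      ((s', z) : ℝ × ℝ) ∈ U := by
    intro z hz s' hs'
    apply hball
    rw [Metric.mem_ball, Prod.dist_eq]
    refine max_lt hs' (lt_of_le_of_lt ?_ (lt_of_lt_of_le hs1 (min_le_left _ _)))
    rw [Real.dist_eq, Real.dist_eq]
    have hA := le_abs_self (c s - c s₀)
    have hB := neg_abs_le (c s - c s₀)
    rcases Set.mem_uIoc.1 hz with ⟨h, h'⟩ | ⟨h, h'⟩ <;>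
      exact abs_le.2 ⟨by linarith, by linarith⟩
  have hbd : ∀ z ∈ Set.uIoc (c s₀) (c s), ‖F s z - F s₀ z‖ ≤ (K:ℝ) * dist s s₀ := by
    intro z hz
    have := hlip.dist_le_mul (s, z) (hmem z hz s hs2) (s₀, z)
      (hmem z hz s₀ (by simpa using hδ))
    simpa [Real.dist_eq, Prod.dist_eq, dist_self, Real.dist_eq] using this
  have hnorm : ‖∫ z in c s₀..c s, (F s z - F s₀ z)‖ ≤ ((K:ℝ) * dist s s₀) * |c s - c s₀| :=
    intervalIntegral.norm_integral_le_of_norm_le_const hbd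
  have hz0 : |c s - c s₀| ≤ ε / ((K:ℝ)+1) :=
    le_of_lt (lt_of_lt_of_le (by simpa [Real.dist_eq] using hs1) (min_le_right _ _))
  have hKZ : (K:ℝ) * |c s - c s₀| ≤ ε := by
    calc (K:ℝ) * |c s - c s₀| ≤ (K:ℝ) * (ε/((K:ℝ)+1)) :=
          mul_le_mul_of_nonneg_left hz0 K.coe_nonneg
    _ ≤ ((K:ℝ)+1) * (ε/((K:ℝ)+1)) :=
          mul_le_mul_of_nonneg_right (by linarith) (by positivity)
    _ = ε := mul_div_cancel₀ _ (ne_of_gt hKpos)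
  simp only [intervalIntegral.integral_same, sub_zero, smul_zero]
  calc ‖∫ z in c s₀..c s, (F s z - F s₀ z)‖
      ≤ ((K:ℝ) * dist s s₀) * |c s - c s₀| := hnorm
    _ = ((K:ℝ) * |c s - c s₀|) * ‖s - s₀‖ := by
        rw [Real.dist_eq, Real.norm_eq_abs]; ring
    _ ≤ ε * ‖s - s₀‖ := mul_le_mul_of_nonneg_right hKZ (norm_nonneg _)

end Leib2

section Leib3
variable {F : ℝ → ℝ → ℝ}

lemma intInt (hF : ContDiff ℝ (⊤ : ℕ∞) fun p : ℝ × ℝ => F p.1 p.2) (s u v : ℝ) :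
    IntervalIntegrable (F s) MeasureTheory.volume u v :=
  (cont_slice hF s).intervalIntegrable u v

/-- derivative of `s ↦ ∫_{c s₀}^{c s} F s z dz` at `s₀`. -/
lemma hasDerivAt_moving (hF : ContDiff ℝ (⊤ : ℕ∞) fun p : ℝ × ℝ => F p.1 p.2)
    {c : ℝ → ℝ} {c' s₀ : ℝ} (hc : HasDerivAt c c' s₀) :
    HasDerivAt (fun s => ∫ z in c s₀..c s, F s z) (c' * F s₀ (c s₀)) s₀ := by
  have heq : (fun s => ∫ z in c s₀..c s, F s z)
      = fun s => (∫ z in c s₀..c s, F s₀ z) + ∫ z in c s₀..c s, (F s z - F s₀ z) := by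
    funext s
    rw [← intervalIntegral.integral_add (g := fun z => F s z - F s₀ z) (intInt hF s₀ _ _)
      (((cont_slice hF s).sub (cont_slice hF s₀)).intervalIntegrable _ _)]
    simp
  rw [heq]
  have hG : HasDerivAt (fun u => ∫ z in c s₀..u, F s₀ z) (F s₀ (c s₀)) (c s₀) :=
    intervalIntegral.integral_hasDerivAt_right (intInt hF s₀ _ _)
      ((cont_slice hF s₀).stronglyMeasurableAtFilter _ _) (cont_slice hF s₀).continuousAt
  have h1 : HasDerivAt (fun s => ∫ z in c s₀..c s, F s₀ z) (F s₀ (c s₀) * c') s₀ :=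
    HasDerivAt.comp s₀ hG hc
  have := h1.add (hasDerivAt_rem hF hc.continuousAt)
  have h3 : HasDerivAt (fun s => (∫ z in c s₀..c s, F s₀ z) + ∫ z in c s₀..c s, (F s z - F s₀ z))
      (F s₀ (c s₀) * c' + 0) s₀ := this
  simpa [mul_comm] using h3

/-- derivative of `s ↦ ∫_{a₀}^{c₀} F s z dz` (fixed endpoints) at `s₀`. -/
lemma hasDerivAt_fixed (hF : ContDiff ℝ (⊤ : ℕ∞) fun p : ℝ × ℝ => F p.1 p.2) (a₀ c₀ s₀ : ℝ) :
    HasDerivAt (fun s => ∫ z in a₀..c₀, F s z)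
      (∫ z in a₀..c₀, deriv (fun s => F s z) s₀) s₀ := by
  set Fd : ℝ × ℝ → ℝ := fun p => (fderiv ℝ (fun q : ℝ × ℝ => F q.1 q.2) p) ((1:ℝ), (0:ℝ))
    with hFdDef
  have hFdCont : Continuous Fd := cont_param_deriv hF
  obtain ⟨M, hM⟩ := (isCompact_Icc (a := s₀ - 1) (b := s₀ + 1)).prod
    (isCompact_uIcc (a := a₀) (b := c₀)) |>.exists_bound_of_continuousOn hFdCont.continuousOn
  have key := intervalIntegral.hasDerivAt_integral_of_dominated_loc_of_deriv_le
    (F := fun s z => F s z) (F' := fun s z => Fd (s, z)) (x₀ := s₀)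
    (a := a₀) (b := c₀) (bound := fun _ => M) (Metric.ball_mem_nhds s₀ one_pos)
    (Filter.Eventually.of_forall fun s => ((cont_slice hF s).aestronglyMeasurable).restrict)
    (intInt hF s₀ a₀ c₀)
    ((hFdCont.comp (continuous_const.prodMk continuous_id)).aestronglyMeasurable.restrict)
    ?_ ?_ ?_
  · have : (fun z => deriv (fun s => F s z) s₀) = fun z => Fd (s₀, z) := by
      funext z; exact (hasDerivAt_param hF s₀ z).deriv
    rw [this]
    exact key.2
  · refine Filter.Eventually.of_forall fun z hz => fun s hs => hM (s, z) ?_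
    have hs' := abs_lt.1 (by simpa [Real.dist_eq] using Metric.mem_ball.1 hs)
    exact Set.mk_mem_prod ⟨by linarith [hs'.1], by linarith [hs'.2]⟩
      (Set.uIoc_subset_uIcc hz)
  · exact intervalIntegrable_const
  · exact Filter.Eventually.of_forall fun z _ s _ => hasDerivAt_param hF s z

end Leib3

section Leib4
variable {F : ℝ → ℝ → ℝ}

/-- Full Leibniz rule for `s ↦ ∫_{a s}^{c s} F s z dz`. -/
lemma hasDerivAt_leibniz (hF : ContDiff ℝ (⊤ : ℕ∞) fun p : ℝ × ℝ => F p.1 p.2)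
    {a c : ℝ → ℝ} {a' c' s₀ : ℝ} (ha : HasDerivAt a a' s₀) (hc : HasDerivAt c c' s₀) :
    HasDerivAt (fun s => ∫ z in a s..c s, F s z)
      ((∫ z in a s₀..c s₀, deriv (fun s => F s z) s₀)
        + c' * F s₀ (c s₀) - a' * F s₀ (a s₀)) s₀ := by
  have heq : (fun s => ∫ z in a s..c s, F s z)
      = fun s => (∫ z in a s₀..c s₀, F s z) + (∫ z in c s₀..c s, F s z)
          - (∫ z in a s₀..a s, F s z) := by
    funext s
    have h1 := intervalIntegral.integral_add_adjacent_intervals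
      (intInt hF s (a s₀) (a s)) (intInt hF s (a s) (c s))
    have h2 := intervalIntegral.integral_add_adjacent_intervals
      (intInt hF s (a s₀) (c s₀)) (intInt hF s (c s₀) (c s))
    linarith
  rw [heq]
  exact ((hasDerivAt_fixed hF _ _ _).add (hasDerivAt_moving hF hc)).sub
    (hasDerivAt_moving hF ha)

end Leib4

section Key
variable {F G : ℝ → ℝ → ℝ}

lemma cont_deriv_slice (hF : ContDiff ℝ (⊤ : ℕ∞) fun p : ℝ × ℝ => F p.1 p.2) (s₀ : ℝ) :
    Continuous fun z => deriv (fun s => F s z) s₀ := by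
  have : (fun z => deriv (fun s => F s z) s₀)
      = fun z => (fderiv ℝ (fun q : ℝ × ℝ => F q.1 q.2) (s₀, z)) ((1:ℝ), (0:ℝ)) :=
    funext fun z => (hasDerivAt_param hF s₀ z).deriv
  rw [this]
  exact (cont_param_deriv hF).comp (continuous_const.prodMk continuous_id)

lemma key23 (hF : ContDiff ℝ (⊤ : ℕ∞) fun p : ℝ × ℝ => F p.1 p.2)
    (hG : ContDiff ℝ (⊤ : ℕ∞) fun p : ℝ × ℝ => G p.1 p.2)
    {a c : ℝ → ℝ} (haC : ContDiff ℝ (⊤ : ℕ∞) a) (hcC : ContDiff ℝ (⊤ : ℕ∞) c)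
    (hlt : ∀ u, a u < c u) (u₀ : ℝ) :
    deriv (fun u => (c u - a u) * ((c u - a u)⁻¹ * ∫ z in a u..c u, F u z)
        * ((c u - a u)⁻¹ * ∫ z in a u..c u, G u z)) u₀
    + deriv (fun u => ∫ z in a u..c u,
        (F u z - (c u - a u)⁻¹ * ∫ z' in a u..c u, F u z')
          * (G u z - (c u - a u)⁻¹ * ∫ z' in a u..c u, G u z')) u₀
    = (∫ z in a u₀..c u₀, deriv (fun u => F u z * G u z) u₀)
      + deriv c u₀ * (F u₀ (c u₀) * G u₀ (c u₀))
      - deriv a u₀ * (F u₀ (a u₀) * G u₀ (a u₀)) := by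
  have hd : ∀ u, c u - a u ≠ 0 := fun u => ne_of_gt (sub_pos.2 (hlt u))
  have haD : HasDerivAt a (deriv a u₀) u₀ := (haC.differentiable (by simp) u₀).hasDerivAt
  have hcD : HasDerivAt c (deriv c u₀) u₀ := (hcC.differentiable (by simp) u₀).hasDerivAt
  have hAF := hasDerivAt_leibniz hF haD hcD
  have hAG := hasDerivAt_leibniz hG haD hcD
  have hdd : HasDerivAt (fun u => c u - a u) (deriv c u₀ - deriv a u₀) u₀ := hcD.sub haD
  have hg2 : HasDerivAt (fun u => (c u - a u)⁻¹ * ((∫ z in a u..c u, F u z) * ∫ z in a u..c u, G u z)) _ u₀ :=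
    ((hdd.inv (hd u₀)).mul (hAF.mul hAG))
  have hq := hasDerivAt_leibniz (F := fun u z => F u z * G u z) (hF.mul hG) haD hcD
  have hg3 : HasDerivAt (fun u => (∫ z in a u..c u, F u z * G u z)
      - (c u - a u)⁻¹ * ((∫ z in a u..c u, F u z) * ∫ z in a u..c u, G u z)) _ u₀ := hq.sub hg2
  have e2 : (fun u => (c u - a u) * ((c u - a u)⁻¹ * ∫ z in a u..c u, F u z)
        * ((c u - a u)⁻¹ * ∫ z in a u..c u, G u z))
      = fun u => (c u - a u)⁻¹ * ((∫ z in a u..c u, F u z) * ∫ z in a u..c u, G u z) := by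
    funext u; field_simp [hd u]
  have e3 : (fun u => ∫ z in a u..c u,
        (F u z - (c u - a u)⁻¹ * ∫ z' in a u..c u, F u z')
          * (G u z - (c u - a u)⁻¹ * ∫ z' in a u..c u, G u z'))
      = fun u => (∫ z in a u..c u, F u z * G u z)
          - (c u - a u)⁻¹ * ((∫ z in a u..c u, F u z) * ∫ z in a u..c u, G u z) := by
    funext u
    set p := (c u - a u)⁻¹ * ∫ z' in a u..c u, F u z' with hp
    set r := (c u - a u)⁻¹ * ∫ z' in a u..c u, G u z' with hr
    have hint : (fun z => (F u z - p) * (G u z - r))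
        = fun z => F u z * G u z - (p * G u z + (r * F u z - p * r)) := by
      funext z; ring
    rw [hint, intervalIntegral.integral_sub (f := fun z => F u z * G u z)
        (g := fun z => p * G u z + (r * F u z - p * r)) ((((cont_slice hF u).mul (cont_slice hG u))).intervalIntegrable _ _)
        (((continuous_const.mul (cont_slice hG u)).add ((continuous_const.mul (cont_slice hF u)).sub
          continuous_const)).intervalIntegrable _ _),
      intervalIntegral.integral_add (f := fun z => p * G u z) (g := fun z => r * F u z - p * r)
        ((continuous_const.mul (cont_slice hG u)).intervalIntegrable _ _)
        (((continuous_const.mul (cont_slice hF u)).sub continuous_const).intervalIntegrable _ _),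
      intervalIntegral.integral_sub (f := fun z => r * F u z) (g := fun _ => p * r)
        ((continuous_const.mul (cont_slice hF u)).intervalIntegrable _ _)
        (intervalIntegrable_const),
      intervalIntegral.integral_const_mul, intervalIntegral.integral_const_mul,
      intervalIntegral.integral_const, smul_eq_mul, hp, hr]
    have hdi : (c u - a u) * (c u - a u)⁻¹ = 1 := mul_inv_cancel₀ (hd u)
    linear_combination ((∫ z' in a u..c u, F u z') * (∫ z' in a u..c u, G u z')
      * (c u - a u)⁻¹) * hdi
  rw [e2, e3, hg2.deriv, hg3.deriv]
  ring
end Key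

section Slices
variable {f : ℝ → ℝ → ℝ → ℝ → ℝ}

lemma s4t (hf : Smooth4 f) (x y : ℝ) : ContDiff ℝ (⊤ : ℕ∞) fun p : ℝ × ℝ => f p.1 x y p.2 :=
  hf.comp (contDiff_fst.prodMk (contDiff_const.prodMk (contDiff_const.prodMk contDiff_snd)))

lemma s4x (hf : Smooth4 f) (t y : ℝ) : ContDiff ℝ (⊤ : ℕ∞) fun p : ℝ × ℝ => f t p.1 y p.2 :=
  hf.comp (contDiff_const.prodMk (contDiff_fst.prodMk (contDiff_const.prodMk contDiff_snd)))

lemma s4y (hf : Smooth4 f) (t x : ℝ) : ContDiff ℝ (⊤ : ℕ∞) fun p : ℝ × ℝ => f t x p.1 p.2 :=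
  hf.comp (contDiff_const.prodMk (contDiff_const.prodMk (contDiff_fst.prodMk contDiff_snd)))

lemma s4z (hf : Smooth4 f) (t x y : ℝ) : ContDiff ℝ (⊤ : ℕ∞) fun z : ℝ => f t x y z :=
  hf.comp (contDiff_const.prodMk (contDiff_const.prodMk (contDiff_const.prodMk contDiff_id)))

lemma s3t {g : ℝ → ℝ → ℝ → ℝ} (hg : Smooth3 g) (x y : ℝ) : ContDiff ℝ (⊤ : ℕ∞) fun s : ℝ => g s x y :=
  hg.comp (contDiff_id.prodMk (contDiff_const.prodMk contDiff_const))

lemma s3x {g : ℝ → ℝ → ℝ → ℝ} (hg : Smooth3 g) (t y : ℝ) : ContDiff ℝ (⊤ : ℕ∞) fun u : ℝ => g t u y :=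
  hg.comp (contDiff_const.prodMk (contDiff_id.prodMk contDiff_const))

lemma s3y {g : ℝ → ℝ → ℝ → ℝ} (hg : Smooth3 g) (t x : ℝ) : ContDiff ℝ (⊤ : ℕ∞) fun u : ℝ => g t x u :=
  hg.comp (contDiff_const.prodMk (contDiff_const.prodMk contDiff_id))

lemma s2x {g : ℝ → ℝ → ℝ} (hg : Smooth2 g) (y : ℝ) : ContDiff ℝ (⊤ : ℕ∞) fun u : ℝ => g u y :=
  hg.comp (contDiff_id.prodMk contDiff_const)

lemma s2y {g : ℝ → ℝ → ℝ} (hg : Smooth2 g) (x : ℝ) : ContDiff ℝ (⊤ : ℕ∞) fun u : ℝ => g x u :=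
  hg.comp (contDiff_const.prodMk contDiff_id)

end Slices

section Slices2
variable {f : ℝ → ℝ → ℝ → ℝ → ℝ}
lemma s4x1 (hf : Smooth4 f) (t y z : ℝ) : ContDiff ℝ (⊤ : ℕ∞) fun u : ℝ => f t u y z :=
  hf.comp (contDiff_const.prodMk (contDiff_id.prodMk (contDiff_const.prodMk contDiff_const)))
lemma s4y1 (hf : Smooth4 f) (t x z : ℝ) : ContDiff ℝ (⊤ : ℕ∞) fun u : ℝ => f t x u z :=
  hf.comp (contDiff_const.prodMk (contDiff_const.prodMk (contDiff_id.prodMk contDiff_const)))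
end Slices2

/-- the exact averaged Euler momentum equation. -/
theorem averaged_euler_momentum
    (H₀ ρ : ℝ) (hH₀ : 0 < H₀) (hρ : 0 < ρ)
    (ζ : ℝ → ℝ → ℝ → ℝ) (b : ℝ → ℝ → ℝ)
    (V : Fin 2 → ℝ → ℝ → ℝ → ℝ → ℝ) (w P : ℝ → ℝ → ℝ → ℝ → ℝ)
    (hζ : Smooth3 ζ) (hb : Smooth2 b)
    (hV : ∀ i, Smooth4 (V i)) (hw : Smooth4 w) (hP : Smooth4 P)
    (hpos : ∀ t x y, 0 < H₀ + ζ t x y - b x y)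
    -- (i) horizontal Euler equation
    (hEuler : ∀ i, ∀ t x y z, -H₀ + b x y ≤ z → z ≤ ζ t x y →
      pt (fun t' x' y' => V i t' x' y' z) t x y
        + (V 0 t x y z * pd4 0 (V i) t x y z + V 1 t x y z * pd4 1 (V i) t x y z)
        + w t x y z * pz (V i) t x y z
      = -(1/ρ) * pd4 i P t x y z)
    -- (ii) incompressibility
    (hincomp : ∀ t x y z, -H₀ + b x y ≤ z → z ≤ ζ t x y →
      pd4 0 (V 0) t x y z + pd4 1 (V 1) t x y z + pz w t x y z = 0)
    -- (iii) kinematic surface condition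
    (hsurf : ∀ t x y,
      pt ζ t x y =
        -(pd3 0 ζ t x y * V 0 t x y (ζ t x y) + pd3 1 ζ t x y * V 1 t x y (ζ t x y))
          + w t x y (ζ t x y))
    -- (iv) bottom condition
    (hbott : ∀ t x y,
      -(qx b x y * V 0 t x y (-H₀ + b x y) + qy b x y * V 1 t x y (-H₀ + b x y))
        + w t x y (-H₀ + b x y) = 0) :
    ∀ (i : Fin 2) (t x y : ℝ),
      pt (fun t' x' y' => (H₀ + ζ t' x' y' - b x' y') * Vbar H₀ ζ b (V i) t' x' y') t x y
        + (∑ j : Fin 2, pd3 j (fun t' x' y' =>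
            (H₀ + ζ t' x' y' - b x' y') * Vbar H₀ ζ b (V i) t' x' y' *
              Vbar H₀ ζ b (V j) t' x' y') t x y)
        + (∑ j : Fin 2, pd3 j (fun t' x' y' =>
            ∫ z in (-H₀ + b x' y')..(ζ t' x' y'),
              Vstar H₀ ζ b (V i) t' x' y' z * Vstar H₀ ζ b (V j) t' x' y' z) t x y)
        + (1/ρ) * ∫ z in (-H₀ + b x y)..(ζ t x y), pd4 i P t x y z = 0 := by
  intro i t x y
  have hlt : ∀ t' x' y', -H₀ + b x' y' < ζ t' x' y' := fun t' x' y' => by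
    linarith [hpos t' x' y']
  have hne : ∀ t' x' y', H₀ + ζ t' x' y' - b x' y' ≠ 0 := fun t' x' y' =>
    ne_of_gt (hpos t' x' y')
  set a₀ := -H₀ + b x y with ha₀
  set c₀ := ζ t x y with hc₀
  have haleb : a₀ ≤ c₀ := le_of_lt (hlt t x y)
  -- Term 1
  have hζt : HasDerivAt (fun s => ζ s x y) (deriv (fun s => ζ s x y) t) t :=
    ((s3t hζ x y).differentiable (by simp) t).hasDerivAt
  have hT1 : deriv (fun s => (H₀ + ζ s x y - b x y) * Vbar H₀ ζ b (V i) s x y) t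
      = (∫ z in a₀..c₀, deriv (fun s => V i s x y z) t)
        + deriv (fun s => ζ s x y) t * V i t x y c₀ - 0 * V i t x y a₀ := by
    have e1 : (fun s => (H₀ + ζ s x y - b x y) * Vbar H₀ ζ b (V i) s x y)
        = fun s => ∫ z in a₀..(ζ s x y), V i s x y z := by
      funext s
      rw [Vbar, ← mul_assoc, mul_inv_cancel₀ (hne s x y), one_mul, ha₀]
    rw [e1]
    exact (hasDerivAt_leibniz (s4t (hV i) x y) (hasDerivAt_const t a₀) hζt).deriv
  -- Terms 2+3, j = 0
  have hT230 : deriv (fun u => (H₀ + ζ t u y - b u y) * Vbar H₀ ζ b (V i) t u y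
        * Vbar H₀ ζ b (V 0) t u y) x
      + deriv (fun u => ∫ z in (-H₀ + b u y)..(ζ t u y),
          Vstar H₀ ζ b (V i) t u y z * Vstar H₀ ζ b (V 0) t u y z) x
      = (∫ z in a₀..c₀, deriv (fun u => V i t u y z * V 0 t u y z) x)
        + deriv (fun u => ζ t u y) x * (V i t x y c₀ * V 0 t x y c₀)
        - deriv (fun u => -H₀ + b u y) x * (V i t x y a₀ * V 0 t x y a₀) := by
    have hkey := key23 (F := fun u z => V i t u y z) (G := fun u z => V 0 t u y z)
      (s4x (hV i) t y) (s4x (hV 0) t y)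
      (a := fun u => -H₀ + b u y) (c := fun u => ζ t u y)
      (contDiff_const.add (s2x hb y)) (s3x hζ t y)
      (fun u => hlt t u y) x
    have e2 : (fun u => (H₀ + ζ t u y - b u y) * Vbar H₀ ζ b (V i) t u y
          * Vbar H₀ ζ b (V 0) t u y)
        = fun u => (ζ t u y - (-H₀ + b u y))
            * ((ζ t u y - (-H₀ + b u y))⁻¹ * ∫ z in (-H₀ + b u y)..(ζ t u y), V i t u y z)
            * ((ζ t u y - (-H₀ + b u y))⁻¹ * ∫ z in (-H₀ + b u y)..(ζ t u y), V 0 t u y z) := by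
      funext u
      have hrw : H₀ + ζ t u y - b u y = ζ t u y - (-H₀ + b u y) := by ring
      rw [Vbar, Vbar, hrw]
    have e3 : (fun u => ∫ z in (-H₀ + b u y)..(ζ t u y),
          Vstar H₀ ζ b (V i) t u y z * Vstar H₀ ζ b (V 0) t u y z)
        = fun u => ∫ z in (-H₀ + b u y)..(ζ t u y),
            (V i t u y z
              - (ζ t u y - (-H₀ + b u y))⁻¹ * ∫ z' in (-H₀ + b u y)..(ζ t u y), V i t u y z')
            * (V 0 t u y z
              - (ζ t u y - (-H₀ + b u y))⁻¹ * ∫ z' in (-H₀ + b u y)..(ζ t u y), V 0 t u y z') := by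
      funext u
      have hrw : H₀ + ζ t u y - b u y = ζ t u y - (-H₀ + b u y) := by ring
      simp only [Vstar, Vbar, hrw]
    rw [e2, e3]
    exact hkey
  -- Terms 2+3, j = 1
  have hT231 : deriv (fun v => (H₀ + ζ t x v - b x v) * Vbar H₀ ζ b (V i) t x v
        * Vbar H₀ ζ b (V 1) t x v) y
      + deriv (fun v => ∫ z in (-H₀ + b x v)..(ζ t x v),
          Vstar H₀ ζ b (V i) t x v z * Vstar H₀ ζ b (V 1) t x v z) y
      = (∫ z in a₀..c₀, deriv (fun v => V i t x v z * V 1 t x v z) y)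
        + deriv (fun v => ζ t x v) y * (V i t x y c₀ * V 1 t x y c₀)
        - deriv (fun v => -H₀ + b x v) y * (V i t x y a₀ * V 1 t x y a₀) := by
    have hkey := key23 (F := fun v z => V i t x v z) (G := fun v z => V 1 t x v z)
      (s4y (hV i) t x) (s4y (hV 1) t x)
      (a := fun v => -H₀ + b x v) (c := fun v => ζ t x v)
      (contDiff_const.add (s2y hb x)) (s3y hζ t x)
      (fun v => hlt t x v) y
    have e2 : (fun v => (H₀ + ζ t x v - b x v) * Vbar H₀ ζ b (V i) t x v
          * Vbar H₀ ζ b (V 1) t x v)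
        = fun v => (ζ t x v - (-H₀ + b x v))
            * ((ζ t x v - (-H₀ + b x v))⁻¹ * ∫ z in (-H₀ + b x v)..(ζ t x v), V i t x v z)
            * ((ζ t x v - (-H₀ + b x v))⁻¹ * ∫ z in (-H₀ + b x v)..(ζ t x v), V 1 t x v z) := by
      funext v
      have hrw : H₀ + ζ t x v - b x v = ζ t x v - (-H₀ + b x v) := by ring
      rw [Vbar, Vbar, hrw]
    have e3 : (fun v => ∫ z in (-H₀ + b x v)..(ζ t x v),
          Vstar H₀ ζ b (V i) t x v z * Vstar H₀ ζ b (V 1) t x v z)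
        = fun v => ∫ z in (-H₀ + b x v)..(ζ t x v),
            (V i t x v z
              - (ζ t x v - (-H₀ + b x v))⁻¹ * ∫ z' in (-H₀ + b x v)..(ζ t x v), V i t x v z')
            * (V 1 t x v z
              - (ζ t x v - (-H₀ + b x v))⁻¹ * ∫ z' in (-H₀ + b x v)..(ζ t x v), V 1 t x v z') := by
      funext v
      have hrw : H₀ + ζ t x v - b x v = ζ t x v - (-H₀ + b x v) := by ring
      simp only [Vstar, Vbar, hrw]
    rw [e2, e3]
    exact hkey
  -- combining the integrals
  have ct : Continuous fun z => deriv (fun s => V i s x y z) t :=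
    cont_deriv_slice (s4t (hV i) x y) t
  have c0 : Continuous fun z => deriv (fun u => V i t u y z * V 0 t u y z) x :=
    cont_deriv_slice ((s4x (hV i) t y).mul (s4x (hV 0) t y)) x
  have c1 : Continuous fun z => deriv (fun v => V i t x v z * V 1 t x v z) y :=
    cont_deriv_slice ((s4y (hV i) t x).mul (s4y (hV 1) t x)) y
  have cP : Continuous fun z => pd4 i P t x y z := by
    fin_cases i
    · simpa [pd4] using cont_deriv_slice (s4x hP t y) x
    · simpa [pd4] using cont_deriv_slice (s4y hP t x) y
  have hg : ContDiff ℝ (⊤ : ℕ∞) fun z : ℝ => w t x y z * V i t x y z :=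
    (s4z hw t x y).mul (s4z (hV i) t x y)
  have hIcomb : (∫ z in a₀..c₀, deriv (fun s => V i s x y z) t)
      + (∫ z in a₀..c₀, deriv (fun u => V i t u y z * V 0 t u y z) x)
      + (∫ z in a₀..c₀, deriv (fun v => V i t x v z * V 1 t x v z) y)
      + (1/ρ) * (∫ z in a₀..c₀, pd4 i P t x y z)
      = -(w t x y c₀ * V i t x y c₀ - w t x y a₀ * V i t x y a₀) := by
    rw [← intervalIntegral.integral_const_mul,
      ← intervalIntegral.integral_add (ct.intervalIntegrable _ _) (c0.intervalIntegrable _ _),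
      ← intervalIntegral.integral_add
        (f := fun z => deriv (fun s => V i s x y z) t + deriv (fun u => V i t u y z * V 0 t u y z) x)
        (g := fun z => deriv (fun v => V i t x v z * V 1 t x v z) y) ((ct.add c0).intervalIntegrable _ _)
        (c1.intervalIntegrable _ _),
      ← intervalIntegral.integral_add
        (f := fun z => deriv (fun s => V i s x y z) t + deriv (fun u => V i t u y z * V 0 t u y z) x
          + deriv (fun v => V i t x v z * V 1 t x v z) y)
        (g := fun z => 1/ρ * pd4 i P t x y z) (((ct.add c0).add c1).intervalIntegrable _ _)
        ((continuous_const.mul cP).intervalIntegrable _ _)]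
    have hcongr : Set.EqOn
        (fun z => deriv (fun s => V i s x y z) t
          + deriv (fun u => V i t u y z * V 0 t u y z) x
          + deriv (fun v => V i t x v z * V 1 t x v z) y
          + 1/ρ * pd4 i P t x y z)
        (fun z => -(deriv (fun z' => w t x y z' * V i t x y z') z))
        (Set.uIcc a₀ c₀) := by
      intro z hz
      rw [Set.uIcc_of_le haleb] at hz
      have hE := hEuler i t x y z hz.1 hz.2
      have hI := hincomp t x y z hz.1 hz.2
      simp only [pt] at hE
      have hd0 : deriv (fun u => V i t u y z * V 0 t u y z) x
          = pd4 0 (V i) t x y z * V 0 t x y z + V i t x y z * pd4 0 (V 0) t x y z := by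
        have h1 : HasDerivAt (fun u => V i t u y z) (pd4 0 (V i) t x y z) x := by
          simpa [pd4] using ((s4x1 (hV i) t y z).differentiable (by simp) x).hasDerivAt
        have h2 : HasDerivAt (fun u => V 0 t u y z) (pd4 0 (V 0) t x y z) x := by
          simpa [pd4] using ((s4x1 (hV 0) t y z).differentiable (by simp) x).hasDerivAt
        exact (h1.mul h2).deriv
      have hd1 : deriv (fun v => V i t x v z * V 1 t x v z) y
          = pd4 1 (V i) t x y z * V 1 t x y z + V i t x y z * pd4 1 (V 1) t x y z := by
        have h1 : HasDerivAt (fun v => V i t x v z) (pd4 1 (V i) t x y z) y := by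
          simpa [pd4] using ((s4y1 (hV i) t x z).differentiable (by simp) y).hasDerivAt
        have h2 : HasDerivAt (fun v => V 1 t x v z) (pd4 1 (V 1) t x y z) y := by
          simpa [pd4] using ((s4y1 (hV 1) t x z).differentiable (by simp) y).hasDerivAt
        exact (h1.mul h2).deriv
      have hdz : deriv (fun z' => w t x y z' * V i t x y z') z
          = pz w t x y z * V i t x y z + w t x y z * pz (V i) t x y z := by
        have h1 : HasDerivAt (fun z' => w t x y z') (pz w t x y z) z := by
          simpa [pz] using ((s4z hw t x y).differentiable (by simp) z).hasDerivAt
        have h2 : HasDerivAt (fun z' => V i t x y z') (pz (V i) t x y z) z := by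
          simpa [pz] using ((s4z (hV i) t x y).differentiable (by simp) z).hasDerivAt
        exact (h1.mul h2).deriv
      simp only
      rw [hd0, hd1, hdz]
      linear_combination hE + V i t x y z * hI
    rw [intervalIntegral.integral_congr hcongr, intervalIntegral.integral_neg,
      intervalIntegral.integral_deriv_eq_sub
        (fun z _ => hg.differentiable (by simp) z)
        ((hg.continuous_deriv (by simp)).intervalIntegrable _ _)]
  -- boundary conditions in deriv form
  have hsurf' : deriv (fun s => ζ s x y) t
      = -(deriv (fun u => ζ t u y) x * V 0 t x y c₀ + deriv (fun u => ζ t x u) y * V 1 t x y c₀)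
        + w t x y c₀ := by
    simpa [pt, pd3] using hsurf t x y
  have hbott' : -(deriv (fun u => b u y) x * V 0 t x y a₀ + deriv (fun u => b x u) y * V 1 t x y a₀)
      + w t x y a₀ = 0 := by
    simpa [qx, qy] using hbott t x y
  have ebx : deriv (fun u => -H₀ + b u y) x = deriv (fun u => b u y) x := by
    simp [deriv_const_add]
  have eby : deriv (fun v => -H₀ + b x v) y = deriv (fun v => b x v) y := by
    simp [deriv_const_add]
  rw [ebx] at hT230
  rw [eby] at hT231
  simp only [Fin.sum_univ_two, pt, pd3, show ((0 : Fin 2) = 0) = True by simp,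
    show ((1 : Fin 2) = 0) = False by simp, if_true, if_false]
  linear_combination hT1 + hT230 + hT231 + hIcomb + V i t x y c₀ * hsurf'
    + V i t x y a₀ * hbott'
end
end

section
/- Let ε, β, μ > 0, let ζ(t,X), b(X) be smooth (X ∈ ℝ²) with h := 1 + εζ − βb > 0, and let V(t,X,z) ∈ ℝ², w(t,X,z) ∈ ℝ, P(t,X,z) ∈ ℝ be smooth and satisfy, for −1+βb ≤ z ≤ εζ: (i) the vertical Euler equation ∂_t w + εV·∇w + (ε/μ) w ∂_z w = −(1/ε)(∂_z P + 1); (ii) the surface condition P(t,X,εζ(t,X)) = 0. Then the exact identity (1/ε)∫_{−1+βb}^{εζ} ∇P dz = h∇ζ + ∫_{−1+βb}^{εζ} ∇( ∫_z^{εζ} ( ∂_t w + εV·∇w + (ε/μ) w ∂_z w ) dz' ) dz holds, where ∇ denotes the horizontal gradient at fixed z. -/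
noncomputable section

open intervalIntegral

noncomputable def pt4 (f : ℝ → ℝ → ℝ → ℝ → ℝ) (t x y z : ℝ) : ℝ := deriv (fun s => f s x y z) t
/-- the vertical acceleration Γ = ∂_t w + εV·∇w + (ε/μ) w ∂_z w. -/
noncomputable def Gam (ε μ : ℝ) (V : Fin 2 → ℝ → ℝ → ℝ → ℝ → ℝ)
    (w : ℝ → ℝ → ℝ → ℝ → ℝ) (t x y z : ℝ) : ℝ :=
  pt4 w t x y z
    + ε * (V 0 t x y z * pd4 0 w t x y z + V 1 t x y z * pd4 1 w t x y z)
    + (ε / μ) * w t x y z * pz w t x y z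


lemma slice_hasDerivAt {P : ℝ → ℝ → ℝ}
    (hP : ContDiff ℝ (⊤ : ℕ∞) fun p : ℝ × ℝ => P p.1 p.2) (x z : ℝ) :
    HasDerivAt (fun u => P u z)
      ((fderiv ℝ (fun p : ℝ × ℝ => P p.1 p.2) (x, z)) (1, 0)) x :=
  by
    have hf := (hP.differentiable (by simp) (x, z)).hasFDerivAt
    exact hf.comp_hasDerivAt x ((hasDerivAt_id x).prodMk (hasDerivAt_const x z))

lemma slice_deriv_continuous {P : ℝ → ℝ → ℝ}
    (hP : ContDiff ℝ (⊤ : ℕ∞) fun p : ℝ × ℝ => P p.1 p.2) (x : ℝ) :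
    Continuous fun z => deriv (fun u => P u z) x := by
  have h : (fun z => deriv (fun u => P u z) x)
      = fun z => (fderiv ℝ (fun p : ℝ × ℝ => P p.1 p.2) (x, z)) (1, 0) :=
    funext fun z => (slice_hasDerivAt hP x z).deriv
  rw [h]
  exact ((hP.continuous_fderiv (by simp)).comp
    (continuous_const.prodMk continuous_id)).clm_apply continuous_const

lemma master (ε β : ℝ) (hε : 0 < ε)
    (ζ b : ℝ → ℝ) (P G : ℝ → ℝ → ℝ)
    (hζ : ContDiff ℝ (⊤ : ℕ∞) ζ) (hb : Continuous b)
    (hP : ContDiff ℝ (⊤ : ℕ∞) fun p : ℝ × ℝ => P p.1 p.2)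
    (hEuler : ∀ u z, -1 + β * b u ≤ z → z ≤ ε * ζ u →
      G u z = -(1/ε) * (deriv (fun v => P u v) z + 1))
    (hPsurf : ∀ u, P u (ε * ζ u) = 0)
    (x : ℝ) (hpos : 0 < 1 + ε * ζ x - β * b x) :
    (1/ε) * ∫ z in (-1 + β * b x)..(ε * ζ x), deriv (fun u => P u z) x
      = (1 + ε * ζ x - β * b x) * deriv ζ x
        + ∫ z in (-1 + β * b x)..(ε * ζ x),
            deriv (fun u => ∫ zp in z..(ε * ζ u), G u zp) x := by
  have hεne : ε ≠ 0 := ne_of_gt hε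
  have hlt : -1 + β * b x < ε * ζ x := by linarith
  -- Step A: pointwise identity for z strictly inside the fluid domain
  have stepA : ∀ z ∈ Set.Ioo (-1 + β * b x) (ε * ζ x),
      deriv (fun u => ∫ zp in z..(ε * ζ u), G u zp) x
        = (1/ε) * deriv (fun u => P u z) x - deriv ζ x := by
    intro z hz
    have ev1 : ∀ᶠ u in nhds x, -1 + β * b u < z :=
      ((continuous_const.add (continuous_const.mul hb)).continuousAt).eventually_lt
        continuousAt_const hz.1
    have ev2 : ∀ᶠ u in nhds x, z < ε * ζ u :=
      continuousAt_const.eventually_lt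
        ((continuous_const.mul (hζ.continuous)).continuousAt) hz.2
    have hev : (fun u => ∫ zp in z..(ε * ζ u), G u zp)
        =ᶠ[nhds x] fun u => (1/ε) * P u z - ζ u + z/ε := by
      filter_upwards [ev1, ev2] with u h1 h2
      have hz2 : z ≤ ε * ζ u := le_of_lt h2
      have hPu : ContDiff ℝ (⊤ : ℕ∞) fun v => P u v :=
        hP.comp (contDiff_const.prodMk contDiff_id)
      have hcongr : Set.EqOn (fun zp => G u zp)
          (fun zp => -(1/ε) * (deriv (fun v => P u v) zp + 1))
          (Set.uIcc z (ε * ζ u)) := by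
        intro zp hzp
        rw [Set.uIcc_of_le hz2] at hzp
        exact hEuler u zp (le_trans (le_of_lt h1) hzp.1) hzp.2
      have hint : IntervalIntegrable (fun zp => deriv (fun v => P u v) zp)
          MeasureTheory.volume z (ε * ζ u) :=
        (hPu.continuous_deriv (by simp)).intervalIntegrable _ _
      have hftc : (∫ zp in z..(ε * ζ u), deriv (fun v => P u v) zp)
          = P u (ε * ζ u) - P u z :=
        intervalIntegral.integral_deriv_eq_sub
          (fun v _ => (hPu.differentiable (by simp)).differentiableAt) hint
      calc (∫ zp in z..(ε * ζ u), G u zp)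
          = ∫ zp in z..(ε * ζ u), -(1/ε) * (deriv (fun v => P u v) zp + 1) :=
            intervalIntegral.integral_congr hcongr
        _ = -(1/ε) * ∫ zp in z..(ε * ζ u), (deriv (fun v => P u v) zp + 1) :=
            intervalIntegral.integral_const_mul _ _
        _ = -(1/ε) * ((P u (ε * ζ u) - P u z) + (ε * ζ u - z) * 1) := by
            rw [intervalIntegral.integral_add hint intervalIntegrable_const,
              hftc, intervalIntegral.integral_const, smul_eq_mul]
        _ = (1/ε) * P u z - ζ u + z/ε := by
            rw [hPsurf u]; field_simp; ring
    rw [hev.deriv_eq]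
    have dP : DifferentiableAt ℝ (fun u => P u z) x :=
      (slice_hasDerivAt hP x z).differentiableAt
    have dζ : DifferentiableAt ℝ ζ x := (hζ.differentiable (by simp)) x
    rw [deriv_add_const, deriv_fun_sub (dP.const_mul _) dζ, deriv_const_mul _ dP]
  -- Step B: rewrite the integral using the a.e. identity
  have stepB : (∫ z in (-1 + β * b x)..(ε * ζ x),
        deriv (fun u => ∫ zp in z..(ε * ζ u), G u zp) x)
      = ∫ z in (-1 + β * b x)..(ε * ζ x),
          ((1/ε) * deriv (fun u => P u z) x - deriv ζ x) := by
    apply intervalIntegral.integral_congr_ae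
    have hne : ∀ᵐ z : ℝ, z ≠ ε * ζ x := by
      have h0 : MeasureTheory.volume ({ε * ζ x} : Set ℝ) = 0 :=
        MeasureTheory.measure_singleton _
      exact MeasureTheory.measure_mono_null (fun z hz => hz) h0
        |> fun _ => (MeasureTheory.compl_mem_ae_iff.mpr h0)
    filter_upwards [hne] with z hz hmem
    rw [Set.uIoc_of_le (le_of_lt hlt)] at hmem
    exact stepA z ⟨hmem.1, lt_of_le_of_ne hmem.2 hz⟩
  have contP : Continuous fun z => deriv (fun u => P u z) x := slice_deriv_continuous hP x
  have hintP : IntervalIntegrable (fun z => deriv (fun u => P u z) x)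
      MeasureTheory.volume (-1 + β * b x) (ε * ζ x) := contP.intervalIntegrable _ _
  rw [stepB, intervalIntegral.integral_sub (hintP.const_mul _) intervalIntegrable_const,
    intervalIntegral.integral_const_mul, intervalIntegral.integral_const, smul_eq_mul]
  ring

/-- exact decomposition of the pressure contribution into its
hydrostatic and non-hydrostatic parts. -/
theorem pressure_contribution
    (ε β μ : ℝ) (hε : 0 < ε) (hβ : 0 < β) (hμ : 0 < μ)
    (ζ : ℝ → ℝ → ℝ → ℝ) (b : ℝ → ℝ → ℝ)
    (V : Fin 2 → ℝ → ℝ → ℝ → ℝ → ℝ) (w P : ℝ → ℝ → ℝ → ℝ → ℝ)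
    (hζ : Smooth3 ζ) (hb : Smooth2 b)
    (hV : ∀ i, Smooth4 (V i)) (hw : Smooth4 w) (hP : Smooth4 P)
    (hpos : ∀ t x y, 0 < 1 + ε * ζ t x y - β * b x y)
    -- (i) the vertical Euler equation
    (hEuler : ∀ t x y z, -1 + β * b x y ≤ z → z ≤ ε * ζ t x y →
      Gam ε μ V w t x y z = -(1/ε) * (pz P t x y z + 1))
    -- (ii) the pressure vanishes at the surface
    (hPsurf : ∀ t x y, P t x y (ε * ζ t x y) = 0) :
    ∀ (i : Fin 2) (t x y : ℝ),
      (1/ε) * (∫ z in (-1 + β * b x y)..(ε * ζ t x y), pd4 i P t x y z)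
        = (1 + ε * ζ t x y - β * b x y) * pd3 i ζ t x y
          + ∫ z in (-1 + β * b x y)..(ε * ζ t x y),
              pd3 i (fun t' x' y' =>
                ∫ zp in z..(ε * ζ t' x' y'), Gam ε μ V w t' x' y' zp) t x y := by
  intro i t x y
  fin_cases i
  · simp only [pd3, pd4, if_pos rfl]
    exact master ε β hε (fun u => ζ t u y) (fun u => b u y)
      (fun u z => P t u y z) (fun u z => Gam ε μ V w t u y z)
      (hζ.comp (contDiff_const.prodMk (contDiff_id.prodMk contDiff_const)))
      (hb.continuous.comp (continuous_id.prodMk continuous_const))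
      (hP.comp (contDiff_const.prodMk (contDiff_fst.prodMk
        (contDiff_const.prodMk contDiff_snd))))
      (fun u z h1 h2 => hEuler t u y z h1 h2)
      (fun u => hPsurf t u y) x (hpos t x y)
  · have hne : (⟨1, by omega⟩ : Fin 2) ≠ 0 := by decide
    simp only [pd3, pd4, if_neg hne]
    exact master ε β hε (fun u => ζ t x u) (fun u => b x u)
      (fun u z => P t x u z) (fun u z => Gam ε μ V w t x u z)
      (hζ.comp (contDiff_const.prodMk (contDiff_const.prodMk contDiff_id)))
      (hb.continuous.comp (continuous_const.prodMk continuous_id))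
      (hP.comp (contDiff_const.prodMk (contDiff_const.prodMk
        (contDiff_fst.prodMk contDiff_snd))))
      (fun u z h1 h2 => hEuler t x u z h1 h2)
      (fun u => hPsurf t x u) y (hpos t x y)
end
end

section
/- Let ε, β > 0, let ζ(t,X), b(X), V̄(t,X) ∈ ℝ² be smooth (X ∈ ℝ²) with h := 1 + εζ − βb > 0 satisfying the mass conservation equation ∂_t ζ + ∇·(h V̄) = 0, and let V*(t,X,z) ∈ ℝ² be smooth and satisfy, for all z, the linear transport equation ∂_t V* + ε(V̄·∇)V* + ε(V*·∇)V̄ − ε ∇·[(1+z−βb)V̄] ∂_z V* = 0, where ∇·[(1+z−βb)V̄] is computed at fixed z. For θ ∈ [0,1] define the value on the level line Γ_θ: V*_θ(t,X) = V*(t, X, −1 + βb(X) + θ h(t,X)). Then V*_θ satisfies exactly the two-dimensional transport equation ∂_t V*_θ + ε(V̄·∇)V*_θ + ε(V*_θ·∇)V̄ = 0. -/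
noncomputable section

open intervalIntegral

noncomputable def px (f : ℝ → ℝ → ℝ → ℝ) (t x y : ℝ) : ℝ := deriv (fun u => f t u y) x
noncomputable def py (f : ℝ → ℝ → ℝ → ℝ) (t x y : ℝ) : ℝ := deriv (fun u => f t x u) y
noncomputable def px4 (f : ℝ → ℝ → ℝ → ℝ → ℝ) (t x y z : ℝ) : ℝ := deriv (fun u => f t u y z) x
noncomputable def py4 (f : ℝ → ℝ → ℝ → ℝ → ℝ) (t x y z : ℝ) : ℝ := deriv (fun u => f t x u z) y
lemma hasDerivAt_comp2 (F : ℝ × ℝ → ℝ) (u : ℝ → ℝ) {t u' : ℝ}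
    (hF : DifferentiableAt ℝ F (t, u t)) (hu : HasDerivAt u u' t) :
    HasDerivAt (fun s => F (s, u s))
      (deriv (fun s => F (s, u t)) t + deriv (fun z => F (t, z)) (u t) * u') t := by
  have hL := hF.hasFDerivAt
  set L := fderiv ℝ F (t, u t) with hLdef
  have hcurve : HasDerivAt (fun s => (s, u s)) ((1 : ℝ), u') t :=
    (hasDerivAt_id t).prodMk hu
  have hmain : HasDerivAt (fun s => F (s, u s)) (L (1, u')) t :=
    hL.comp_hasDerivAt t hcurve
  have h1 : HasDerivAt (fun s => F (s, u t)) (L (1, 0)) t := by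
    have hc : HasDerivAt (fun s : ℝ => (s, u t)) ((1 : ℝ), (0 : ℝ)) t :=
      (hasDerivAt_id t).prodMk (hasDerivAt_const t (u t))
    exact hL.comp_hasDerivAt t hc
  have h2 : HasDerivAt (fun z => F (t, z)) (L (0, 1)) (u t) := by
    have hc : HasDerivAt (fun z : ℝ => ((t : ℝ), z)) ((0 : ℝ), (1 : ℝ)) (u t) :=
      (hasDerivAt_const (u t) t).prodMk (hasDerivAt_id (u t))
    exact hL.comp_hasDerivAt (u t) hc
  have hvec : ((1 : ℝ), u') = ((1 : ℝ), (0 : ℝ)) + u' • ((0 : ℝ), (1 : ℝ)) := by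
    simp [Prod.ext_iff]
  have hsum : L (1, u') = L (1, 0) + L (0, 1) * u' := by
    rw [hvec, map_add, map_smul, smul_eq_mul]; ring
  rw [h1.deriv, h2.deriv, ← hsum]
  exact hmain

lemma smooth3_hasDerivAt_1 {f : ℝ → ℝ → ℝ → ℝ} (hf : Smooth3 f) (t x y : ℝ) :
    HasDerivAt (fun s => f s x y) (pt f t x y) t := by
  have h : ContDiff ℝ (⊤ : ℕ∞) (fun s : ℝ => f s x y) :=
    hf.comp (contDiff_id.prodMk (contDiff_const.prodMk contDiff_const))
  exact (h.differentiable (by simp) t).hasDerivAt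

lemma smooth3_hasDerivAt_2 {f : ℝ → ℝ → ℝ → ℝ} (hf : Smooth3 f) (t x y : ℝ) :
    HasDerivAt (fun v => f t v y) (px f t x y) x := by
  have h : ContDiff ℝ (⊤ : ℕ∞) (fun v : ℝ => f t v y) :=
    hf.comp (contDiff_const.prodMk (contDiff_id.prodMk contDiff_const))
  exact (h.differentiable (by simp) x).hasDerivAt

lemma smooth3_hasDerivAt_3 {f : ℝ → ℝ → ℝ → ℝ} (hf : Smooth3 f) (t x y : ℝ) :
    HasDerivAt (fun w => f t x w) (py f t x y) y := by
  have h : ContDiff ℝ (⊤ : ℕ∞) (fun w : ℝ => f t x w) :=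
    hf.comp (contDiff_const.prodMk (contDiff_const.prodMk contDiff_id))
  exact (h.differentiable (by simp) y).hasDerivAt

lemma smooth2_hasDerivAt_1 {f : ℝ → ℝ → ℝ} (hf : Smooth2 f) (x y : ℝ) :
    HasDerivAt (fun u => f u y) (deriv (fun u => f u y) x) x := by
  have h : ContDiff ℝ (⊤ : ℕ∞) (fun u : ℝ => f u y) :=
    hf.comp (contDiff_id.prodMk contDiff_const)
  exact (h.differentiable (by simp) x).hasDerivAt

lemma smooth2_hasDerivAt_2 {f : ℝ → ℝ → ℝ} (hf : Smooth2 f) (x y : ℝ) :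
    HasDerivAt (fun v => f x v) (deriv (fun v => f x v) y) y := by
  have h : ContDiff ℝ (⊤ : ℕ∞) (fun v : ℝ => f x v) :=
    hf.comp (contDiff_const.prodMk contDiff_id)
  exact (h.differentiable (by simp) y).hasDerivAt

lemma smooth4_diff_1 {f : ℝ → ℝ → ℝ → ℝ → ℝ} (hf : Smooth4 f) (x y : ℝ) :
    Differentiable ℝ (fun p : ℝ × ℝ => f p.1 x y p.2) := by
  have h : ContDiff ℝ (⊤ : ℕ∞) (fun p : ℝ × ℝ => f p.1 x y p.2) :=
    hf.comp (contDiff_fst.prodMk (contDiff_const.prodMk (contDiff_const.prodMk contDiff_snd)))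
  exact h.differentiable (by simp)

lemma smooth4_diff_2 {f : ℝ → ℝ → ℝ → ℝ → ℝ} (hf : Smooth4 f) (t y : ℝ) :
    Differentiable ℝ (fun p : ℝ × ℝ => f t p.1 y p.2) := by
  have h : ContDiff ℝ (⊤ : ℕ∞) (fun p : ℝ × ℝ => f t p.1 y p.2) :=
    hf.comp (contDiff_const.prodMk (contDiff_fst.prodMk (contDiff_const.prodMk contDiff_snd)))
  exact h.differentiable (by simp)

lemma smooth4_diff_3 {f : ℝ → ℝ → ℝ → ℝ → ℝ} (hf : Smooth4 f) (t x : ℝ) :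
    Differentiable ℝ (fun p : ℝ × ℝ => f t x p.1 p.2) := by
  have h : ContDiff ℝ (⊤ : ℕ∞) (fun p : ℝ × ℝ => f t x p.1 p.2) :=
    hf.comp (contDiff_const.prodMk (contDiff_const.prodMk (contDiff_fst.prodMk contDiff_snd)))
  exact h.differentiable (by simp)


/-- the value of the shear velocity on each level line Γ_θ satisfies
the two-dimensional transport equation ∂_t V*_θ + ε(V̄·∇)V*_θ + ε(V*_θ·∇)V̄ = 0. -/
theorem level_line_transport
    (ε β : ℝ) (hε : 0 < ε) (hβ : 0 < β)
    (ζ : ℝ → ℝ → ℝ → ℝ) (b : ℝ → ℝ → ℝ)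
    (Vb : Fin 2 → ℝ → ℝ → ℝ → ℝ)
    (Vs : Fin 2 → ℝ → ℝ → ℝ → ℝ → ℝ)
    (hζ : Smooth3 ζ) (hb : Smooth2 b)
    (hVb : ∀ i, Smooth3 (Vb i)) (hVs : ∀ i, Smooth4 (Vs i))
    (hpos : ∀ t x y, 0 < 1 + ε * ζ t x y - β * b x y)
    -- mass conservation ∂_t ζ + ∇·(hV̄) = 0
    (hmass : ∀ t x y,
      pt ζ t x y
        + px (fun t' x' y' => (1 + ε * ζ t' x' y' - β * b x' y') * Vb 0 t' x' y') t x y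
        + py (fun t' x' y' => (1 + ε * ζ t' x' y' - β * b x' y') * Vb 1 t' x' y') t x y = 0)
    -- the linear transport equation for V*, for all z
    (htransport : ∀ (i : Fin 2) (t x y z : ℝ),
      pt4 (Vs i) t x y z
        + ε * (Vb 0 t x y * px4 (Vs i) t x y z + Vb 1 t x y * py4 (Vs i) t x y z)
        + ε * (Vs 0 t x y z * px (Vb i) t x y + Vs 1 t x y z * py (Vb i) t x y)
        - ε * (px (fun t' x' y' => (1 + z - β * b x' y') * Vb 0 t' x' y') t x y
            + py (fun t' x' y' => (1 + z - β * b x' y') * Vb 1 t' x' y') t x y)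
          * pz (Vs i) t x y z = 0) :
    ∀ θ : ℝ, 0 ≤ θ → θ ≤ 1 →
      ∀ (i : Fin 2) (t x y : ℝ),
        pt (fun t' x' y' => Vs i t' x' y'
              (-1 + β * b x' y' + θ * (1 + ε * ζ t' x' y' - β * b x' y'))) t x y
          + ε * (Vb 0 t x y * px (fun t' x' y' => Vs i t' x' y'
                (-1 + β * b x' y' + θ * (1 + ε * ζ t' x' y' - β * b x' y'))) t x y
              + Vb 1 t x y * py (fun t' x' y' => Vs i t' x' y'
                (-1 + β * b x' y' + θ * (1 + ε * ζ t' x' y' - β * b x' y'))) t x y)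
          + ε * (Vs 0 t x y (-1 + β * b x y + θ * (1 + ε * ζ t x y - β * b x y))
                * px (Vb i) t x y
              + Vs 1 t x y (-1 + β * b x y + θ * (1 + ε * ζ t x y - β * b x y))
                * py (Vb i) t x y) = 0 := by
  intro θ hθ0 hθ1 i t x y
  -- basic slice derivatives
  have hζt : HasDerivAt (fun s => ζ s x y) (pt ζ t x y) t := smooth3_hasDerivAt_1 hζ t x y
  have hζx : HasDerivAt (fun v => ζ t v y) (px ζ t x y) x := smooth3_hasDerivAt_2 hζ t x y
  have hζy : HasDerivAt (fun w => ζ t x w) (py ζ t x y) y := smooth3_hasDerivAt_3 hζ t x y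
  have hbx : HasDerivAt (fun u => b u y) (deriv (fun u => b u y) x) x := smooth2_hasDerivAt_1 hb x y
  have hby : HasDerivAt (fun v => b x v) (deriv (fun v => b x v) y) y := smooth2_hasDerivAt_2 hb x y
  have hVb0x : HasDerivAt (fun v => Vb 0 t v y) (px (Vb 0) t x y) x :=
    smooth3_hasDerivAt_2 (hVb 0) t x y
  have hVb1y : HasDerivAt (fun w => Vb 1 t x w) (py (Vb 1) t x y) y :=
    smooth3_hasDerivAt_3 (hVb 1) t x y
  -- derivatives of the level-line height in each variable
  have h1t : HasDerivAt (fun s => 1 + ε * ζ s x y - β * b x y) (ε * pt ζ t x y) t :=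
    ((hζt.const_mul ε).const_add 1).sub_const (β * b x y)
  have h1x : HasDerivAt (fun v => 1 + ε * ζ t v y - β * b v y)
      (ε * px ζ t x y - β * deriv (fun u => b u y) x) x :=
    ((hζx.const_mul ε).const_add 1).sub (hbx.const_mul β)
  have h1y : HasDerivAt (fun w => 1 + ε * ζ t x w - β * b x w)
      (ε * py ζ t x y - β * deriv (fun v => b x v) y) y :=
    ((hζy.const_mul ε).const_add 1).sub (hby.const_mul β)
  have hu_t : HasDerivAt (fun s => -1 + β * b x y + θ * (1 + ε * ζ s x y - β * b x y)) (θ * (ε * pt ζ t x y)) t :=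
    (h1t.const_mul θ).const_add (-1 + β * b x y)
  have hu_x : HasDerivAt (fun v => -1 + β * b v y + θ * (1 + ε * ζ t v y - β * b v y)) (β * deriv (fun u => b u y) x + θ * (ε * px ζ t x y - β * deriv (fun u => b u y) x)) x :=
    ((hbx.const_mul β).const_add (-1)).add (h1x.const_mul θ)
  have hu_y : HasDerivAt (fun w => -1 + β * b x w + θ * (1 + ε * ζ t x w - β * b x w)) (β * deriv (fun v => b x v) y + θ * (ε * py ζ t x y - β * deriv (fun v => b x v) y)) y :=
    ((hby.const_mul β).const_add (-1)).add (h1y.const_mul θ)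
  -- chain rule for the three composed partial derivatives
  have key_t := hasDerivAt_comp2 (fun p : ℝ × ℝ => Vs i p.1 x y p.2) (fun s => -1 + β * b x y + θ * (1 + ε * ζ s x y - β * b x y))
    (smooth4_diff_1 (hVs i) x y _) hu_t
  have key_x := hasDerivAt_comp2 (fun p : ℝ × ℝ => Vs i t p.1 y p.2) (fun v => -1 + β * b v y + θ * (1 + ε * ζ t v y - β * b v y))
    (smooth4_diff_2 (hVs i) t y _) hu_x
  have key_y := hasDerivAt_comp2 (fun p : ℝ × ℝ => Vs i t x p.1 p.2) (fun w => -1 + β * b x w + θ * (1 + ε * ζ t x w - β * b x w))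
    (smooth4_diff_3 (hVs i) t x _) hu_y
  have E1 : pt (fun t' x' y' => Vs i t' x' y' (-1 + β * b x' y' + θ * (1 + ε * ζ t' x' y' - β * b x' y'))) t x y
      = pt4 (Vs i) t x y (-1 + β * b x y + θ * (1 + ε * ζ t x y - β * b x y)) + pz (Vs i) t x y (-1 + β * b x y + θ * (1 + ε * ζ t x y - β * b x y)) * (θ * (ε * pt ζ t x y)) := by
    simp only [pt]
    exact key_t.deriv
  have E2 : px (fun t' x' y' => Vs i t' x' y' (-1 + β * b x' y' + θ * (1 + ε * ζ t' x' y' - β * b x' y'))) t x y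
      = px4 (Vs i) t x y (-1 + β * b x y + θ * (1 + ε * ζ t x y - β * b x y)) + pz (Vs i) t x y (-1 + β * b x y + θ * (1 + ε * ζ t x y - β * b x y)) * (β * deriv (fun u => b u y) x + θ * (ε * px ζ t x y - β * deriv (fun u => b u y) x)) := by
    simp only [px]
    exact key_x.deriv
  have E3 : py (fun t' x' y' => Vs i t' x' y' (-1 + β * b x' y' + θ * (1 + ε * ζ t' x' y' - β * b x' y'))) t x y
      = py4 (Vs i) t x y (-1 + β * b x y + θ * (1 + ε * ζ t x y - β * b x y)) + pz (Vs i) t x y (-1 + β * b x y + θ * (1 + ε * ζ t x y - β * b x y)) * (β * deriv (fun v => b x v) y + θ * (ε * py ζ t x y - β * deriv (fun v => b x v) y)) := by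
    simp only [py]
    exact key_y.deriv
  -- expand the mass conservation equation
  have hM := hmass t x y
  have EM1 : px (fun t' x' y' => (1 + ε * ζ t' x' y' - β * b x' y') * Vb 0 t' x' y') t x y
      = (ε * px ζ t x y - β * deriv (fun u => b u y) x) * Vb 0 t x y
        + (1 + ε * ζ t x y - β * b x y) * px (Vb 0) t x y := by
    simp only [px]
    exact (h1x.mul hVb0x).deriv
  have EM2 : py (fun t' x' y' => (1 + ε * ζ t' x' y' - β * b x' y') * Vb 1 t' x' y') t x y
      = (ε * py ζ t x y - β * deriv (fun v => b x v) y) * Vb 1 t x y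
        + (1 + ε * ζ t x y - β * b x y) * py (Vb 1) t x y := by
    simp only [py]
    exact (h1y.mul hVb1y).deriv
  rw [EM1, EM2] at hM
  -- expand the transport equation at z = z0
  have hT := htransport i t x y (-1 + β * b x y + θ * (1 + ε * ζ t x y - β * b x y))
  have g1x : HasDerivAt (fun v => 1 + (-1 + β * b x y + θ * (1 + ε * ζ t x y - β * b x y)) - β * b v y) (-(β * deriv (fun u => b u y) x)) x :=
    (hbx.const_mul β).const_sub (1 + (-1 + β * b x y + θ * (1 + ε * ζ t x y - β * b x y)))
  have g1y : HasDerivAt (fun w => 1 + (-1 + β * b x y + θ * (1 + ε * ζ t x y - β * b x y)) - β * b x w) (-(β * deriv (fun v => b x v) y)) y :=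
    (hby.const_mul β).const_sub (1 + (-1 + β * b x y + θ * (1 + ε * ζ t x y - β * b x y)))
  have ET1 : px (fun t' x' y' => (1 + (-1 + β * b x y + θ * (1 + ε * ζ t x y - β * b x y)) - β * b x' y') * Vb 0 t' x' y') t x y
      = -(β * deriv (fun u => b u y) x) * Vb 0 t x y + (1 + (-1 + β * b x y + θ * (1 + ε * ζ t x y - β * b x y)) - β * b x y) * px (Vb 0) t x y := by
    simp only [px]
    exact (g1x.mul hVb0x).deriv
  have ET2 : py (fun t' x' y' => (1 + (-1 + β * b x y + θ * (1 + ε * ζ t x y - β * b x y)) - β * b x' y') * Vb 1 t' x' y') t x y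
      = -(β * deriv (fun v => b x v) y) * Vb 1 t x y + (1 + (-1 + β * b x y + θ * (1 + ε * ζ t x y - β * b x y)) - β * b x y) * py (Vb 1) t x y := by
    simp only [py]
    exact (g1y.mul hVb1y).deriv
  rw [ET1, ET2] at hT
  rw [E1, E2, E3]
  linear_combination hT + θ * ε * pz (Vs i) t x y (-1 + β * b x y + θ * (1 + ε * ζ t x y - β * b x y)) * hM
end
end

section
/- Let ε, β > 0, let ζ(t,X), b(X), V̄(t,X) ∈ ℝ² be smooth (X ∈ ℝ²) with h := 1 + εζ − βb > 0 satisfying ∂_t ζ + ∇·(h V̄) = 0, and let V*(t,X,z) ∈ ℝ² be smooth with zero vertical mean (∫_{−1+βb}^{εζ} V* dz = 0) and satisfying, for all z in the water column, ∂_t V* + ε(V̄·∇)V* + ε(V*·∇)V̄ − ε ∇·[(1+z−βb)V̄] ∂_z V* = 0. Define V♯(t,X) = −(24/h³) ∫_{−1+βb}^{εζ} ∫_z^{εζ} ∫_{−1+βb}^{z'} V* dz'' dz' dz. Then V♯ satisfies exactly ∂_t V♯ + ε(V̄·∇)V♯ + ε(V♯·∇)V̄ = 0. -/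
noncomputable section

open intervalIntegral

/-- V♯ = −(24/h³) ∫∫∫ V*. -/
noncomputable def Vsharp (ε β : ℝ) (ζ : ℝ → ℝ → ℝ → ℝ) (b : ℝ → ℝ → ℝ)
    (Vs : Fin 2 → ℝ → ℝ → ℝ → ℝ → ℝ) (i : Fin 2) (t x y : ℝ) : ℝ :=
  -(24 / (1 + ε * ζ t x y - β * b x y)^3) *
    ∫ z in (-1 + β * b x y)..(ε * ζ t x y),
      ∫ zp in z..(ε * ζ t x y),
        ∫ zq in (-1 + β * b x y)..zp, Vs i t x y zq

section Helpers
open MeasureTheory Set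
variable {E : Type*} [NormedAddCommGroup E] [NormedSpace ℝ E]

lemma deriv_along {F : E → ℝ} (hF : ContDiff ℝ (⊤ : ℕ∞) F) {γ : ℝ → E} {γ' : E} {s : ℝ}
    (hγ : HasDerivAt γ γ' s) : HasDerivAt (fun r => F (γ r)) (fderiv ℝ F (γ s) γ') s :=
  HasFDerivAt.comp_hasDerivAt s ((hF.differentiable (by simp)) (γ s)).hasFDerivAt hγ

lemma contDeriv_along {F : E → ℝ} (hF : ContDiff ℝ (⊤ : ℕ∞) F) (v : E) :
    Continuous fun p => fderiv ℝ F p v :=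
  (hF.continuous_fderiv (by simp)).clm_apply continuous_const


section S4
variable {f : ℝ → ℝ → ℝ → ℝ → ℝ} (t x y z : ℝ)

lemma s4_hasDerivAt_t (hf : Smooth4 f) : HasDerivAt (fun s => f s x y z)
    (fderiv ℝ (fun p : ℝ × ℝ × ℝ × ℝ => f p.1 p.2.1 p.2.2.1 p.2.2.2) (t,x,y,z) (1,0,0,0)) t :=
  deriv_along hf ((hasDerivAt_id t).prodMk ((hasDerivAt_const t x).prodMk
    ((hasDerivAt_const t y).prodMk (hasDerivAt_const t z))))

lemma s4_hasDerivAt_x (hf : Smooth4 f) : HasDerivAt (fun s => f t s y z)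
    (fderiv ℝ (fun p : ℝ × ℝ × ℝ × ℝ => f p.1 p.2.1 p.2.2.1 p.2.2.2) (t,x,y,z) (0,1,0,0)) x :=
  deriv_along hf ((hasDerivAt_const x t).prodMk ((hasDerivAt_id x).prodMk
    ((hasDerivAt_const x y).prodMk (hasDerivAt_const x z))))

lemma s4_hasDerivAt_y (hf : Smooth4 f) : HasDerivAt (fun s => f t x s z)
    (fderiv ℝ (fun p : ℝ × ℝ × ℝ × ℝ => f p.1 p.2.1 p.2.2.1 p.2.2.2) (t,x,y,z) (0,0,1,0)) y :=
  deriv_along hf ((hasDerivAt_const y t).prodMk ((hasDerivAt_const y x).prodMk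
    ((hasDerivAt_id y).prodMk (hasDerivAt_const y z))))

lemma s4_hasDerivAt_z (hf : Smooth4 f) : HasDerivAt (fun s => f t x y s)
    (fderiv ℝ (fun p : ℝ × ℝ × ℝ × ℝ => f p.1 p.2.1 p.2.2.1 p.2.2.2) (t,x,y,z) (0,0,0,1)) z :=
  deriv_along hf ((hasDerivAt_const z t).prodMk ((hasDerivAt_const z x).prodMk
    ((hasDerivAt_const z y).prodMk (hasDerivAt_id z))))
end S4

section S3
variable {f : ℝ → ℝ → ℝ → ℝ} (t x y : ℝ)

lemma s3_hasDerivAt_t (hf : Smooth3 f) : HasDerivAt (fun s => f s x y)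
    (fderiv ℝ (fun p : ℝ × ℝ × ℝ => f p.1 p.2.1 p.2.2) (t,x,y) (1,0,0)) t :=
  deriv_along hf ((hasDerivAt_id t).prodMk ((hasDerivAt_const t x).prodMk (hasDerivAt_const t y)))

lemma s3_hasDerivAt_x (hf : Smooth3 f) : HasDerivAt (fun s => f t s y)
    (fderiv ℝ (fun p : ℝ × ℝ × ℝ => f p.1 p.2.1 p.2.2) (t,x,y) (0,1,0)) x :=
  deriv_along hf ((hasDerivAt_const x t).prodMk ((hasDerivAt_id x).prodMk (hasDerivAt_const x y)))

lemma s3_hasDerivAt_y (hf : Smooth3 f) : HasDerivAt (fun s => f t x s)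
    (fderiv ℝ (fun p : ℝ × ℝ × ℝ => f p.1 p.2.1 p.2.2) (t,x,y) (0,0,1)) y :=
  deriv_along hf ((hasDerivAt_const y t).prodMk ((hasDerivAt_const y x).prodMk (hasDerivAt_id y)))
end S3

section S2
variable {f : ℝ → ℝ → ℝ} (x y : ℝ)

lemma s2_hasDerivAt_x (hf : Smooth2 f) : HasDerivAt (fun s => f s y)
    (fderiv ℝ (fun p : ℝ × ℝ => f p.1 p.2) (x,y) (1,0)) x :=
  deriv_along hf ((hasDerivAt_id x).prodMk (hasDerivAt_const x y))

lemma s2_hasDerivAt_y (hf : Smooth2 f) : HasDerivAt (fun s => f x s)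
    (fderiv ℝ (fun p : ℝ × ℝ => f p.1 p.2) (x,y) (0,1)) y :=
  deriv_along hf ((hasDerivAt_const y x).prodMk (hasDerivAt_id y))
end S2

section Param
variable {g g' : ℝ → ℝ → ℝ}

lemma paramA (hg : Continuous fun p : ℝ × ℝ => g p.1 p.2)
    (hg' : Continuous fun p : ℝ × ℝ => g' p.1 p.2)
    (hd : ∀ s z : ℝ, HasDerivAt (fun r => g r z) (g' s z) s)
    (a c s₀ : ℝ) :
    HasDerivAt (fun s => ∫ u in a..c, g s u) (∫ u in a..c, g' s₀ u) s₀ := by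
  have hslice : ∀ s : ℝ, Continuous fun u => g s u := fun s =>
    hg.comp (continuous_const.prodMk continuous_id)
  obtain ⟨C, hC⟩ := ((isCompact_Icc (a := s₀ - 1) (b := s₀ + 1)).prod
    (isCompact_uIcc (a := a) (b := c))).exists_bound_of_continuousOn hg'.continuousOn
  refine (intervalIntegral.hasDerivAt_integral_of_dominated_loc_of_deriv_le
    (F := fun s u => g s u) (F' := fun s u => g' s u) (bound := fun _ => C)
    (Metric.ball_mem_nhds s₀ one_pos) ?_ ?_ ?_ ?_ ?_ ?_).2
  · exact Filter.Eventually.of_forall fun s => (hslice s).aestronglyMeasurable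
  · exact (hslice s₀).intervalIntegrable _ _
  · exact (hg'.comp (continuous_const.prodMk continuous_id)).aestronglyMeasurable
  · refine Filter.Eventually.of_forall fun u hu s hs => ?_
    refine hC (s, u) ⟨?_, uIoc_subset_uIcc hu⟩
    have := Metric.mem_ball.1 hs
    rw [Real.dist_eq] at this
    constructor <;> [linarith [abs_le.1 this.le |>.1]; linarith [abs_le.1 this.le |>.2]]
  · exact intervalIntegrable_const
  · exact Filter.Eventually.of_forall fun u _ s _ => hd s u

lemma paramP (hg : Continuous fun p : ℝ × ℝ => g p.1 p.2)
    (hg' : Continuous fun p : ℝ × ℝ => g' p.1 p.2)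
    (hd : ∀ s z : ℝ, HasDerivAt (fun r => g r z) (g' s z) s)
    (s₀ z₀ : ℝ) :
    HasFDerivAt (fun p : ℝ × ℝ => ∫ u in (0:ℝ)..p.2, g p.1 u)
      ((∫ u in (0:ℝ)..z₀, g' s₀ u) • (ContinuousLinearMap.fst ℝ ℝ ℝ) +
        (g s₀ z₀) • (ContinuousLinearMap.snd ℝ ℝ ℝ)) (s₀, z₀) := by
  have hslice : ∀ s : ℝ, Continuous fun u => g s u := fun s =>
    hg.comp (continuous_const.prodMk continuous_id)
  have split : ∀ p : ℝ × ℝ, (∫ u in (0:ℝ)..p.2, g p.1 u) =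
      (∫ u in (0:ℝ)..z₀, g p.1 u) + ∫ u in z₀..p.2, g p.1 u := fun p =>
    (integral_add_adjacent_intervals ((hslice p.1).intervalIntegrable _ _)
      ((hslice p.1).intervalIntegrable _ _)).symm
  rw [show (fun p : ℝ × ℝ => ∫ u in (0:ℝ)..p.2, g p.1 u) =
      (fun p : ℝ × ℝ => (∫ u in (0:ℝ)..z₀, g p.1 u) + ∫ u in z₀..p.2, g p.1 u)
    from funext split]
  refine HasFDerivAt.add ?_ ?_
  · have h1 := (paramA hg hg' hd 0 z₀ s₀).hasFDerivAt
    have h2 := h1.comp (s₀, z₀) (ContinuousLinearMap.fst ℝ ℝ ℝ).hasFDerivAt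
    have heq : ((ContinuousLinearMap.toSpanSingleton ℝ (∫ u in (0:ℝ)..z₀, g' s₀ u)).comp
        (ContinuousLinearMap.fst ℝ ℝ ℝ)) =
        (∫ u in (0:ℝ)..z₀, g' s₀ u) • (ContinuousLinearMap.fst ℝ ℝ ℝ) :=
      ContinuousLinearMap.ext fun p => by simp [mul_comm]
    rw [heq] at h2
    exact h2
  · rw [hasFDerivAt_iff_isLittleO_nhds_zero]
    rw [Asymptotics.isLittleO_iff]
    intro c hc
    obtain ⟨δ, hδ, hball⟩ := Metric.continuousAt_iff.1 hg.continuousAt c hc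
    have hev : ∀ᶠ h : ℝ × ℝ in nhds 0, ‖h‖ < δ := by
      filter_upwards [Metric.ball_mem_nhds (0 : ℝ × ℝ) hδ] with h hh
      simpa [Metric.mem_ball, dist_zero_right] using hh
    filter_upwards [hev] with h hh
    have hint : IntervalIntegrable (fun u => g (s₀ + h.1) u) volume z₀ (z₀ + h.2) :=
      (hslice _).intervalIntegrable _ _
    have key : (∫ u in z₀..(z₀ + h.2), g (s₀ + h.1) u) - g s₀ z₀ * h.2 =
        ∫ u in z₀..(z₀ + h.2), (g (s₀ + h.1) u - g s₀ z₀) := by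
      rw [intervalIntegral.integral_sub hint intervalIntegrable_const,
        intervalIntegral.integral_const]
      simp only [smul_eq_mul]
      ring
    have hbnd : ∀ u ∈ Set.uIoc z₀ (z₀ + h.2), ‖g (s₀ + h.1) u - g s₀ z₀‖ ≤ c := by
      intro u hu
      have hu' : |u - z₀| ≤ |h.2| := by
        rcases Set.mem_uIoc.1 hu with ⟨h1, h2⟩ | ⟨h1, h2⟩ <;>
          · rw [abs_le]
            constructor <;>
              linarith [abs_nonneg h.2, le_abs_self h.2, neg_abs_le h.2]
      have : dist (s₀ + h.1, u) (s₀, z₀) < δ := by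
        rw [Prod.dist_eq]
        have h1 : dist (s₀ + h.1) s₀ ≤ ‖h‖ := by
          rw [Real.dist_eq]; simpa using (norm_fst_le h)
        have h2 : dist u z₀ ≤ ‖h‖ := by
          rw [Real.dist_eq]
          exact hu'.trans (norm_snd_le h)
        exact max_lt (lt_of_le_of_lt h1 hh) (lt_of_le_of_lt h2 hh)
      exact (hball this).le
    have hbig := intervalIntegral.norm_integral_le_of_norm_le_const hbnd
    simp only [Prod.fst_add, Prod.snd_add, intervalIntegral.integral_same, sub_zero,
      ContinuousLinearMap.smul_apply, ContinuousLinearMap.coe_snd', smul_eq_mul]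
    calc ‖(∫ u in z₀..(z₀ + h.2), g (s₀ + h.1) u) - g s₀ z₀ * h.2‖
        = ‖∫ u in z₀..(z₀ + h.2), (g (s₀ + h.1) u - g s₀ z₀)‖ := by rw [key]
      _ ≤ c * |(z₀ + h.2) - z₀| := hbig
      _ = c * |h.2| := by ring_nf
      _ ≤ c * ‖h‖ := by
          refine mul_le_mul_of_nonneg_left ?_ hc.le
          simpa [Real.norm_eq_abs] using norm_snd_le h
end Param

section ParamD
variable {g g' : ℝ → ℝ → ℝ}

lemma paramD (hg : Continuous fun p : ℝ × ℝ => g p.1 p.2)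
    (hg' : Continuous fun p : ℝ × ℝ => g' p.1 p.2)
    (hd : ∀ s z : ℝ, HasDerivAt (fun r => g r z) (g' s z) s)
    {a c : ℝ → ℝ} {a' c' s₀ : ℝ}
    (ha : HasDerivAt a a' s₀) (hc : HasDerivAt c c' s₀) :
    HasDerivAt (fun s => ∫ u in a s..c s, g s u)
      (c' * g s₀ (c s₀) - a' * g s₀ (a s₀) + ∫ u in a s₀..c s₀, g' s₀ u) s₀ := by
  have hslice : ∀ s : ℝ, Continuous fun u => g s u := fun s =>
    hg.comp (continuous_const.prodMk continuous_id)
  have hslice' : ∀ s : ℝ, Continuous fun u => g' s u := fun s =>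
    hg'.comp (continuous_const.prodMk continuous_id)
  have split : (fun s => ∫ u in a s..c s, g s u) =
      fun s => (∫ u in (0:ℝ)..c s, g s u) - ∫ u in (0:ℝ)..a s, g s u := by
    funext s
    rw [intervalIntegral.integral_interval_sub_left ((hslice s).intervalIntegrable _ _)
      ((hslice s).intervalIntegrable _ _)]
  rw [split]
  have hγc : HasDerivAt (fun s => ((s : ℝ), c s)) ((1 : ℝ), c') s₀ :=
    (hasDerivAt_id s₀).prodMk hc
  have hγa : HasDerivAt (fun s => ((s : ℝ), a s)) ((1 : ℝ), a') s₀ :=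
    (hasDerivAt_id s₀).prodMk ha
  have hFc := (paramP hg hg' hd s₀ (c s₀)).comp_hasDerivAt s₀ hγc
  have hFa := (paramP hg hg' hd s₀ (a s₀)).comp_hasDerivAt s₀ hγa
  have h := hFc.sub hFa
  have hval : ((∫ u in (0:ℝ)..c s₀, g' s₀ u) • (ContinuousLinearMap.fst ℝ ℝ ℝ) +
        (g s₀ (c s₀)) • (ContinuousLinearMap.snd ℝ ℝ ℝ)) ((1:ℝ), c') -
      ((∫ u in (0:ℝ)..a s₀, g' s₀ u) • (ContinuousLinearMap.fst ℝ ℝ ℝ) +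
        (g s₀ (a s₀)) • (ContinuousLinearMap.snd ℝ ℝ ℝ)) ((1:ℝ), a') =
      c' * g s₀ (c s₀) - a' * g s₀ (a s₀) + ∫ u in a s₀..c s₀, g' s₀ u := by
    rw [← intervalIntegral.integral_interval_sub_left ((hslice' s₀).intervalIntegrable _ _)
      ((hslice' s₀).intervalIntegrable _ _)]
    simp only [ContinuousLinearMap.add_apply, ContinuousLinearMap.smul_apply,
      ContinuousLinearMap.coe_fst', ContinuousLinearMap.coe_snd', smul_eq_mul]
    rw [intervalIntegral.integral_symm 0 (a s₀)]
    ring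
  rw [hval] at h
  exact h
end ParamD

lemma primitive_hasDerivAt {f : ℝ → ℝ} (hf : Continuous f) (a z : ℝ) :
    HasDerivAt (fun r => ∫ u in a..r, f u) (f z) z :=
  intervalIntegral.integral_hasDerivAt_right (hf.intervalIntegrable _ _)
    (hf.stronglyMeasurableAtFilter _ _) hf.continuousAt

lemma tripleIntegral_eq {f : ℝ → ℝ} (hf : Continuous f) (B η : ℝ) :
    (∫ z in B..η, ∫ zp in z..η, ∫ zq in B..zp, f zq) =
      ∫ u in B..η, ((η - B)^2 - (u - B)^2)/2 * f u := by
  set P : ℝ → ℝ := fun r => ∫ u in B..r, f u with hPdef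
  have hPc : Continuous P :=
    intervalIntegral.continuous_primitive (fun a b => hf.intervalIntegrable a b) B
  set Q : ℝ → ℝ := fun r => ∫ u in B..r, P u with hQdef
  have hQc : Continuous Q :=
    intervalIntegral.continuous_primitive (fun a b => hPc.intervalIntegrable a b) B
  have hL : (∫ z in B..η, ∫ zp in z..η, ∫ zq in B..zp, f zq) = ∫ u in B..η, (u - B) * P u := by
    have mid : ∀ z ∈ Set.uIcc B η, (∫ zp in z..η, ∫ zq in B..zp, f zq) = Q η - Q z :=
      fun z _ => intervalIntegral.integral_eq_sub_of_hasDerivAt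
        (fun u _ => primitive_hasDerivAt hPc B u) (hPc.intervalIntegrable _ _)
    rw [intervalIntegral.integral_congr mid,
      intervalIntegral.integral_sub intervalIntegrable_const (hQc.intervalIntegrable _ _),
      intervalIntegral.integral_const]
    have ibp := intervalIntegral.integral_mul_deriv_eq_deriv_mul
      (a := B) (b := η) (u := Q) (u' := P) (v := fun r => r - B) (v' := fun _ => (1:ℝ))
      (fun r _ => primitive_hasDerivAt hPc B r)
      (fun r _ => (hasDerivAt_id r).sub_const B)
      (hPc.intervalIntegrable _ _) intervalIntegrable_const
    have e1 : (∫ z in B..η, Q z) = ∫ z in B..η, Q z * 1 := by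
      refine intervalIntegral.integral_congr fun z _ => (mul_one _).symm
    rw [e1, ibp]
    have e2 : (∫ x in B..η, P x * (x - B)) = ∫ x in B..η, (x - B) * P x :=
      intervalIntegral.integral_congr fun z _ => mul_comm _ _
    rw [e2]
    simp only [smul_eq_mul]
    ring
  have hR : (∫ u in B..η, ((η - B)^2 - (u - B)^2)/2 * f u) = ∫ u in B..η, (u - B) * P u := by
    have hwc : Continuous fun r : ℝ => -(r - B) := by continuity
    have ibp := intervalIntegral.integral_mul_deriv_eq_deriv_mul
      (a := B) (b := η) (u := fun r => ((η - B)^2 - (r - B)^2)/2) (u' := fun r => -(r - B))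
      (v := P) (v' := f)
      (fun r _ => by
        have h1 : HasDerivAt (fun r : ℝ => ((η - B)^2 - (r - B)^2)/2)
            ((0 - 2*(r - B)^1*1)/2) r :=
          (((hasDerivAt_const r ((η - B)^2)).sub (((hasDerivAt_id r).sub_const B).pow 2)).div_const 2)
        refine h1.congr_deriv ?_; ring)
      (fun r _ => primitive_hasDerivAt hf B r)
      (hwc.intervalIntegrable _ _) (hf.intervalIntegrable _ _)
    rw [ibp]
    have e3 : (∫ x in B..η, -(x - B) * P x) = - ∫ x in B..η, (x - B) * P x := by
      rw [← intervalIntegral.integral_neg]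
      exact intervalIntegral.integral_congr fun z _ => by ring
    rw [e3]
    have e5 : P B = 0 := intervalIntegral.integral_same
    rw [e5]
    ring
  rw [hL, hR]

section PNotation
variable {f4 : ℝ → ℝ → ℝ → ℝ → ℝ} {f3 : ℝ → ℝ → ℝ → ℝ} {f2 : ℝ → ℝ → ℝ}

lemma s4_hd_t (hf : Smooth4 f4) (t x y z : ℝ) :
    HasDerivAt (fun s => f4 s x y z) (pt4 f4 t x y z) t :=
  (s4_hasDerivAt_t t x y z hf).differentiableAt.hasDerivAt
lemma s4_hd_x (hf : Smooth4 f4) (t x y z : ℝ) :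
    HasDerivAt (fun s => f4 t s y z) (px4 f4 t x y z) x :=
  (s4_hasDerivAt_x t x y z hf).differentiableAt.hasDerivAt
lemma s4_hd_y (hf : Smooth4 f4) (t x y z : ℝ) :
    HasDerivAt (fun s => f4 t x s z) (py4 f4 t x y z) y :=
  (s4_hasDerivAt_y t x y z hf).differentiableAt.hasDerivAt
lemma s4_hd_z (hf : Smooth4 f4) (t x y z : ℝ) :
    HasDerivAt (fun s => f4 t x y s) (pz f4 t x y z) z :=
  (s4_hasDerivAt_z t x y z hf).differentiableAt.hasDerivAt

lemma s3_hd_t (hf : Smooth3 f3) (t x y : ℝ) :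
    HasDerivAt (fun s => f3 s x y) (pt f3 t x y) t :=
  (s3_hasDerivAt_t t x y hf).differentiableAt.hasDerivAt
lemma s3_hd_x (hf : Smooth3 f3) (t x y : ℝ) :
    HasDerivAt (fun s => f3 t s y) (px f3 t x y) x :=
  (s3_hasDerivAt_x t x y hf).differentiableAt.hasDerivAt
lemma s3_hd_y (hf : Smooth3 f3) (t x y : ℝ) :
    HasDerivAt (fun s => f3 t x s) (py f3 t x y) y :=
  (s3_hasDerivAt_y t x y hf).differentiableAt.hasDerivAt

lemma s2_hd_x (hf : Smooth2 f2) (x y : ℝ) :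
    HasDerivAt (fun s => f2 s y) (deriv (fun s => f2 s y) x) x :=
  (s2_hasDerivAt_x x y hf).differentiableAt.hasDerivAt
lemma s2_hd_y (hf : Smooth2 f2) (x y : ℝ) :
    HasDerivAt (fun s => f2 x s) (deriv (fun s => f2 x s) y) y :=
  (s2_hasDerivAt_y x y hf).differentiableAt.hasDerivAt

lemma s4_cont_pt4 (hf : Smooth4 f4) :
    Continuous fun p : ℝ × ℝ × ℝ × ℝ => pt4 f4 p.1 p.2.1 p.2.2.1 p.2.2.2 := by
  have he : (fun p : ℝ × ℝ × ℝ × ℝ => pt4 f4 p.1 p.2.1 p.2.2.1 p.2.2.2)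
      = fun p : ℝ × ℝ × ℝ × ℝ => fderiv ℝ
        (fun q : ℝ × ℝ × ℝ × ℝ => f4 q.1 q.2.1 q.2.2.1 q.2.2.2) p (1,0,0,0) :=
    funext fun p => (s4_hasDerivAt_t p.1 p.2.1 p.2.2.1 p.2.2.2 hf).deriv
  rw [he]; exact contDeriv_along hf _
lemma s4_cont_px4 (hf : Smooth4 f4) :
    Continuous fun p : ℝ × ℝ × ℝ × ℝ => px4 f4 p.1 p.2.1 p.2.2.1 p.2.2.2 := by
  have he : (fun p : ℝ × ℝ × ℝ × ℝ => px4 f4 p.1 p.2.1 p.2.2.1 p.2.2.2)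
      = fun p : ℝ × ℝ × ℝ × ℝ => fderiv ℝ
        (fun q : ℝ × ℝ × ℝ × ℝ => f4 q.1 q.2.1 q.2.2.1 q.2.2.2) p (0,1,0,0) :=
    funext fun p => (s4_hasDerivAt_x p.1 p.2.1 p.2.2.1 p.2.2.2 hf).deriv
  rw [he]; exact contDeriv_along hf _
lemma s4_cont_py4 (hf : Smooth4 f4) :
    Continuous fun p : ℝ × ℝ × ℝ × ℝ => py4 f4 p.1 p.2.1 p.2.2.1 p.2.2.2 := by
  have he : (fun p : ℝ × ℝ × ℝ × ℝ => py4 f4 p.1 p.2.1 p.2.2.1 p.2.2.2)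
      = fun p : ℝ × ℝ × ℝ × ℝ => fderiv ℝ
        (fun q : ℝ × ℝ × ℝ × ℝ => f4 q.1 q.2.1 q.2.2.1 q.2.2.2) p (0,0,1,0) :=
    funext fun p => (s4_hasDerivAt_y p.1 p.2.1 p.2.2.1 p.2.2.2 hf).deriv
  rw [he]; exact contDeriv_along hf _
lemma s4_cont_pz (hf : Smooth4 f4) :
    Continuous fun p : ℝ × ℝ × ℝ × ℝ => pz f4 p.1 p.2.1 p.2.2.1 p.2.2.2 := by
  have he : (fun p : ℝ × ℝ × ℝ × ℝ => pz f4 p.1 p.2.1 p.2.2.1 p.2.2.2)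
      = fun p : ℝ × ℝ × ℝ × ℝ => fderiv ℝ
        (fun q : ℝ × ℝ × ℝ × ℝ => f4 q.1 q.2.1 q.2.2.1 q.2.2.2) p (0,0,0,1) :=
    funext fun p => (s4_hasDerivAt_z p.1 p.2.1 p.2.2.1 p.2.2.2 hf).deriv
  rw [he]; exact contDeriv_along hf _

lemma s3_cont_pt (hf : Smooth3 f3) :
    Continuous fun p : ℝ × ℝ × ℝ => pt f3 p.1 p.2.1 p.2.2 := by
  have he : (fun p : ℝ × ℝ × ℝ => pt f3 p.1 p.2.1 p.2.2)
      = fun p : ℝ × ℝ × ℝ => fderiv ℝ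
        (fun q : ℝ × ℝ × ℝ => f3 q.1 q.2.1 q.2.2) p (1,0,0) :=
    funext fun p => (s3_hasDerivAt_t p.1 p.2.1 p.2.2 hf).deriv
  rw [he]; exact contDeriv_along hf _
lemma s3_cont_px (hf : Smooth3 f3) :
    Continuous fun p : ℝ × ℝ × ℝ => px f3 p.1 p.2.1 p.2.2 := by
  have he : (fun p : ℝ × ℝ × ℝ => px f3 p.1 p.2.1 p.2.2)
      = fun p : ℝ × ℝ × ℝ => fderiv ℝ
        (fun q : ℝ × ℝ × ℝ => f3 q.1 q.2.1 q.2.2) p (0,1,0) :=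
    funext fun p => (s3_hasDerivAt_x p.1 p.2.1 p.2.2 hf).deriv
  rw [he]; exact contDeriv_along hf _
lemma s3_cont_py (hf : Smooth3 f3) :
    Continuous fun p : ℝ × ℝ × ℝ => py f3 p.1 p.2.1 p.2.2 := by
  have he : (fun p : ℝ × ℝ × ℝ => py f3 p.1 p.2.1 p.2.2)
      = fun p : ℝ × ℝ × ℝ => fderiv ℝ
        (fun q : ℝ × ℝ × ℝ => f3 q.1 q.2.1 q.2.2) p (0,0,1) :=
    funext fun p => (s3_hasDerivAt_y p.1 p.2.1 p.2.2 hf).deriv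
  rw [he]; exact contDeriv_along hf _

lemma s2_cont_x (hf : Smooth2 f2) :
    Continuous fun p : ℝ × ℝ => deriv (fun s => f2 s p.2) p.1 := by
  have he : (fun p : ℝ × ℝ => deriv (fun s => f2 s p.2) p.1)
      = fun p : ℝ × ℝ => fderiv ℝ (fun q : ℝ × ℝ => f2 q.1 q.2) p (1,0) :=
    funext fun p => (s2_hasDerivAt_x p.1 p.2 hf).deriv
  rw [he]; exact contDeriv_along hf _
lemma s2_cont_y (hf : Smooth2 f2) :
    Continuous fun p : ℝ × ℝ => deriv (fun s => f2 p.1 s) p.2 := by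
  have he : (fun p : ℝ × ℝ => deriv (fun s => f2 p.1 s) p.2)
      = fun p : ℝ × ℝ => fderiv ℝ (fun q : ℝ × ℝ => f2 q.1 q.2) p (0,1) :=
    funext fun p => (s2_hasDerivAt_y p.1 p.2 hf).deriv
  rw [he]; exact contDeriv_along hf _
end PNotation

end Helpers

set_option maxHeartbeats 4000000 in
/-- V♯ satisfies the transport equation
∂_t V♯ + ε(V̄·∇)V♯ + ε(V♯·∇)V̄ = 0. -/
theorem Vsharp_transport
    (ε β : ℝ) (hε : 0 < ε) (hβ : 0 < β)
    (ζ : ℝ → ℝ → ℝ → ℝ) (b : ℝ → ℝ → ℝ)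
    (Vb : Fin 2 → ℝ → ℝ → ℝ → ℝ)
    (Vs : Fin 2 → ℝ → ℝ → ℝ → ℝ → ℝ)
    (hζ : Smooth3 ζ) (hb : Smooth2 b)
    (hVb : ∀ i, Smooth3 (Vb i)) (hVs : ∀ i, Smooth4 (Vs i))
    (hpos : ∀ t x y, 0 < 1 + ε * ζ t x y - β * b x y)
    -- mass conservation
    (hmass : ∀ t x y,
      pt ζ t x y
        + px (fun t' x' y' => (1 + ε * ζ t' x' y' - β * b x' y') * Vb 0 t' x' y') t x y
        + py (fun t' x' y' => (1 + ε * ζ t' x' y' - β * b x' y') * Vb 1 t' x' y') t x y = 0)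
    -- zero vertical mean
    (hmean : ∀ i, ∀ t x y,
      (∫ z in (-1 + β * b x y)..(ε * ζ t x y), Vs i t x y z) = 0)
    -- transport equation for V* in the water column
    (htransport : ∀ (i : Fin 2) (t x y z : ℝ),
      -1 + β * b x y ≤ z → z ≤ ε * ζ t x y →
      pt4 (Vs i) t x y z
        + ε * (Vb 0 t x y * px4 (Vs i) t x y z + Vb 1 t x y * py4 (Vs i) t x y z)
        + ε * (Vs 0 t x y z * px (Vb i) t x y + Vs 1 t x y z * py (Vb i) t x y)
        - ε * (px (fun t' x' y' => (1 + z - β * b x' y') * Vb 0 t' x' y') t x y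
            + py (fun t' x' y' => (1 + z - β * b x' y') * Vb 1 t' x' y') t x y)
          * pz (Vs i) t x y z = 0) :
    ∀ (i : Fin 2) (t x y : ℝ),
      pt (Vsharp ε β ζ b Vs i) t x y
        + ε * (Vb 0 t x y * px (Vsharp ε β ζ b Vs i) t x y
            + Vb 1 t x y * py (Vsharp ε β ζ b Vs i) t x y)
        + ε * (Vsharp ε β ζ b Vs 0 t x y * px (Vb i) t x y
            + Vsharp ε β ζ b Vs 1 t x y * py (Vb i) t x y) = 0 := by
  
  intro i t x y
  have hne : (1 + ε * ζ t x y - β * b x y) ≠ 0 := ne_of_gt (hpos t x y)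
  have hBle : (-1 + β * b x y) ≤ ε * ζ t x y := by have := hpos t x y; linarith
  have hcζ : Continuous fun p : ℝ × ℝ × ℝ => ζ p.1 p.2.1 p.2.2 := hζ.continuous
  have hcb : Continuous fun p : ℝ × ℝ => b p.1 p.2 := hb.continuous
  have hcVs : ∀ j : Fin 2, Continuous fun p : ℝ × ℝ × ℝ × ℝ => Vs j p.1 p.2.1 p.2.2.1 p.2.2.2 :=
    fun j => (hVs j).continuous
  have cuVs : ∀ j : Fin 2, Continuous fun u => Vs j t x y u := fun j =>
    (hcVs j).comp (show Continuous fun u : ℝ => ((t, x, y, u) : ℝ × ℝ × ℝ × ℝ) by fun_prop)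
  have cu_pt4 : Continuous fun u => pt4 (Vs i) t x y u := (s4_cont_pt4 (hVs i)).comp
    (show Continuous fun u : ℝ => ((t, x, y, u) : ℝ × ℝ × ℝ × ℝ) by fun_prop)
  have cu_px4 : Continuous fun u => px4 (Vs i) t x y u := (s4_cont_px4 (hVs i)).comp
    (show Continuous fun u : ℝ => ((t, x, y, u) : ℝ × ℝ × ℝ × ℝ) by fun_prop)
  have cu_py4 : Continuous fun u => py4 (Vs i) t x y u := (s4_cont_py4 (hVs i)).comp
    (show Continuous fun u : ℝ => ((t, x, y, u) : ℝ × ℝ × ℝ × ℝ) by fun_prop)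
  have cu_pz : Continuous fun u => pz (Vs i) t x y u := (s4_cont_pz (hVs i)).comp
    (show Continuous fun u : ℝ => ((t, x, y, u) : ℝ × ℝ × ℝ × ℝ) by fun_prop)
  have cW : Continuous fun u : ℝ => ((ε * ζ t x y - (-1 + β * b x y)) ^ 2 - (u - (-1 + β * b x y)) ^ 2) / 2 := by fun_prop
  have aζt : Continuous fun p : ℝ × ℝ => ζ p.1 x y :=
    hcζ.comp (show Continuous fun p : ℝ × ℝ => (((p.1, x, y)) : ℝ × ℝ × ℝ) by fun_prop)
  have aVst : Continuous fun p : ℝ × ℝ => Vs i p.1 x y p.2 :=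
    (hcVs i).comp (show Continuous fun p : ℝ × ℝ => (((p.1, x, y, p.2)) : ℝ × ℝ × ℝ × ℝ) by fun_prop)
  have apζt : Continuous fun p : ℝ × ℝ => pt ζ p.1 x y :=
    (s3_cont_pt hζ).comp
      (show Continuous fun p : ℝ × ℝ => (((p.1, x, y)) : ℝ × ℝ × ℝ) by fun_prop)
  have ap4t : Continuous fun p : ℝ × ℝ => pt4 (Vs i) p.1 x y p.2 :=
    (s4_cont_pt4 (hVs i)).comp
      (show Continuous fun p : ℝ × ℝ => (((p.1, x, y, p.2)) : ℝ × ℝ × ℝ × ℝ) by fun_prop)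
  have hgt : Continuous fun p : ℝ × ℝ => (fun s u => ((ε * ζ s x y - (-1 + β * b x y)) ^ 2 - (u - (-1 + β * b x y)) ^ 2) / 2 * Vs i s x y u) p.1 p.2 := (((((continuous_const.mul aζt).sub (continuous_const : Continuous fun _ : ℝ × ℝ => (-1 : ℝ) + β * b x y)).pow 2).sub ((continuous_snd.sub (continuous_const : Continuous fun _ : ℝ × ℝ => (-1 : ℝ) + β * b x y)).pow 2)).div_const 2).mul aVst
  have hgpt : Continuous fun p : ℝ × ℝ => (fun s u => ((ε * ζ s x y - (-1 + β * b x y)) * (ε * pt ζ s x y - (0:ℝ)) + (u - (-1 + β * b x y)) * (0:ℝ)) * Vs i s x y u + ((ε * ζ s x y - (-1 + β * b x y)) ^ 2 - (u - (-1 + β * b x y)) ^ 2) / 2 * pt4 (Vs i) s x y u) p.1 p.2 := ((((((continuous_const.mul aζt).sub (continuous_const : Continuous fun _ : ℝ × ℝ => (-1 : ℝ) + β * b x y)).mul ((continuous_const.mul apζt).sub (continuous_const : Continuous fun _ : ℝ × ℝ => (0:ℝ)))).add ((continuous_snd.sub (continuous_const : Continuous fun _ : ℝ × ℝ => (-1 :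 ℝ) + β * b x y)).mul (continuous_const : Continuous fun _ : ℝ × ℝ => (0:ℝ)))).mul aVst).add ((((((continuous_const.mul aζt).sub (continuous_const : Continuous fun _ : ℝ × ℝ => (-1 : ℝ) + β * b x y)).pow 2).sub ((continuous_snd.sub (continuous_const : Continuous fun _ : ℝ × ℝ => (-1 : ℝ) + β * b x y)).pow 2)).div_const 2).mul ap4t))
  have hdgt : ∀ s u : ℝ, HasDerivAt (fun r => (fun s u => ((ε * ζ s x y - (-1 + β * b x y)) ^ 2 - (u - (-1 + β * b x y)) ^ 2) / 2 * Vs i s x y u) r u) ((fun s u => ((ε * ζ s x y - (-1 + β * b x y)) * (ε * pt ζ s x y - (0:ℝ)) + (u - (-1 + β * b x y)) * (0:ℝ)) * Vs i s x y u + ((ε * ζ s x y - (-1 + β * b x y)) ^ 2 - (u - (-1 + β * b x y)) ^ 2) / 2 * pt4 (Vs i) s x y u) s u) s := by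
    intro s u
    have h1 := ((s3_hd_t hζ s x y).const_mul ε)
    have h2 := hasDerivAt_const s ((-1 : ℝ) + β * b x y)
    have h3 := (((h1.fun_sub h2).fun_pow 2).fun_sub (((hasDerivAt_const s u).fun_sub h2).fun_pow 2)).div_const 2
    have h4 := s4_hd_t (hVs i) s x y u
    have h5 := h3.fun_mul h4
    refine h5.congr_deriv ?_
    push_cast
    ring
  have HTt := paramD hgt hgpt hdgt (hasDerivAt_const t ((-1 : ℝ) + β * b x y)) ((s3_hd_t hζ t x y).const_mul ε)
  have HTt' : HasDerivAt (fun s => ∫ u in (-1 + β * b x y)..(ε * ζ s x y), ((ε * ζ s x y - (-1 + β * b x y)) ^ 2 - (u - (-1 + β * b x y)) ^ 2) / 2 * Vs i s x y u) ((∫ u in (-1 + β * b x y)..(ε * ζ t x y), ((ε * ζ t x y - (-1 + β * b x y)) ^ 2 - (u - (-1 + β * b x y)) ^ 2) / 2 * pt4 (Vs i) t x y u) + (0:ℝ) * (∫ u in (-1 + β * b x y)..(ε * ζ t x y), (u - (-1 + β * b x y)) * Vs i t x y u) - (0:ℝ) * ((1 + ε * ζ t x y - β * b x y) ^ 2 /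 2 * (Vs i t x y (-1 + β * b x y)))) t := by
    convert HTt using 1
    have e0 : Set.EqOn (fun u => (fun s u => ((ε * ζ s x y - (-1 + β * b x y)) * (ε * pt ζ s x y - (0:ℝ)) + (u - (-1 + β * b x y)) * (0:ℝ)) * Vs i s x y u + ((ε * ζ s x y - (-1 + β * b x y)) ^ 2 - (u - (-1 + β * b x y)) ^ 2) / 2 * pt4 (Vs i) s x y u) t u)
        (fun u => (((ε * ζ t x y) - (-1 + β * b x y)) * (ε * pt ζ t x y - (0:ℝ))) * Vs i t x y u + ((0:ℝ) * ((u - (-1 + β * b x y)) * Vs i t x y u)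
          + ((ε * ζ t x y - (-1 + β * b x y)) ^ 2 - (u - (-1 + β * b x y)) ^ 2) / 2 * pt4 (Vs i) t x y u)) (Set.uIcc (-1 + β * b x y) (ε * ζ t x y)) := fun u _ => by
      beta_reduce
      ring
    have iA : IntervalIntegrable (fun u => (((ε * ζ t x y) - (-1 + β * b x y)) * (ε * pt ζ t x y - (0:ℝ))) * Vs i t x y u) MeasureTheory.volume (-1 + β * b x y) (ε * ζ t x y) :=
      (continuous_const.mul (cuVs i)).intervalIntegrable _ _
    have iB : IntervalIntegrable (fun u => (0:ℝ) * ((u - (-1 + β * b x y)) * Vs i t x y u)) MeasureTheory.volume (-1 + β * b x y) (ε * ζ t x y) :=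
      (continuous_const.mul ((continuous_id.sub continuous_const).mul (cuVs i))).intervalIntegrable _ _
    have iC : IntervalIntegrable (fun u => ((ε * ζ t x y - (-1 + β * b x y)) ^ 2 - (u - (-1 + β * b x y)) ^ 2) / 2 * pt4 (Vs i) t x y u) MeasureTheory.volume (-1 + β * b x y) (ε * ζ t x y) :=
      (cW.mul cu_pt4).intervalIntegrable _ _
    rw [intervalIntegral.integral_congr e0, intervalIntegral.integral_add iA (iB.add iC),
      intervalIntegral.integral_add iB iC, intervalIntegral.integral_const_mul,
      intervalIntegral.integral_const_mul, hmean i t x y]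
    beta_reduce
    ring
  have hHt := (((s3_hd_t hζ t x y).const_mul ε).const_add 1).fun_sub (hasDerivAt_const t (β * b x y))
  have hnegt := ((hasDerivAt_const t (24:ℝ)).fun_div (hHt.fun_pow 3) (pow_ne_zero 3 hne)).fun_neg
  have hprodt := hnegt.fun_mul HTt'
  have hpst : ∀ s : ℝ, Vsharp ε β ζ b Vs i s x y =
      -(24 / (1 + ε * ζ s x y - β * b x y) ^ 3) *
        ∫ u in (-1 + β * b x y)..(ε * ζ s x y), ((ε * ζ s x y - (-1 + β * b x y)) ^ 2 - (u - (-1 + β * b x y)) ^ 2) / 2 * Vs i s x y u := by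
    intro s
    have cz : Continuous fun z => Vs i s x y z :=
      (hcVs i).comp (show Continuous fun z : ℝ =>
        ((s, x, y, z) : ℝ × ℝ × ℝ × ℝ) by fun_prop)
    unfold Vsharp
    rw [tripleIntegral_eq cz]
  have hVt := HasDerivAt.congr_of_eventuallyEq
    (f₁ := fun s => Vsharp ε β ζ b Vs i s x y) hprodt
    (Filter.Eventually.of_forall fun s => hpst s)
  have ept : pt (Vsharp ε β ζ b Vs i) t x y = _ := hVt.deriv
  have mpt : (1 + ε * ζ t x y - β * b x y) ^ 4 * pt (Vsharp ε β ζ b Vs i) t x y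
      = 72 * (ε * pt ζ t x y - (0:ℝ)) * (∫ u in (-1 + β * b x y)..(ε * ζ t x y), ((ε * ζ t x y - (-1 + β * b x y)) ^ 2 - (u - (-1 + β * b x y)) ^ 2) / 2 * Vs i t x y u) - 24 * (1 + ε * ζ t x y - β * b x y) * ((∫ u in (-1 + β * b x y)..(ε * ζ t x y), ((ε * ζ t x y - (-1 + β * b x y)) ^ 2 - (u - (-1 + β * b x y)) ^ 2) / 2 * pt4 (Vs i) t x y u) + (0:ℝ) * (∫ u in (-1 + β * b x y)..(ε * ζ t x y), (u - (-1 + β * b x y)) * Vs i t x y u) - (0:ℝ) * ((1 + ε * ζ t x y - β * b x y) ^ 2 / 2 * (Vs i t x y (-1 + β * b x y)))) := by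
    rw [ept]
    field_simp
    ring
  have aζx : Continuous fun p : ℝ × ℝ => ζ t p.1 y :=
    hcζ.comp (show Continuous fun p : ℝ × ℝ => (((t, p.1, y)) : ℝ × ℝ × ℝ) by fun_prop)
  have aVsx : Continuous fun p : ℝ × ℝ => Vs i t p.1 y p.2 :=
    (hcVs i).comp (show Continuous fun p : ℝ × ℝ => (((t, p.1, y, p.2)) : ℝ × ℝ × ℝ × ℝ) by fun_prop)
  have apζx : Continuous fun p : ℝ × ℝ => px ζ t p.1 y :=
    (s3_cont_px hζ).comp
      (show Continuous fun p : ℝ × ℝ => (((t, p.1, y)) : ℝ × ℝ × ℝ) by fun_prop)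
  have ap4x : Continuous fun p : ℝ × ℝ => px4 (Vs i) t p.1 y p.2 :=
    (s4_cont_px4 (hVs i)).comp
      (show Continuous fun p : ℝ × ℝ => (((t, p.1, y, p.2)) : ℝ × ℝ × ℝ × ℝ) by fun_prop)
  have ab : Continuous fun p : ℝ × ℝ => b p.1 y :=
    hcb.comp (show Continuous fun p : ℝ × ℝ => ((p.1, y) : ℝ × ℝ) by fun_prop)
  have abx : Continuous fun p : ℝ × ℝ => deriv (fun r => b r y) p.1 :=
    (s2_cont_x hb).comp (show Continuous fun p : ℝ × ℝ => ((p.1, y) : ℝ × ℝ) by fun_prop)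
  have hgx : Continuous fun p : ℝ × ℝ => (fun s u => ((ε * ζ t s y - (-1 + β * b s y)) ^ 2 - (u - (-1 + β * b s y)) ^ 2) / 2 * Vs i t s y u) p.1 p.2 := (((((continuous_const.mul aζx).sub (continuous_const.add (continuous_const.mul ab))).pow 2).sub ((continuous_snd.sub (continuous_const.add (continuous_const.mul ab))).pow 2)).div_const 2).mul aVsx
  have hgpx : Continuous fun p : ℝ × ℝ => (fun s u => ((ε * ζ t s y - (-1 + β * b s y)) * (ε * px ζ t s y - (β * deriv (fun r => b r y) s)) + (u - (-1 + β * b s y)) * (β * deriv (fun r => b r y) s)) * Vs i t s y u + ((ε * ζ t s y - (-1 + β * b s y)) ^ 2 - (u - (-1 + β * b s y)) ^ 2) / 2 * px4 (Vs i) t s y u) p.1 p.2 := ((((((continuous_const.mul aζx).sub (continuous_const.add (continuous_const.mul ab))).mul ((continuous_const.mul apζx).sub (continuous_const.mul abx))).add ((continuous_snd.sub (continuous_const.add (continuous_const.mul ab))).mul (continuous_const.mul abx))).mul aVsx).add ((((((continuous_const.mul aζx).sub (continuous_const.add (continuous_const.mul ab))).pow 2).sub ((continuous_snd.sub (continuous_const.add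 (continuous_const.mul ab))).pow 2)).div_const 2).mul ap4x))
  have hdgx : ∀ s u : ℝ, HasDerivAt (fun r => (fun s u => ((ε * ζ t s y - (-1 + β * b s y)) ^ 2 - (u - (-1 + β * b s y)) ^ 2) / 2 * Vs i t s y u) r u) ((fun s u => ((ε * ζ t s y - (-1 + β * b s y)) * (ε * px ζ t s y - (β * deriv (fun r => b r y) s)) + (u - (-1 + β * b s y)) * (β * deriv (fun r => b r y) s)) * Vs i t s y u + ((ε * ζ t s y - (-1 + β * b s y)) ^ 2 - (u - (-1 + β * b s y)) ^ 2) / 2 * px4 (Vs i) t s y u) s u) s := by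
    intro s u
    have h1 := ((s3_hd_x hζ t s y).const_mul ε)
    have h2 := (((s2_hd_x hb s y).const_mul β).const_add (-1))
    have h3 := (((h1.fun_sub h2).fun_pow 2).fun_sub (((hasDerivAt_const s u).fun_sub h2).fun_pow 2)).div_const 2
    have h4 := s4_hd_x (hVs i) t s y u
    have h5 := h3.fun_mul h4
    refine h5.congr_deriv ?_
    push_cast
    ring
  have HTx := paramD hgx hgpx hdgx (((s2_hd_x hb x y).const_mul β).const_add (-1)) ((s3_hd_x hζ t x y).const_mul ε)
  have HTx' : HasDerivAt (fun s => ∫ u in (-1 + β * b s y)..(ε * ζ t s y), ((ε * ζ t s y - (-1 + β * b s y)) ^ 2 - (u - (-1 + β * b s y)) ^ 2) / 2 * Vs i t s y u) ((∫ u in (-1 + β * b x y)..(ε * ζ t x y), ((ε * ζ t x y - (-1 + β * b x y)) ^ 2 - (u - (-1 + β * b x y)) ^ 2) / 2 * px4 (Vs i) t x y u) + (β * (deriv (fun r => b r y) x)) * (∫ u in (-1 + β * b x y)..(ε * ζ t x y), (u - (-1 + β * b x y)) * Vs i t x y u) - (β * (deriv (fun r => b r y) x)) * ((1 + ε * ζ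 t x y - β * b x y) ^ 2 / 2 * (Vs i t x y (-1 + β * b x y)))) x := by
    convert HTx using 1
    have e0 : Set.EqOn (fun u => (fun s u => ((ε * ζ t s y - (-1 + β * b s y)) * (ε * px ζ t s y - (β * deriv (fun r => b r y) s)) + (u - (-1 + β * b s y)) * (β * deriv (fun r => b r y) s)) * Vs i t s y u + ((ε * ζ t s y - (-1 + β * b s y)) ^ 2 - (u - (-1 + β * b s y)) ^ 2) / 2 * px4 (Vs i) t s y u) x u)
        (fun u => (((ε * ζ t x y) - (-1 + β * b x y)) * (ε * px ζ t x y - (β * deriv (fun r => b r y) x))) * Vs i t x y u + ((β * (deriv (fun r => b r y) x)) * ((u - (-1 + β * b x y)) * Vs i t x y u)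
          + ((ε * ζ t x y - (-1 + β * b x y)) ^ 2 - (u - (-1 + β * b x y)) ^ 2) / 2 * px4 (Vs i) t x y u)) (Set.uIcc (-1 + β * b x y) (ε * ζ t x y)) := fun u _ => by
      beta_reduce
      ring
    have iA : IntervalIntegrable (fun u => (((ε * ζ t x y) - (-1 + β * b x y)) * (ε * px ζ t x y - (β * deriv (fun r => b r y) x))) * Vs i t x y u) MeasureTheory.volume (-1 + β * b x y) (ε * ζ t x y) :=
      (continuous_const.mul (cuVs i)).intervalIntegrable _ _
    have iB : IntervalIntegrable (fun u => (β * (deriv (fun r => b r y) x)) * ((u - (-1 + β * b x y)) * Vs i t x y u)) MeasureTheory.volume (-1 + β * b x y) (ε * ζ t x y) :=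
      (continuous_const.mul ((continuous_id.sub continuous_const).mul (cuVs i))).intervalIntegrable _ _
    have iC : IntervalIntegrable (fun u => ((ε * ζ t x y - (-1 + β * b x y)) ^ 2 - (u - (-1 + β * b x y)) ^ 2) / 2 * px4 (Vs i) t x y u) MeasureTheory.volume (-1 + β * b x y) (ε * ζ t x y) :=
      (cW.mul cu_px4).intervalIntegrable _ _
    rw [intervalIntegral.integral_congr e0, intervalIntegral.integral_add iA (iB.add iC),
      intervalIntegral.integral_add iB iC, intervalIntegral.integral_const_mul,
      intervalIntegral.integral_const_mul, hmean i t x y]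
    beta_reduce
    ring
  have hHx := (((s3_hd_x hζ t x y).const_mul ε).const_add 1).fun_sub ((s2_hd_x hb x y).const_mul β)
  have hnegx := ((hasDerivAt_const x (24:ℝ)).fun_div (hHx.fun_pow 3) (pow_ne_zero 3 hne)).fun_neg
  have hprodx := hnegx.fun_mul HTx'
  have hpsx : ∀ s : ℝ, Vsharp ε β ζ b Vs i t s y =
      -(24 / (1 + ε * ζ t s y - β * b s y) ^ 3) *
        ∫ u in (-1 + β * b s y)..(ε * ζ t s y), ((ε * ζ t s y - (-1 + β * b s y)) ^ 2 - (u - (-1 + β * b s y)) ^ 2) / 2 * Vs i t s y u := by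
    intro s
    have cz : Continuous fun z => Vs i t s y z :=
      (hcVs i).comp (show Continuous fun z : ℝ =>
        ((t, s, y, z) : ℝ × ℝ × ℝ × ℝ) by fun_prop)
    unfold Vsharp
    rw [tripleIntegral_eq cz]
  have hVx := HasDerivAt.congr_of_eventuallyEq
    (f₁ := fun s => Vsharp ε β ζ b Vs i t s y) hprodx
    (Filter.Eventually.of_forall fun s => hpsx s)
  have epx : px (Vsharp ε β ζ b Vs i) t x y = _ := hVx.deriv
  have mpx : (1 + ε * ζ t x y - β * b x y) ^ 4 * px (Vsharp ε β ζ b Vs i) t x y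
      = 72 * (ε * px ζ t x y - (β * deriv (fun r => b r y) x)) * (∫ u in (-1 + β * b x y)..(ε * ζ t x y), ((ε * ζ t x y - (-1 + β * b x y)) ^ 2 - (u - (-1 + β * b x y)) ^ 2) / 2 * Vs i t x y u) - 24 * (1 + ε * ζ t x y - β * b x y) * ((∫ u in (-1 + β * b x y)..(ε * ζ t x y), ((ε * ζ t x y - (-1 + β * b x y)) ^ 2 - (u - (-1 + β * b x y)) ^ 2) / 2 * px4 (Vs i) t x y u) + (β * (deriv (fun r => b r y) x)) * (∫ u in (-1 + β * b x y)..(ε * ζ t x y), (u - (-1 + β * b x y)) * Vs i t x y u) - (β * (deriv (fun r => b r y) x)) * ((1 + ε * ζ t x y - β * b x y) ^ 2 / 2 * (Vs i t x y (-1 + β * b x y)))) := by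
    rw [epx]
    field_simp
    ring
  have aζy : Continuous fun p : ℝ × ℝ => ζ t x p.1 :=
    hcζ.comp (show Continuous fun p : ℝ × ℝ => (((t, x, p.1)) : ℝ × ℝ × ℝ) by fun_prop)
  have aVsy : Continuous fun p : ℝ × ℝ => Vs i t x p.1 p.2 :=
    (hcVs i).comp (show Continuous fun p : ℝ × ℝ => (((t, x, p.1, p.2)) : ℝ × ℝ × ℝ × ℝ) by fun_prop)
  have apζy : Continuous fun p : ℝ × ℝ => py ζ t x p.1 :=
    (s3_cont_py hζ).comp
      (show Continuous fun p : ℝ × ℝ => (((t, x, p.1)) : ℝ × ℝ × ℝ) by fun_prop)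
  have ap4y : Continuous fun p : ℝ × ℝ => py4 (Vs i) t x p.1 p.2 :=
    (s4_cont_py4 (hVs i)).comp
      (show Continuous fun p : ℝ × ℝ => (((t, x, p.1, p.2)) : ℝ × ℝ × ℝ × ℝ) by fun_prop)
  have ab : Continuous fun p : ℝ × ℝ => b x p.1 :=
    hcb.comp (show Continuous fun p : ℝ × ℝ => ((x, p.1) : ℝ × ℝ) by fun_prop)
  have aby : Continuous fun p : ℝ × ℝ => deriv (fun r => b x r) p.1 :=
    (s2_cont_y hb).comp (show Continuous fun p : ℝ × ℝ => ((x, p.1) : ℝ × ℝ) by fun_prop)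
  have hgy : Continuous fun p : ℝ × ℝ => (fun s u => ((ε * ζ t x s - (-1 + β * b x s)) ^ 2 - (u - (-1 + β * b x s)) ^ 2) / 2 * Vs i t x s u) p.1 p.2 := (((((continuous_const.mul aζy).sub (continuous_const.add (continuous_const.mul ab))).pow 2).sub ((continuous_snd.sub (continuous_const.add (continuous_const.mul ab))).pow 2)).div_const 2).mul aVsy
  have hgpy : Continuous fun p : ℝ × ℝ => (fun s u => ((ε * ζ t x s - (-1 + β * b x s)) * (ε * py ζ t x s - (β * deriv (fun r => b x r) s)) + (u - (-1 + β * b x s)) * (β * deriv (fun r => b x r) s)) * Vs i t x s u + ((ε * ζ t x s - (-1 + β * b x s)) ^ 2 - (u - (-1 + β * b x s)) ^ 2) / 2 * py4 (Vs i) t x s u) p.1 p.2 := ((((((continuous_const.mul aζy).sub (continuous_const.add (continuous_const.mul ab))).mul ((continuous_const.mul apζy).sub (continuous_const.mul aby))).add ((continuous_snd.sub (continuous_const.add (continuous_const.mul ab))).mul (continuous_const.mul aby))).mul aVsy).add ((((((continuous_const.mul aζy).sub (continuous_const.add (continuous_const.mul ab))).pow 2).sub ((continuous_snd.sub (continuous_const.add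 (continuous_const.mul ab))).pow 2)).div_const 2).mul ap4y))
  have hdgy : ∀ s u : ℝ, HasDerivAt (fun r => (fun s u => ((ε * ζ t x s - (-1 + β * b x s)) ^ 2 - (u - (-1 + β * b x s)) ^ 2) / 2 * Vs i t x s u) r u) ((fun s u => ((ε * ζ t x s - (-1 + β * b x s)) * (ε * py ζ t x s - (β * deriv (fun r => b x r) s)) + (u - (-1 + β * b x s)) * (β * deriv (fun r => b x r) s)) * Vs i t x s u + ((ε * ζ t x s - (-1 + β * b x s)) ^ 2 - (u - (-1 + β * b x s)) ^ 2) / 2 * py4 (Vs i) t x s u) s u) s := by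
    intro s u
    have h1 := ((s3_hd_y hζ t x s).const_mul ε)
    have h2 := (((s2_hd_y hb x s).const_mul β).const_add (-1))
    have h3 := (((h1.fun_sub h2).fun_pow 2).fun_sub (((hasDerivAt_const s u).fun_sub h2).fun_pow 2)).div_const 2
    have h4 := s4_hd_y (hVs i) t x s u
    have h5 := h3.fun_mul h4
    refine h5.congr_deriv ?_
    push_cast
    ring
  have HTy := paramD hgy hgpy hdgy (((s2_hd_y hb x y).const_mul β).const_add (-1)) ((s3_hd_y hζ t x y).const_mul ε)
  have HTy' : HasDerivAt (fun s => ∫ u in (-1 + β * b x s)..(ε * ζ t x s), ((ε * ζ t x s - (-1 + β * b x s)) ^ 2 - (u - (-1 + β * b x s)) ^ 2) / 2 * Vs i t x s u) ((∫ u in (-1 + β * b x y)..(ε * ζ t x y), ((ε * ζ t x y - (-1 + β * b x y)) ^ 2 - (u - (-1 + β * b x y)) ^ 2) / 2 * py4 (Vs i) t x y u) + (β * (deriv (fun r => b x r) y)) * (∫ u in (-1 + β * b x y)..(ε * ζ t x y), (u - (-1 + β * b x y)) * Vs i t x y u) - (β * (deriv (fun r => b x r) y)) * ((1 + ε * ζ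 t x y - β * b x y) ^ 2 / 2 * (Vs i t x y (-1 + β * b x y)))) y := by
    convert HTy using 1
    have e0 : Set.EqOn (fun u => (fun s u => ((ε * ζ t x s - (-1 + β * b x s)) * (ε * py ζ t x s - (β * deriv (fun r => b x r) s)) + (u - (-1 + β * b x s)) * (β * deriv (fun r => b x r) s)) * Vs i t x s u + ((ε * ζ t x s - (-1 + β * b x s)) ^ 2 - (u - (-1 + β * b x s)) ^ 2) / 2 * py4 (Vs i) t x s u) y u)
        (fun u => (((ε * ζ t x y) - (-1 + β * b x y)) * (ε * py ζ t x y - (β * deriv (fun r => b x r) y))) * Vs i t x y u + ((β * (deriv (fun r => b x r) y)) * ((u - (-1 + β * b x y)) * Vs i t x y u)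
          + ((ε * ζ t x y - (-1 + β * b x y)) ^ 2 - (u - (-1 + β * b x y)) ^ 2) / 2 * py4 (Vs i) t x y u)) (Set.uIcc (-1 + β * b x y) (ε * ζ t x y)) := fun u _ => by
      beta_reduce
      ring
    have iA : IntervalIntegrable (fun u => (((ε * ζ t x y) - (-1 + β * b x y)) * (ε * py ζ t x y - (β * deriv (fun r => b x r) y))) * Vs i t x y u) MeasureTheory.volume (-1 + β * b x y) (ε * ζ t x y) :=
      (continuous_const.mul (cuVs i)).intervalIntegrable _ _
    have iB : IntervalIntegrable (fun u => (β * (deriv (fun r => b x r) y)) * ((u - (-1 + β * b x y)) * Vs i t x y u)) MeasureTheory.volume (-1 + β * b x y) (ε * ζ t x y) :=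
      (continuous_const.mul ((continuous_id.sub continuous_const).mul (cuVs i))).intervalIntegrable _ _
    have iC : IntervalIntegrable (fun u => ((ε * ζ t x y - (-1 + β * b x y)) ^ 2 - (u - (-1 + β * b x y)) ^ 2) / 2 * py4 (Vs i) t x y u) MeasureTheory.volume (-1 + β * b x y) (ε * ζ t x y) :=
      (cW.mul cu_py4).intervalIntegrable _ _
    rw [intervalIntegral.integral_congr e0, intervalIntegral.integral_add iA (iB.add iC),
      intervalIntegral.integral_add iB iC, intervalIntegral.integral_const_mul,
      intervalIntegral.integral_const_mul, hmean i t x y]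
    beta_reduce
    ring
  have hHy := (((s3_hd_y hζ t x y).const_mul ε).const_add 1).fun_sub ((s2_hd_y hb x y).const_mul β)
  have hnegy := ((hasDerivAt_const y (24:ℝ)).fun_div (hHy.fun_pow 3) (pow_ne_zero 3 hne)).fun_neg
  have hprody := hnegy.fun_mul HTy'
  have hpsy : ∀ s : ℝ, Vsharp ε β ζ b Vs i t x s =
      -(24 / (1 + ε * ζ t x s - β * b x s) ^ 3) *
        ∫ u in (-1 + β * b x s)..(ε * ζ t x s), ((ε * ζ t x s - (-1 + β * b x s)) ^ 2 - (u - (-1 + β * b x s)) ^ 2) / 2 * Vs i t x s u := by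
    intro s
    have cz : Continuous fun z => Vs i t x s z :=
      (hcVs i).comp (show Continuous fun z : ℝ =>
        ((t, x, s, z) : ℝ × ℝ × ℝ × ℝ) by fun_prop)
    unfold Vsharp
    rw [tripleIntegral_eq cz]
  have hVy := HasDerivAt.congr_of_eventuallyEq
    (f₁ := fun s => Vsharp ε β ζ b Vs i t x s) hprody
    (Filter.Eventually.of_forall fun s => hpsy s)
  have epy : py (Vsharp ε β ζ b Vs i) t x y = _ := hVy.deriv
  have mpy : (1 + ε * ζ t x y - β * b x y) ^ 4 * py (Vsharp ε β ζ b Vs i) t x y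
      = 72 * (ε * py ζ t x y - (β * deriv (fun r => b x r) y)) * (∫ u in (-1 + β * b x y)..(ε * ζ t x y), ((ε * ζ t x y - (-1 + β * b x y)) ^ 2 - (u - (-1 + β * b x y)) ^ 2) / 2 * Vs i t x y u) - 24 * (1 + ε * ζ t x y - β * b x y) * ((∫ u in (-1 + β * b x y)..(ε * ζ t x y), ((ε * ζ t x y - (-1 + β * b x y)) ^ 2 - (u - (-1 + β * b x y)) ^ 2) / 2 * py4 (Vs i) t x y u) + (β * (deriv (fun r => b x r) y)) * (∫ u in (-1 + β * b x y)..(ε * ζ t x y), (u - (-1 + β * b x y)) * Vs i t x y u) - (β * (deriv (fun r => b x r) y)) * ((1 + ε * ζ t x y - β * b x y) ^ 2 / 2 * (Vs i t x y (-1 + β * b x y)))) := by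
    rw [epy]
    field_simp
    ring
  -- mass conservation expanded
  have e1m : px (fun t' x' y' => (1 + ε * ζ t' x' y' - β * b x' y') * Vb 0 t' x' y') t x y
      = (ε * px ζ t x y - β * (deriv (fun r => b r y) x)) * Vb 0 t x y
        + (1 + ε * ζ t x y - β * b x y) * px (Vb 0) t x y :=
    (((((s3_hd_x hζ t x y).const_mul ε).const_add 1).sub
      ((s2_hd_x hb x y).const_mul β)).mul (s3_hd_x (hVb 0) t x y)).deriv
  have e2m : py (fun t' x' y' => (1 + ε * ζ t' x' y' - β * b x' y') * Vb 1 t' x' y') t x y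
      = (ε * py ζ t x y - β * (deriv (fun r => b x r) y)) * Vb 1 t x y
        + (1 + ε * ζ t x y - β * b x y) * py (Vb 1) t x y :=
    (((((s3_hd_y hζ t x y).const_mul ε).const_add 1).sub
      ((s2_hd_y hb x y).const_mul β)).mul (s3_hd_y (hVb 1) t x y)).deriv
  have hmassE := hmass t x y
  rw [e1m, e2m] at hmassE
  -- weight derivative in z, and IBP facts
  have hWd : ∀ r : ℝ, HasDerivAt (fun u => ((ε * ζ t x y - (-1 + β * b x y)) ^ 2 - (u - (-1 + β * b x y)) ^ 2) / 2) (-(r - (-1 + β * b x y))) r := by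
    intro r
    have h := ((hasDerivAt_const r ((ε * ζ t x y - (-1 + β * b x y)) ^ 2)).sub
      (((hasDerivAt_id r).sub_const (-1 + β * b x y)).pow 2)).div_const 2
    refine h.congr_deriv ?_
    push_cast
    simp only [id_eq]
    ring
  have F3 : (∫ u in (-1 + β * b x y)..(ε * ζ t x y), ((ε * ζ t x y - (-1 + β * b x y)) ^ 2 - (u - (-1 + β * b x y)) ^ 2) / 2 * pz (Vs i) t x y u) = (∫ u in (-1 + β * b x y)..(ε * ζ t x y), (u - (-1 + β * b x y)) * Vs i t x y u) - (1 + ε * ζ t x y - β * b x y) ^ 2 / 2 * (Vs i t x y (-1 + β * b x y)) := by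
    have ibp := intervalIntegral.integral_mul_deriv_eq_deriv_mul (a := (-1 + β * b x y)) (b := (ε * ζ t x y))
      (fun r _ => hWd r) (fun r _ => s4_hd_z (hVs i) t x y r)
      ((show Continuous fun r : ℝ => -(r - (-1 + β * b x y)) by fun_prop).intervalIntegrable _ _)
      (cu_pz.intervalIntegrable _ _)
    beta_reduce at ibp
    rw [ibp]
    have eneg : (∫ r in (-1 + β * b x y)..(ε * ζ t x y), -(r - (-1 + β * b x y)) * Vs i t x y r)
        = -∫ r in (-1 + β * b x y)..(ε * ζ t x y), (r - (-1 + β * b x y)) * Vs i t x y r := by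
      rw [← intervalIntegral.integral_neg]
      exact intervalIntegral.integral_congr fun r _ => by ring
    rw [eneg]
    ring
  have F4 : (∫ u in (-1 + β * b x y)..(ε * ζ t x y), ((ε * ζ t x y - (-1 + β * b x y)) ^ 2 - (u - (-1 + β * b x y)) ^ 2) / 2 * (u - (-1 + β * b x y)) * pz (Vs i) t x y u) = -3 * (∫ u in (-1 + β * b x y)..(ε * ζ t x y), ((ε * ζ t x y - (-1 + β * b x y)) ^ 2 - (u - (-1 + β * b x y)) ^ 2) / 2 * Vs i t x y u) := by
    have hW2d : ∀ r : ℝ, HasDerivAt (fun u => ((ε * ζ t x y - (-1 + β * b x y)) ^ 2 - (u - (-1 + β * b x y)) ^ 2) / 2 * (u - (-1 + β * b x y)))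
        (-(r - (-1 + β * b x y)) * (r - (-1 + β * b x y)) + ((ε * ζ t x y - (-1 + β * b x y)) ^ 2 - (r - (-1 + β * b x y)) ^ 2) / 2) r := by
      intro r
      have h := (hWd r).mul ((hasDerivAt_id r).sub_const (-1 + β * b x y))
      refine h.congr_deriv ?_
      simp only [id_eq]
      ring
    have ibp := intervalIntegral.integral_mul_deriv_eq_deriv_mul (a := (-1 + β * b x y)) (b := (ε * ζ t x y))
      (fun r _ => hW2d r) (fun r _ => s4_hd_z (hVs i) t x y r)
      ((show Continuous fun r : ℝ => -(r - (-1 + β * b x y)) * (r - (-1 + β * b x y)) + ((ε * ζ t x y - (-1 + β * b x y)) ^ 2 - (r - (-1 + β * b x y)) ^ 2) / 2 by fun_prop).intervalIntegrable _ _)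
      (cu_pz.intervalIntegrable _ _)
    beta_reduce at ibp
    rw [ibp]
    have iT : IntervalIntegrable (fun r => ((ε * ζ t x y - (-1 + β * b x y)) ^ 2 - (r - (-1 + β * b x y)) ^ 2) / 2 * Vs i t x y r) MeasureTheory.volume (-1 + β * b x y) (ε * ζ t x y) :=
      (cW.mul (cuVs i)).intervalIntegrable _ _
    have iM2 : IntervalIntegrable (fun r => (r - (-1 + β * b x y)) ^ 2 * Vs i t x y r) MeasureTheory.volume (-1 + β * b x y) (ε * ζ t x y) :=
      (((continuous_id.sub continuous_const).pow 2).mul (cuVs i)).intervalIntegrable _ _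
    have esplit : (∫ r in (-1 + β * b x y)..(ε * ζ t x y), (-(r - (-1 + β * b x y)) * (r - (-1 + β * b x y)) + ((ε * ζ t x y - (-1 + β * b x y)) ^ 2 - (r - (-1 + β * b x y)) ^ 2) / 2) * Vs i t x y r)
        = (∫ r in (-1 + β * b x y)..(ε * ζ t x y), ((ε * ζ t x y - (-1 + β * b x y)) ^ 2 - (r - (-1 + β * b x y)) ^ 2) / 2 * Vs i t x y r)
          - ∫ r in (-1 + β * b x y)..(ε * ζ t x y), (r - (-1 + β * b x y)) ^ 2 * Vs i t x y r := by
      rw [← intervalIntegral.integral_sub iT iM2]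
      exact intervalIntegral.integral_congr fun r _ => by ring
    rw [esplit]
    have iC2 : IntervalIntegrable (fun r => (ε * ζ t x y - (-1 + β * b x y)) ^ 2 * Vs i t x y r) MeasureTheory.volume (-1 + β * b x y) (ε * ζ t x y) :=
      (continuous_const.mul (cuVs i)).intervalIntegrable _ _
    have i2W : IntervalIntegrable (fun r => 2 * (((ε * ζ t x y - (-1 + β * b x y)) ^ 2 - (r - (-1 + β * b x y)) ^ 2) / 2 * Vs i t x y r)) MeasureTheory.volume (-1 + β * b x y) (ε * ζ t x y) :=
      (continuous_const.mul (cW.mul (cuVs i))).intervalIntegrable _ _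
    have M2fact : (∫ r in (-1 + β * b x y)..(ε * ζ t x y), (r - (-1 + β * b x y)) ^ 2 * Vs i t x y r)
        = -2 * ∫ r in (-1 + β * b x y)..(ε * ζ t x y), ((ε * ζ t x y - (-1 + β * b x y)) ^ 2 - (r - (-1 + β * b x y)) ^ 2) / 2 * Vs i t x y r := by
      rw [intervalIntegral.integral_congr (g := fun r => (ε * ζ t x y - (-1 + β * b x y)) ^ 2 * Vs i t x y r
          - 2 * (((ε * ζ t x y - (-1 + β * b x y)) ^ 2 - (r - (-1 + β * b x y)) ^ 2) / 2 * Vs i t x y r)) (fun r _ => by ring),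
        intervalIntegral.integral_sub iC2 i2W, intervalIntegral.integral_const_mul,
        intervalIntegral.integral_const_mul, hmean i t x y]
      ring
    rw [M2fact]
    ring
  -- transported integral identity
  have hIcc : Set.uIcc (-1 + β * b x y) (ε * ζ t x y) = Set.Icc (-1 + β * b x y) (ε * ζ t x y) := Set.uIcc_of_le hBle
  have hpoint : Set.EqOn
      (fun u => ((ε * ζ t x y - (-1 + β * b x y)) ^ 2 - (u - (-1 + β * b x y)) ^ 2) / 2 * pt4 (Vs i) t x y u
        + (ε * Vb 0 t x y * (((ε * ζ t x y - (-1 + β * b x y)) ^ 2 - (u - (-1 + β * b x y)) ^ 2) / 2 * px4 (Vs i) t x y u)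
          + ε * Vb 1 t x y * (((ε * ζ t x y - (-1 + β * b x y)) ^ 2 - (u - (-1 + β * b x y)) ^ 2) / 2 * py4 (Vs i) t x y u)))
      (fun u => -(ε * px (Vb i) t x y) * (((ε * ζ t x y - (-1 + β * b x y)) ^ 2 - (u - (-1 + β * b x y)) ^ 2) / 2 * Vs 0 t x y u)
        + (-(ε * py (Vb i) t x y) * (((ε * ζ t x y - (-1 + β * b x y)) ^ 2 - (u - (-1 + β * b x y)) ^ 2) / 2 * Vs 1 t x y u)
          + (ε * (px (Vb 0) t x y + py (Vb 1) t x y) * (((ε * ζ t x y - (-1 + β * b x y)) ^ 2 - (u - (-1 + β * b x y)) ^ 2) / 2 * (u - (-1 + β * b x y)) * pz (Vs i) t x y u)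
            + -(ε * β * (Vb 0 t x y * (deriv (fun r => b r y) x) + Vb 1 t x y * (deriv (fun r => b x r) y))) * (((ε * ζ t x y - (-1 + β * b x y)) ^ 2 - (u - (-1 + β * b x y)) ^ 2) / 2 * pz (Vs i) t x y u))))
      (Set.uIcc (-1 + β * b x y) (ε * ζ t x y)) := by
    intro u hu
    rw [hIcc] at hu
    have htr := htransport i t x y u hu.1 hu.2
    have e3 : px (fun t' x' y' => (1 + u - β * b x' y') * Vb 0 t' x' y') t x y
        = (0 - β * (deriv (fun r => b r y) x)) * Vb 0 t x y + (1 + u - β * b x y) * px (Vb 0) t x y :=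
      (((hasDerivAt_const x ((1:ℝ) + u)).sub ((s2_hd_x hb x y).const_mul β)).mul
        (s3_hd_x (hVb 0) t x y)).deriv
    have e4 : py (fun t' x' y' => (1 + u - β * b x' y') * Vb 1 t' x' y') t x y
        = (0 - β * (deriv (fun r => b x r) y)) * Vb 1 t x y + (1 + u - β * b x y) * py (Vb 1) t x y :=
      (((hasDerivAt_const y ((1:ℝ) + u)).sub ((s2_hd_y hb x y).const_mul β)).mul
        (s3_hd_y (hVb 1) t x y)).deriv
    rw [e3, e4] at htr
    beta_reduce
    linear_combination (((ε * ζ t x y - (-1 + β * b x y)) ^ 2 - (u - (-1 + β * b x y)) ^ 2) / 2) * htr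
  have hcgr := intervalIntegral.integral_congr (μ := MeasureTheory.volume) hpoint
  have iL1 : IntervalIntegrable (fun u => ((ε * ζ t x y - (-1 + β * b x y)) ^ 2 - (u - (-1 + β * b x y)) ^ 2) / 2 * pt4 (Vs i) t x y u) MeasureTheory.volume (-1 + β * b x y) (ε * ζ t x y) :=
    (cW.mul cu_pt4).intervalIntegrable _ _
  have iL2 : IntervalIntegrable (fun u => ε * Vb 0 t x y * (((ε * ζ t x y - (-1 + β * b x y)) ^ 2 - (u - (-1 + β * b x y)) ^ 2) / 2 * px4 (Vs i) t x y u)) MeasureTheory.volume (-1 + β * b x y) (ε * ζ t x y) :=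
    (continuous_const.mul (cW.mul cu_px4)).intervalIntegrable _ _
  have iL3 : IntervalIntegrable (fun u => ε * Vb 1 t x y * (((ε * ζ t x y - (-1 + β * b x y)) ^ 2 - (u - (-1 + β * b x y)) ^ 2) / 2 * py4 (Vs i) t x y u)) MeasureTheory.volume (-1 + β * b x y) (ε * ζ t x y) :=
    (continuous_const.mul (cW.mul cu_py4)).intervalIntegrable _ _
  have iR1 : IntervalIntegrable (fun u => -(ε * px (Vb i) t x y) * (((ε * ζ t x y - (-1 + β * b x y)) ^ 2 - (u - (-1 + β * b x y)) ^ 2) / 2 * Vs 0 t x y u)) MeasureTheory.volume (-1 + β * b x y) (ε * ζ t x y) :=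
    (continuous_const.mul (cW.mul (cuVs 0))).intervalIntegrable _ _
  have iR2 : IntervalIntegrable (fun u => -(ε * py (Vb i) t x y) * (((ε * ζ t x y - (-1 + β * b x y)) ^ 2 - (u - (-1 + β * b x y)) ^ 2) / 2 * Vs 1 t x y u)) MeasureTheory.volume (-1 + β * b x y) (ε * ζ t x y) :=
    (continuous_const.mul (cW.mul (cuVs 1))).intervalIntegrable _ _
  have iR3 : IntervalIntegrable (fun u => ε * (px (Vb 0) t x y + py (Vb 1) t x y) * (((ε * ζ t x y - (-1 + β * b x y)) ^ 2 - (u - (-1 + β * b x y)) ^ 2) / 2 * (u - (-1 + β * b x y)) * pz (Vs i) t x y u)) MeasureTheory.volume (-1 + β * b x y) (ε * ζ t x y) :=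
    (continuous_const.mul ((cW.mul (continuous_id.sub continuous_const)).mul cu_pz)).intervalIntegrable _ _
  have iR4 : IntervalIntegrable (fun u => -(ε * β * (Vb 0 t x y * (deriv (fun r => b r y) x) + Vb 1 t x y * (deriv (fun r => b x r) y))) * (((ε * ζ t x y - (-1 + β * b x y)) ^ 2 - (u - (-1 + β * b x y)) ^ 2) / 2 * pz (Vs i) t x y u)) MeasureTheory.volume (-1 + β * b x y) (ε * ζ t x y) :=
    (continuous_const.mul (cW.mul cu_pz)).intervalIntegrable _ _
  have F5 : (∫ u in (-1 + β * b x y)..(ε * ζ t x y), ((ε * ζ t x y - (-1 + β * b x y)) ^ 2 - (u - (-1 + β * b x y)) ^ 2) / 2 * pt4 (Vs i) t x y u)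
      + (ε * Vb 0 t x y * (∫ u in (-1 + β * b x y)..(ε * ζ t x y), ((ε * ζ t x y - (-1 + β * b x y)) ^ 2 - (u - (-1 + β * b x y)) ^ 2) / 2 * px4 (Vs i) t x y u)
        + ε * Vb 1 t x y * (∫ u in (-1 + β * b x y)..(ε * ζ t x y), ((ε * ζ t x y - (-1 + β * b x y)) ^ 2 - (u - (-1 + β * b x y)) ^ 2) / 2 * py4 (Vs i) t x y u))
      = -(ε * px (Vb i) t x y) * (∫ u in (-1 + β * b x y)..(ε * ζ t x y), ((ε * ζ t x y - (-1 + β * b x y)) ^ 2 - (u - (-1 + β * b x y)) ^ 2) / 2 * Vs 0 t x y u)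
        + (-(ε * py (Vb i) t x y) * (∫ u in (-1 + β * b x y)..(ε * ζ t x y), ((ε * ζ t x y - (-1 + β * b x y)) ^ 2 - (u - (-1 + β * b x y)) ^ 2) / 2 * Vs 1 t x y u)
          + (ε * (px (Vb 0) t x y + py (Vb 1) t x y) * (∫ u in (-1 + β * b x y)..(ε * ζ t x y), ((ε * ζ t x y - (-1 + β * b x y)) ^ 2 - (u - (-1 + β * b x y)) ^ 2) / 2 * (u - (-1 + β * b x y)) * pz (Vs i) t x y u)
            + -(ε * β * (Vb 0 t x y * (deriv (fun r => b r y) x) + Vb 1 t x y * (deriv (fun r => b x r) y))) * (∫ u in (-1 + β * b x y)..(ε * ζ t x y), ((ε * ζ t x y - (-1 + β * b x y)) ^ 2 - (u - (-1 + β * b x y)) ^ 2) / 2 * pz (Vs i) t x y u))) := by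
    have eL : (∫ u in (-1 + β * b x y)..(ε * ζ t x y), (((ε * ζ t x y - (-1 + β * b x y)) ^ 2 - (u - (-1 + β * b x y)) ^ 2) / 2 * pt4 (Vs i) t x y u
        + (ε * Vb 0 t x y * (((ε * ζ t x y - (-1 + β * b x y)) ^ 2 - (u - (-1 + β * b x y)) ^ 2) / 2 * px4 (Vs i) t x y u)
          + ε * Vb 1 t x y * (((ε * ζ t x y - (-1 + β * b x y)) ^ 2 - (u - (-1 + β * b x y)) ^ 2) / 2 * py4 (Vs i) t x y u))))
        = (∫ u in (-1 + β * b x y)..(ε * ζ t x y), ((ε * ζ t x y - (-1 + β * b x y)) ^ 2 - (u - (-1 + β * b x y)) ^ 2) / 2 * pt4 (Vs i) t x y u)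
          + (ε * Vb 0 t x y * (∫ u in (-1 + β * b x y)..(ε * ζ t x y), ((ε * ζ t x y - (-1 + β * b x y)) ^ 2 - (u - (-1 + β * b x y)) ^ 2) / 2 * px4 (Vs i) t x y u)
            + ε * Vb 1 t x y * (∫ u in (-1 + β * b x y)..(ε * ζ t x y), ((ε * ζ t x y - (-1 + β * b x y)) ^ 2 - (u - (-1 + β * b x y)) ^ 2) / 2 * py4 (Vs i) t x y u)) := by
      rw [intervalIntegral.integral_add iL1 (iL2.add iL3), intervalIntegral.integral_add iL2 iL3,
        intervalIntegral.integral_const_mul, intervalIntegral.integral_const_mul]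
    have eR : (∫ u in (-1 + β * b x y)..(ε * ζ t x y), (-(ε * px (Vb i) t x y) * (((ε * ζ t x y - (-1 + β * b x y)) ^ 2 - (u - (-1 + β * b x y)) ^ 2) / 2 * Vs 0 t x y u)
        + (-(ε * py (Vb i) t x y) * (((ε * ζ t x y - (-1 + β * b x y)) ^ 2 - (u - (-1 + β * b x y)) ^ 2) / 2 * Vs 1 t x y u)
          + (ε * (px (Vb 0) t x y + py (Vb 1) t x y) * (((ε * ζ t x y - (-1 + β * b x y)) ^ 2 - (u - (-1 + β * b x y)) ^ 2) / 2 * (u - (-1 + β * b x y)) * pz (Vs i) t x y u)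
            + -(ε * β * (Vb 0 t x y * (deriv (fun r => b r y) x) + Vb 1 t x y * (deriv (fun r => b x r) y))) * (((ε * ζ t x y - (-1 + β * b x y)) ^ 2 - (u - (-1 + β * b x y)) ^ 2) / 2 * pz (Vs i) t x y u)))))
        = -(ε * px (Vb i) t x y) * (∫ u in (-1 + β * b x y)..(ε * ζ t x y), ((ε * ζ t x y - (-1 + β * b x y)) ^ 2 - (u - (-1 + β * b x y)) ^ 2) / 2 * Vs 0 t x y u)
          + (-(ε * py (Vb i) t x y) * (∫ u in (-1 + β * b x y)..(ε * ζ t x y), ((ε * ζ t x y - (-1 + β * b x y)) ^ 2 - (u - (-1 + β * b x y)) ^ 2) / 2 * Vs 1 t x y u)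
            + (ε * (px (Vb 0) t x y + py (Vb 1) t x y) * (∫ u in (-1 + β * b x y)..(ε * ζ t x y), ((ε * ζ t x y - (-1 + β * b x y)) ^ 2 - (u - (-1 + β * b x y)) ^ 2) / 2 * (u - (-1 + β * b x y)) * pz (Vs i) t x y u)
              + -(ε * β * (Vb 0 t x y * (deriv (fun r => b r y) x) + Vb 1 t x y * (deriv (fun r => b x r) y))) * (∫ u in (-1 + β * b x y)..(ε * ζ t x y), ((ε * ζ t x y - (-1 + β * b x y)) ^ 2 - (u - (-1 + β * b x y)) ^ 2) / 2 * pz (Vs i) t x y u))) := by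
      rw [intervalIntegral.integral_add iR1 (iR2.add (iR3.add iR4)),
        intervalIntegral.integral_add iR2 (iR3.add iR4),
        intervalIntegral.integral_add iR3 iR4,
        intervalIntegral.integral_const_mul, intervalIntegral.integral_const_mul,
        intervalIntegral.integral_const_mul, intervalIntegral.integral_const_mul]
    rw [← eL, ← eR]
    exact hcgr
  -- values of Vsharp
  have eqV : ∀ j : Fin 2, Vsharp ε β ζ b Vs j t x y
      = -(24 / (1 + ε * ζ t x y - β * b x y) ^ 3) * (∫ u in (-1 + β * b x y)..(ε * ζ t x y), ((ε * ζ t x y - (-1 + β * b x y)) ^ 2 - (u - (-1 + β * b x y)) ^ 2) / 2 * Vs j t x y u) := by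
    intro j
    have cz : Continuous fun z => Vs j t x y z := cuVs j
    unfold Vsharp
    rw [tripleIntegral_eq cz]
  have mV0 : (1 + ε * ζ t x y - β * b x y) ^ 3 * Vsharp ε β ζ b Vs 0 t x y = -24 * (∫ u in (-1 + β * b x y)..(ε * ζ t x y), ((ε * ζ t x y - (-1 + β * b x y)) ^ 2 - (u - (-1 + β * b x y)) ^ 2) / 2 * Vs 0 t x y u) := by
    rw [eqV 0]; field_simp
  have mV1 : (1 + ε * ζ t x y - β * b x y) ^ 3 * Vsharp ε β ζ b Vs 1 t x y = -24 * (∫ u in (-1 + β * b x y)..(ε * ζ t x y), ((ε * ζ t x y - (-1 + β * b x y)) ^ 2 - (u - (-1 + β * b x y)) ^ 2) / 2 * Vs 1 t x y u) := by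
    rw [eqV 1]; field_simp
  -- final assembly
  rw [F3, F4] at F5
  have expand : (1 + ε * ζ t x y - β * b x y) ^ 4 * (pt (Vsharp ε β ζ b Vs i) t x y
      + ε * (Vb 0 t x y * px (Vsharp ε β ζ b Vs i) t x y
          + Vb 1 t x y * py (Vsharp ε β ζ b Vs i) t x y)
      + ε * (Vsharp ε β ζ b Vs 0 t x y * px (Vb i) t x y
          + Vsharp ε β ζ b Vs 1 t x y * py (Vb i) t x y))
      = ((1 + ε * ζ t x y - β * b x y) ^ 4 * pt (Vsharp ε β ζ b Vs i) t x y)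
        + ε * (Vb 0 t x y * ((1 + ε * ζ t x y - β * b x y) ^ 4 * px (Vsharp ε β ζ b Vs i) t x y)
          + Vb 1 t x y * ((1 + ε * ζ t x y - β * b x y) ^ 4 * py (Vsharp ε β ζ b Vs i) t x y))
        + ε * (1 + ε * ζ t x y - β * b x y) * (((1 + ε * ζ t x y - β * b x y) ^ 3 * Vsharp ε β ζ b Vs 0 t x y) * px (Vb i) t x y
          + ((1 + ε * ζ t x y - β * b x y) ^ 3 * Vsharp ε β ζ b Vs 1 t x y) * py (Vb i) t x y) := by ring
  have hz : (1 + ε * ζ t x y - β * b x y) ^ 4 * (pt (Vsharp ε β ζ b Vs i) t x y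
      + ε * (Vb 0 t x y * px (Vsharp ε β ζ b Vs i) t x y
          + Vb 1 t x y * py (Vsharp ε β ζ b Vs i) t x y)
      + ε * (Vsharp ε β ζ b Vs 0 t x y * px (Vb i) t x y
          + Vsharp ε β ζ b Vs 1 t x y * py (Vb i) t x y)) = 0 := by
    rw [expand, mpt, mpx, mpy, mV0, mV1]
    linear_combination (72 * ε * (∫ u in (-1 + β * b x y)..(ε * ζ t x y), ((ε * ζ t x y - (-1 + β * b x y)) ^ 2 - (u - (-1 + β * b x y)) ^ 2) / 2 * Vs i t x y u)) * hmassE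
      + (-(24 * (1 + ε * ζ t x y - β * b x y))) * F5
  have h4 : ((1 + ε * ζ t x y - β * b x y) : ℝ) ^ 4 ≠ 0 := pow_ne_zero 4 hne
  exact (mul_eq_zero.mp hz).resolve_left h4
end
end

section
/- Let ε, β, μ > 0, let ζ(t,x), b(x), v̄(t,x) be smooth scalar functions (x ∈ ℝ) with h := 1 + εζ − βb > 0 satisfying ∂_t ζ + ∂_x(h v̄) = 0, and let v*(t,x,z) be smooth with zero vertical mean (∫_{−1+βb}^{εζ} v* dz = 0) and satisfying, for all z in the water column, the equation ∂_t v* + ε v̄ ∂_x v* + ε v* ∂_x v̄ + ε√μ ( v* ∂_x v* − (1/h) ∂_x E ) = ε ∂_x( ∫_{−1+βb(x)}^{z} ( v̄ + √μ v* ) dz' ) ∂_z v*, where E(t,x) = ∫_{−1+βb}^{εζ} (v*)² dz and ∂_x is taken at fixed z. Then, with F(t,x) = ∫_{−1+βb}^{εζ} (v*)³ dz, the exact evolution equation ∂_t E + ε v̄ ∂_x E + 3ε E ∂_x v̄ + ε√μ ∂_x F = 0 holds. -/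
noncomputable section

open intervalIntegral

open MeasureTheory Metric Set ContinuousLinearMap
open intervalIntegral MeasureTheory Metric Set ContinuousLinearMap

namespace EEvo

/-- partial derivative of a smooth 2-variable function, as applied fderiv -/
lemma hasDerivAt_slice1 {f : ℝ × ℝ → ℝ} (hf : ContDiff ℝ (⊤ : ℕ∞) f) (s z : ℝ) :
    HasDerivAt (fun u => f (u, z)) (fderiv ℝ f (s, z) (1, 0)) s := by
  have h1 : HasDerivAt (fun u : ℝ => (u, z)) ((1 : ℝ), (0 : ℝ)) s :=
    (hasDerivAt_id s).prodMk (hasDerivAt_const s z)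
  exact (hf.differentiable (by simp)).differentiableAt.hasFDerivAt.comp_hasDerivAt s h1

lemma hasDerivAt_slice2 {f : ℝ × ℝ → ℝ} (hf : ContDiff ℝ (⊤ : ℕ∞) f) (s z : ℝ) :
    HasDerivAt (fun u => f (s, u)) (fderiv ℝ f (s, z) (0, 1)) z := by
  have h1 : HasDerivAt (fun u : ℝ => (s, u)) ((0 : ℝ), (1 : ℝ)) z :=
    (hasDerivAt_const z s).prodMk (hasDerivAt_id z)
  exact (hf.differentiable (by simp)).differentiableAt.hasFDerivAt.comp_hasDerivAt z h1

lemma cont_pderiv {E F : Type*} [NormedAddCommGroup E] [NormedSpace ℝ E]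
    [NormedAddCommGroup F] [NormedSpace ℝ F]
    {f : E → F} (hf : ContDiff ℝ (⊤ : ℕ∞) f) (w : E) :
    Continuous fun q => fderiv ℝ f q w :=
  ((hf.fderiv_right (m := (⊤ : ℕ∞)) (by simp)).continuous).clm_apply continuous_const

end EEvo

namespace EEvo

/-- integrand slices of a smooth 2-var function are continuous -/
lemma cont_slice {f : ℝ × ℝ → ℝ} (hf : ContDiff ℝ (⊤ : ℕ∞) f) (s : ℝ) :
    Continuous fun z => f (s, z) :=
  (hf.continuous).comp (continuous_const.prodMk continuous_id)

lemma cont_pslice {f : ℝ × ℝ → ℝ} (hf : ContDiff ℝ (⊤ : ℕ∞) f) (s : ℝ) :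
    Continuous fun z => fderiv ℝ f (s, z) (1, 0) :=
  (cont_pderiv hf _).comp (continuous_const.prodMk continuous_id)

/-- derivative in the parameter, fixed endpoints -/
lemma hasDerivAt_param_fixed {f : ℝ × ℝ → ℝ} (hf : ContDiff ℝ (⊤ : ℕ∞) f) (s₀ p q : ℝ) :
    HasDerivAt (fun s => ∫ z in p..q, f (s, z))
      (∫ z in p..q, fderiv ℝ f (s₀, z) (1, 0)) s₀ := by
  -- bound on compact set
  obtain ⟨C, hC⟩ : ∃ C, ∀ r ∈ (Icc (s₀ - 1) (s₀ + 1)) ×ˢ (uIcc p q),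
      ‖fderiv ℝ f r (1, 0)‖ ≤ C := by
    rcases (isCompact_Icc.prod isCompact_uIcc).exists_bound_of_continuousOn
      ((cont_pderiv hf (1, 0)).continuousOn) with ⟨C, hC⟩
    exact ⟨C, hC⟩
  refine (intervalIntegral.hasDerivAt_integral_of_dominated_loc_of_deriv_le
    (F := fun s z => f (s, z)) (F' := fun s z => fderiv ℝ f (s, z) (1, 0))
    (bound := fun _ => C) (a := p) (b := q) (ball_mem_nhds s₀ one_pos) ?_ ?_ ?_ ?_ ?_ ?_).2
  · exact Filter.Eventually.of_forall fun s => ((cont_slice hf s).aestronglyMeasurable)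
  · exact (cont_slice hf s₀).intervalIntegrable _ _
  · exact ((cont_pslice hf s₀)).aestronglyMeasurable
  · refine Filter.Eventually.of_forall fun z hz s hs => ?_
    exact hC (s, z) ⟨by
      have := mem_ball_iff_norm.1 hs
      constructor <;> [linarith [neg_le_of_abs_le (le_of_lt this)];
        linarith [le_of_abs_le (le_of_lt this)]], uIoc_subset_uIcc hz⟩
  · exact intervalIntegrable_const
  · exact Filter.Eventually.of_forall fun z _ s _ => hasDerivAt_slice1 hf s z

end EEvo

namespace EEvo

/-- the "moving upper endpoint near a degenerate interval" part -/
lemma hasFDerivAt_tail {f : ℝ × ℝ → ℝ} (hf : ContDiff ℝ (⊤ : ℕ∞) f) (s₀ y₀ : ℝ) :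
    HasFDerivAt (fun p : ℝ × ℝ => ∫ z in y₀..p.2, f (p.1, z))
      (f (s₀, y₀) • ContinuousLinearMap.snd ℝ ℝ ℝ) (s₀, y₀) := by
  rw [hasFDerivAt_iff_isLittleO_nhds_zero]
  rw [Asymptotics.isLittleO_iff]
  intro c hc
  rcases Metric.continuousAt_iff.1 (hf.continuous.continuousAt (x := (s₀, y₀))) c hc
    with ⟨δ, hδ, hball⟩
  have : ∀ h : ℝ × ℝ, ‖h‖ < δ →
      ‖(∫ z in y₀..(y₀ + h.2), f (s₀ + h.1, z)) - (∫ z in y₀..y₀, f (s₀, z))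
        - (f (s₀, y₀) • ContinuousLinearMap.snd ℝ ℝ ℝ) h‖ ≤ c * ‖h‖ := by
    intro h hh
    have hint : (∫ z in y₀..(y₀ + h.2), f (s₀ + h.1, z))
        - (∫ z in y₀..y₀, f (s₀, z)) - (f (s₀, y₀) • ContinuousLinearMap.snd ℝ ℝ ℝ) h
        = ∫ z in y₀..(y₀ + h.2), (f (s₀ + h.1, z) - f (s₀, y₀)) := by
      rw [intervalIntegral.integral_sub ((cont_slice hf _).intervalIntegrable _ _)
        intervalIntegrable_const]
      simp [mul_comm]
    rw [hint]
    beta_reduce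
    have hb : ∀ z ∈ Set.uIcc y₀ (y₀ + h.2), ‖f (s₀ + h.1, z) - f (s₀, y₀)‖ ≤ c := by
      intro z hz
      apply le_of_lt
      apply hball
      have hz2 : |z - y₀| ≤ |h.2| := by
        rcases Set.mem_uIcc.1 hz with h1 | h1
        · rw [abs_le]
          exact ⟨by linarith [abs_nonneg h.2, h1.1], by linarith [le_abs_self h.2, h1.2]⟩
        · rw [abs_le]
          exact ⟨by linarith [neg_abs_le h.2, h1.1], by linarith [abs_nonneg h.2, h1.2]⟩
      have h1 : |h.1| ≤ ‖h‖ := by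
        simpa using norm_fst_le h
      have h2 : |h.2| ≤ ‖h‖ := by
        simpa using norm_snd_le h
      rw [dist_eq_norm]
      have : ‖((s₀ + h.1, z) : ℝ × ℝ) - (s₀, y₀)‖ = ‖((h.1, z - y₀) : ℝ × ℝ)‖ := by
        congr 1
        simp [Prod.ext_iff]
      rw [this]
      calc ‖((h.1, z - y₀) : ℝ × ℝ)‖ ≤ max |h.1| |z - y₀| := by
            rw [Prod.norm_def]; simp [Real.norm_eq_abs]
        _ ≤ ‖h‖ := max_le h1 (hz2.trans h2)
        _ < δ := hh
    calc ‖∫ z in y₀..(y₀ + h.2), (f (s₀ + h.1, z) - f (s₀, y₀))‖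
        ≤ c * |y₀ + h.2 - y₀| :=
          intervalIntegral.norm_integral_le_of_norm_le_const (by
            intro z hz
            exact hb z (uIoc_subset_uIcc hz))
      _ = c * |h.2| := by ring_nf
      _ ≤ c * ‖h‖ := by
          have h2 : |h.2| ≤ ‖h‖ := by simpa using norm_snd_le h
          exact mul_le_mul_of_nonneg_left h2 (le_of_lt hc)
  filter_upwards [Metric.ball_mem_nhds 0 hδ] with h hh
  have := this h (by simpa [dist_eq_norm] using hh)
  simpa using this

end EEvo

namespace EEvo

/-- joint differentiability of the parametric primitive -/
lemma hasFDerivAt_primitive {f : ℝ × ℝ → ℝ} (hf : ContDiff ℝ (⊤ : ℕ∞) f) (s₀ y₀ y₁ : ℝ) :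
    HasFDerivAt (fun p : ℝ × ℝ => ∫ z in y₁..p.2, f (p.1, z))
      ((∫ z in y₁..y₀, fderiv ℝ f (s₀, z) (1, 0)) • ContinuousLinearMap.fst ℝ ℝ ℝ
        + f (s₀, y₀) • ContinuousLinearMap.snd ℝ ℝ ℝ) (s₀, y₀) := by
  have hsplit : (fun p : ℝ × ℝ => ∫ z in y₁..p.2, f (p.1, z))
      = fun p : ℝ × ℝ => (∫ z in y₁..y₀, f (p.1, z)) + ∫ z in y₀..p.2, f (p.1, z) := by
    funext p
    rw [intervalIntegral.integral_add_adjacent_intervals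
      ((cont_slice hf _).intervalIntegrable _ _) ((cont_slice hf _).intervalIntegrable _ _)]
  rw [hsplit]
  have h1 : HasFDerivAt (fun p : ℝ × ℝ => ∫ z in y₁..y₀, f (p.1, z))
      ((∫ z in y₁..y₀, fderiv ℝ f (s₀, z) (1, 0)) • ContinuousLinearMap.fst ℝ ℝ ℝ)
      (s₀, y₀) := by
    have := (hasDerivAt_param_fixed hf s₀ y₁ y₀).hasFDerivAt
    have hfst : HasFDerivAt (Prod.fst : ℝ × ℝ → ℝ) (ContinuousLinearMap.fst ℝ ℝ ℝ)
        ((s₀, y₀) : ℝ × ℝ) := hasFDerivAt_fst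
    have hcomp := HasFDerivAt.comp ((s₀, y₀) : ℝ × ℝ)
      (g := fun s => ∫ z in y₁..y₀, f (s, z)) this hfst
    refine hcomp.congr_fderiv ?_
    apply ContinuousLinearMap.ext
    intro v
    simp [mul_comm]
  exact h1.add (hasFDerivAt_tail hf s₀ y₀)

/-- Leibniz rule: derivative of an interval integral with parameter and moving endpoints. -/
lemma leibniz {f : ℝ → ℝ → ℝ} (hf : ContDiff ℝ (⊤ : ℕ∞) fun p : ℝ × ℝ => f p.1 p.2)
    {a c : ℝ → ℝ} {a' c' : ℝ} (x₀ : ℝ) (ha : HasDerivAt a a' x₀) (hc : HasDerivAt c c' x₀) :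
    HasDerivAt (fun s => ∫ z in a s..c s, f s z)
      ((∫ z in a x₀..c x₀, deriv (fun s => f s z) x₀)
        + c' * f x₀ (c x₀) - a' * f x₀ (a x₀)) x₀ := by
  set F : ℝ × ℝ → ℝ := fun p => f p.1 p.2 with hF
  have hsplit : (fun s => ∫ z in a s..c s, f s z)
      = fun s => (∫ z in a x₀..c s, F (s, z)) - ∫ z in a x₀..a s, F (s, z) := by
    funext s
    have := intervalIntegral.integral_add_adjacent_intervals
      (a := a x₀) (b := a s) (c := c s) (f := fun z => F (s, z)) (μ := volume)
      ((cont_slice hf _).intervalIntegrable _ _) ((cont_slice hf _).intervalIntegrable _ _)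
    have h2 : (∫ z in a x₀..c s, F (s, z)) - (∫ z in a x₀..a s, F (s, z))
        = ∫ z in a s..c s, F (s, z) := by linarith [this]
    exact h2.symm
  rw [hsplit]
  have hcurve_c : HasDerivAt (fun s => ((s, c s) : ℝ × ℝ)) ((1 : ℝ), c') x₀ :=
    (hasDerivAt_id x₀).prodMk hc
  have hcurve_a : HasDerivAt (fun s => ((s, a s) : ℝ × ℝ)) ((1 : ℝ), a') x₀ :=
    (hasDerivAt_id x₀).prodMk ha
  have hC := (hasFDerivAt_primitive hf x₀ (c x₀) (a x₀)).comp_hasDerivAt x₀ hcurve_c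
  have hA := (hasFDerivAt_primitive hf x₀ (a x₀) (a x₀)).comp_hasDerivAt x₀ hcurve_a
  have hsub := hC.sub hA
  have hval : ((∫ z in a x₀..c x₀, fderiv ℝ F (x₀, z) (1, 0)) • ContinuousLinearMap.fst ℝ ℝ ℝ
        + F (x₀, c x₀) • ContinuousLinearMap.snd ℝ ℝ ℝ) (1, c')
      - ((∫ z in a x₀..a x₀, fderiv ℝ F (x₀, z) (1, 0)) • ContinuousLinearMap.fst ℝ ℝ ℝ
        + F (x₀, a x₀) • ContinuousLinearMap.snd ℝ ℝ ℝ) (1, a')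
      = (∫ z in a x₀..c x₀, deriv (fun s => f s z) x₀)
        + c' * f x₀ (c x₀) - a' * f x₀ (a x₀) := by
    have hder : ∀ z, deriv (fun s => f s z) x₀ = fderiv ℝ F (x₀, z) (1, 0) := fun z =>
      (hasDerivAt_slice1 hf x₀ z).deriv
    simp only [ContinuousLinearMap.add_apply, ContinuousLinearMap.smul_apply,
      ContinuousLinearMap.coe_fst', ContinuousLinearMap.coe_snd', smul_eq_mul,
      intervalIntegral.integral_same]
    rw [intervalIntegral.integral_congr (g := fun z => fderiv ℝ F (x₀, z) (1, 0))
      (fun z _ => hder z)]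
    ring
  rw [← hval]
  exact hsub

end EEvo

namespace EEvo

section slices3
variable {vs : ℝ → ℝ → ℝ → ℝ}

lemma hasDerivAt_st' (hvs : ContDiff ℝ (⊤ : ℕ∞) fun p : ℝ × ℝ × ℝ => vs p.1 p.2.1 p.2.2) (t x z : ℝ) :
    HasDerivAt (fun s => vs s x z)
      (fderiv ℝ (fun p : ℝ × ℝ × ℝ => vs p.1 p.2.1 p.2.2) (t, x, z) (1, 0, 0)) t := by
  have h1 : HasDerivAt (fun s : ℝ => ((s, x, z) : ℝ × ℝ × ℝ)) ((1 : ℝ), (0 : ℝ), (0 : ℝ)) t :=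
    (hasDerivAt_id t).prodMk ((hasDerivAt_const t x).prodMk (hasDerivAt_const t z))
  exact (hvs.differentiable (by simp)).differentiableAt.hasFDerivAt.comp_hasDerivAt t h1

lemma hasDerivAt_sx' (hvs : ContDiff ℝ (⊤ : ℕ∞) fun p : ℝ × ℝ × ℝ => vs p.1 p.2.1 p.2.2) (t x z : ℝ) :
    HasDerivAt (fun u => vs t u z)
      (fderiv ℝ (fun p : ℝ × ℝ × ℝ => vs p.1 p.2.1 p.2.2) (t, x, z) (0, 1, 0)) x := by
  have h1 : HasDerivAt (fun u : ℝ => ((t, u, z) : ℝ × ℝ × ℝ)) ((0 : ℝ), (1 : ℝ), (0 : ℝ)) x :=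
    (hasDerivAt_const x t).prodMk ((hasDerivAt_id x).prodMk (hasDerivAt_const x z))
  exact (hvs.differentiable (by simp)).differentiableAt.hasFDerivAt.comp_hasDerivAt x h1

lemma hasDerivAt_sz' (hvs : ContDiff ℝ (⊤ : ℕ∞) fun p : ℝ × ℝ × ℝ => vs p.1 p.2.1 p.2.2) (t x z : ℝ) :
    HasDerivAt (fun u => vs t x u)
      (fderiv ℝ (fun p : ℝ × ℝ × ℝ => vs p.1 p.2.1 p.2.2) (t, x, z) (0, 0, 1)) z := by
  have h1 : HasDerivAt (fun u : ℝ => ((t, x, u) : ℝ × ℝ × ℝ)) ((0 : ℝ), (0 : ℝ), (1 : ℝ)) z :=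
    (hasDerivAt_const z t).prodMk ((hasDerivAt_const z x).prodMk (hasDerivAt_id z))
  exact (hvs.differentiable (by simp)).differentiableAt.hasFDerivAt.comp_hasDerivAt z h1

end slices3

end EEvo


def Smooth1 (f : ℝ → ℝ) : Prop := ContDiff ℝ (⊤ : ℕ∞) f

/-- time derivative of a function of (t,x) -/
noncomputable def rt (f : ℝ → ℝ → ℝ) (t x : ℝ) : ℝ := deriv (fun s => f s x) t
/-- x-derivative of a function of (t,x) -/
noncomputable def rx (f : ℝ → ℝ → ℝ) (t x : ℝ) : ℝ := deriv (fun u => f t u) x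
/-- time derivative of a function of (t,x,z) -/
noncomputable def st (f : ℝ → ℝ → ℝ → ℝ) (t x z : ℝ) : ℝ := deriv (fun s => f s x z) t
/-- x-derivative of a function of (t,x,z), at fixed z -/
noncomputable def sx (f : ℝ → ℝ → ℝ → ℝ) (t x z : ℝ) : ℝ := deriv (fun u => f t u z) x
/-- z-derivative of a function of (t,x,z) -/
noncomputable def sz (f : ℝ → ℝ → ℝ → ℝ) (t x z : ℝ) : ℝ := deriv (fun u => f t x u) z

/-- the rotational energy E = ∫ (v*)². -/
noncomputable def En (ε β : ℝ) (ζ : ℝ → ℝ → ℝ) (b : ℝ → ℝ)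
    (vs : ℝ → ℝ → ℝ → ℝ) (t x : ℝ) : ℝ :=
  ∫ z in (-1 + β * b x)..(ε * ζ t x), (vs t x z)^2

/-- the third order self-interaction F = ∫ (v*)³. -/
noncomputable def Fn (ε β : ℝ) (ζ : ℝ → ℝ → ℝ) (b : ℝ → ℝ)
    (vs : ℝ → ℝ → ℝ → ℝ) (t x : ℝ) : ℝ :=
  ∫ z in (-1 + β * b x)..(ε * ζ t x), (vs t x z)^3

/-- the exact evolution equation
∂_t E + εv̄∂_xE + 3εE∂_xv̄ + ε√μ∂_xF = 0. -/
theorem E_evolution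
    (ε β μ : ℝ) (hε : 0 < ε) (hβ : 0 < β) (hμ : 0 < μ)
    (ζ vbar : ℝ → ℝ → ℝ) (b : ℝ → ℝ) (vs : ℝ → ℝ → ℝ → ℝ)
    (hζ : Smooth2 ζ) (hvbar : Smooth2 vbar) (hb : Smooth1 b) (hvs : Smooth3 vs)
    (hpos : ∀ t x, 0 < 1 + ε * ζ t x - β * b x)
    -- mass conservation ∂_t ζ + ∂_x(hv̄) = 0
    (hmass : ∀ t x,
      rt ζ t x + rx (fun t' x' => (1 + ε * ζ t' x' - β * b x') * vbar t' x') t x = 0)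
    -- zero vertical mean of v*
    (hmean : ∀ t x, (∫ z in (-1 + β * b x)..(ε * ζ t x), vs t x z) = 0)
    -- evolution equation for v* in the water column
    (heq : ∀ t x z, -1 + β * b x ≤ z → z ≤ ε * ζ t x →
      st vs t x z + ε * vbar t x * sx vs t x z + ε * vs t x z * rx vbar t x
        + ε * Real.sqrt μ * (vs t x z * sx vs t x z
            - (1 + ε * ζ t x - β * b x)⁻¹ * rx (En ε β ζ b vs) t x)
      = ε * rx (fun t' x' =>
            ∫ zp in (-1 + β * b x')..z,
              (vbar t' x' + Real.sqrt μ * vs t' x' zp)) t x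
          * sz vs t x z) :
    ∀ t x,
      rt (En ε β ζ b vs) t x
        + ε * vbar t x * rx (En ε β ζ b vs) t x
        + 3 * ε * En ε β ζ b vs t x * rx vbar t x
        + ε * Real.sqrt μ * rx (Fn ε β ζ b vs) t x = 0 := by

  intro t x
  have hV : ContDiff ℝ (⊤ : ℕ∞) (fun p : ℝ × ℝ × ℝ => vs p.1 p.2.1 p.2.2) := hvs
  have hZ : ContDiff ℝ (⊤ : ℕ∞) (fun p : ℝ × ℝ => ζ p.1 p.2) := hζ
  have hW : ContDiff ℝ (⊤ : ℕ∞) (fun p : ℝ × ℝ => vbar p.1 p.2) := hvbar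
  have hB : ContDiff ℝ (⊤ : ℕ∞) b := hb
  have hAC : -1 + β * b x ≤ ε * ζ t x := by have := hpos t x; linarith
  -- slice smoothness
  have hslice_t : ContDiff ℝ (⊤ : ℕ∞) (fun p : ℝ × ℝ => vs p.1 x p.2) :=
    hV.comp (contDiff_fst.prodMk (contDiff_const.prodMk contDiff_snd))
  have hslice_x : ContDiff ℝ (⊤ : ℕ∞) (fun p : ℝ × ℝ => vs t p.1 p.2) :=
    hV.comp (contDiff_const.prodMk (contDiff_fst.prodMk contDiff_snd))
  -- pointwise partial derivatives
  have hst : ∀ z, HasDerivAt (fun s => vs s x z) (st vs t x z) t := by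
    intro z
    have h := EEvo.hasDerivAt_st' hV t x z
    rw [st, h.deriv]; exact h
  have hsx : ∀ (u z : ℝ), HasDerivAt (fun u' => vs t u' z) (sx vs t u z) u := by
    intro u z
    have h := EEvo.hasDerivAt_sx' hV t u z
    rw [sx, h.deriv]; exact h
  have hszd : ∀ z, HasDerivAt (fun z' => vs t x z') (sz vs t x z) z := by
    intro z
    have h := EEvo.hasDerivAt_sz' hV t x z
    rw [sz, h.deriv]; exact h
  have hrtζ : HasDerivAt (fun s => ζ s x) (rt ζ t x) t := by
    have h := EEvo.hasDerivAt_slice1 hZ t x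
    rw [rt, h.deriv]; exact h
  have hrxζ : HasDerivAt (fun u => ζ t u) (rx ζ t x) x := by
    have h := EEvo.hasDerivAt_slice2 hZ t x
    rw [rx, h.deriv]; exact h
  have hrxw : ∀ u, HasDerivAt (fun u' => vbar t u') (rx vbar t u) u := by
    intro u
    have h := EEvo.hasDerivAt_slice2 hW t u
    rw [rx, h.deriv]; exact h
  have hbx : HasDerivAt b (deriv b x) x := ((hB.differentiable (by simp)) x).hasDerivAt
  -- continuity in z
  have hvs_cont : Continuous fun z => vs t x z :=
    hV.continuous.comp (continuous_const.prodMk (continuous_const.prodMk continuous_id))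
  have hst_cont : Continuous fun z => st vs t x z := by
    have he : (fun z => st vs t x z)
        = fun z => fderiv ℝ (fun p : ℝ × ℝ × ℝ => vs p.1 p.2.1 p.2.2) (t, x, z) (1, 0, 0) := by
      funext z; rw [st, (EEvo.hasDerivAt_st' hV t x z).deriv]
    rw [he]
    exact (EEvo.cont_pderiv hV _).comp
      (continuous_const.prodMk (continuous_const.prodMk continuous_id))
  have hsx_cont : Continuous fun z => sx vs t x z := by
    have he : (fun z => sx vs t x z)
        = fun z => fderiv ℝ (fun p : ℝ × ℝ × ℝ => vs p.1 p.2.1 p.2.2) (t, x, z) (0, 1, 0) := by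
      funext z; rw [sx, (EEvo.hasDerivAt_sx' hV t x z).deriv]
    rw [he]
    exact (EEvo.cont_pderiv hV _).comp
      (continuous_const.prodMk (continuous_const.prodMk continuous_id))
  have hsz_cont : Continuous fun z => sz vs t x z := by
    have he : (fun z => sz vs t x z)
        = fun z => fderiv ℝ (fun p : ℝ × ℝ × ℝ => vs p.1 p.2.1 p.2.2) (t, x, z) (0, 0, 1) := by
      funext z; rw [sz, (EEvo.hasDerivAt_sz' hV t x z).deriv]
    rw [he]
    exact (EEvo.cont_pderiv hV _).comp
      (continuous_const.prodMk (continuous_const.prodMk continuous_id))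
  -- endpoint derivatives in x
  have hb' : HasDerivAt (fun u => -1 + β * b u) (β * deriv b x) x :=
    (hbx.const_mul β).const_add (-1)
  have hc'x : HasDerivAt (fun u => ε * ζ t u) (ε * rx ζ t x) x := hrxζ.const_mul ε
  -- (1) time derivative of En
  have h1 : rt (En ε β ζ b vs) t x
      = 2 * (∫ z in (-1 + β * b x)..(ε * ζ t x), vs t x z * st vs t x z)
        + ε * rt ζ t x * vs t x (ε * ζ t x) ^ 2 := by
    have hc' : HasDerivAt (fun s => ε * ζ s x) (ε * rt ζ t x) t := hrtζ.const_mul ε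
    have hL := EEvo.leibniz (f := fun s z => vs s x z ^ 2) (hslice_t.pow 2) t
      (hasDerivAt_const t (-1 + β * b x)) hc'
    have hd : rt (En ε β ζ b vs) t x
        = (∫ z in (-1 + β * b x)..(ε * ζ t x), deriv (fun s => vs s x z ^ 2) t)
          + ε * rt ζ t x * vs t x (ε * ζ t x) ^ 2
          - 0 * vs t x (-1 + β * b x) ^ 2 := hL.deriv
    have hcg : (∫ z in (-1 + β * b x)..(ε * ζ t x), deriv (fun s => vs s x z ^ 2) t)
        = ∫ z in (-1 + β * b x)..(ε * ζ t x), 2 * (vs t x z * st vs t x z) := by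
      apply intervalIntegral.integral_congr
      intro z _
      beta_reduce
      rw [((hst z).fun_pow 2).deriv]
      push_cast
      try ring
    rw [hd, hcg, intervalIntegral.integral_const_mul]; try ring
  -- (2) x derivative of En
  have h2 : rx (En ε β ζ b vs) t x
      = 2 * (∫ z in (-1 + β * b x)..(ε * ζ t x), vs t x z * sx vs t x z)
        + ε * rx ζ t x * vs t x (ε * ζ t x) ^ 2
        - β * deriv b x * vs t x (-1 + β * b x) ^ 2 := by
    have hL := EEvo.leibniz (f := fun u z => vs t u z ^ 2) (hslice_x.pow 2) x hb' hc'x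
    have hd : rx (En ε β ζ b vs) t x
        = (∫ z in (-1 + β * b x)..(ε * ζ t x), deriv (fun u => vs t u z ^ 2) x)
          + ε * rx ζ t x * vs t x (ε * ζ t x) ^ 2
          - β * deriv b x * vs t x (-1 + β * b x) ^ 2 := hL.deriv
    have hcg : (∫ z in (-1 + β * b x)..(ε * ζ t x), deriv (fun u => vs t u z ^ 2) x)
        = ∫ z in (-1 + β * b x)..(ε * ζ t x), 2 * (vs t x z * sx vs t x z) := by
      apply intervalIntegral.integral_congr
      intro z _
      beta_reduce
      rw [((hsx x z).fun_pow 2).deriv]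
      push_cast
      try ring
    rw [hd, hcg, intervalIntegral.integral_const_mul]; try ring
  -- (3) x derivative of Fn
  have h3 : rx (Fn ε β ζ b vs) t x
      = 3 * (∫ z in (-1 + β * b x)..(ε * ζ t x), vs t x z ^ 2 * sx vs t x z)
        + ε * rx ζ t x * vs t x (ε * ζ t x) ^ 3
        - β * deriv b x * vs t x (-1 + β * b x) ^ 3 := by
    have hL := EEvo.leibniz (f := fun u z => vs t u z ^ 3) (hslice_x.pow 3) x hb' hc'x
    have hd : rx (Fn ε β ζ b vs) t x
        = (∫ z in (-1 + β * b x)..(ε * ζ t x), deriv (fun u => vs t u z ^ 3) x)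
          + ε * rx ζ t x * vs t x (ε * ζ t x) ^ 3
          - β * deriv b x * vs t x (-1 + β * b x) ^ 3 := hL.deriv
    have hcg : (∫ z in (-1 + β * b x)..(ε * ζ t x), deriv (fun u => vs t u z ^ 3) x)
        = ∫ z in (-1 + β * b x)..(ε * ζ t x), 3 * (vs t x z ^ 2 * sx vs t x z) := by
      apply intervalIntegral.integral_congr
      intro z _
      beta_reduce
      rw [((hsx x z).fun_pow 3).deriv]
      push_cast
      try ring
    rw [hd, hcg, intervalIntegral.integral_const_mul]; try ring
  -- (4) x derivative of the zero-mean relation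
  have hS : (∫ z in (-1 + β * b x)..(ε * ζ t x), sx vs t x z)
      + ε * rx ζ t x * vs t x (ε * ζ t x)
      - β * deriv b x * vs t x (-1 + β * b x) = 0 := by
    have hL := EEvo.leibniz (f := fun u z => vs t u z) hslice_x x hb' hc'x
    have hL' : HasDerivAt (fun u => ∫ z in (-1 + β * b u)..(ε * ζ t u), vs t u z)
        ((∫ z in (-1 + β * b x)..(ε * ζ t x), deriv (fun u => vs t u z) x)
          + ε * rx ζ t x * vs t x (ε * ζ t x)
          - β * deriv b x * vs t x (-1 + β * b x)) x := hL
    have h0 : (fun u => ∫ z in (-1 + β * b u)..(ε * ζ t u), vs t u z) = fun _ => (0 : ℝ) :=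
      funext fun u => hmean t u
    rw [h0] at hL'
    have hval := hL'.unique (hasDerivAt_const x 0)
    have hcg : (∫ z in (-1 + β * b x)..(ε * ζ t x), deriv (fun u => vs t u z) x)
        = ∫ z in (-1 + β * b x)..(ε * ζ t x), sx vs t x z := by
      apply intervalIntegral.integral_congr
      intro z _
      beta_reduce
      exact (hsx x z).deriv
    rw [hcg] at hval
    linarith [hval]
  -- (5) identification of the x-derivative of the shear transport term
  have hΦ : ∀ z : ℝ, rx (fun t' x' => ∫ zp in (-1 + β * b x')..z,
        (vbar t' x' + Real.sqrt μ * vs t' x' zp)) t x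
      = (∫ zp in (-1 + β * b x)..z, (rx vbar t x + Real.sqrt μ * sx vs t x zp))
        - β * deriv b x * (vbar t x + Real.sqrt μ * vs t x (-1 + β * b x)) := by
    intro z
    have hsm : ContDiff ℝ (⊤ : ℕ∞) (fun p : ℝ × ℝ => vbar t p.1 + Real.sqrt μ * vs t p.1 p.2) := by
      have hbar : ContDiff ℝ (⊤ : ℕ∞) (fun p : ℝ × ℝ => vbar t p.1) :=
        hW.comp (contDiff_const.prodMk contDiff_fst)
      exact hbar.add (contDiff_const.mul hslice_x)
    have hL := EEvo.leibniz (f := fun u zp => vbar t u + Real.sqrt μ * vs t u zp) hsm x hb'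
      (hasDerivAt_const x z)
    have hd : rx (fun t' x' => ∫ zp in (-1 + β * b x')..z,
          (vbar t' x' + Real.sqrt μ * vs t' x' zp)) t x
        = (∫ zp in (-1 + β * b x)..z, deriv (fun u => vbar t u + Real.sqrt μ * vs t u zp) x)
          + 0 * (vbar t x + Real.sqrt μ * vs t x z)
          - β * deriv b x * (vbar t x + Real.sqrt μ * vs t x (-1 + β * b x)) := hL.deriv
    have hcg : (∫ zp in (-1 + β * b x)..z, deriv (fun u => vbar t u + Real.sqrt μ * vs t u zp) x)
        = ∫ zp in (-1 + β * b x)..z, (rx vbar t x + Real.sqrt μ * sx vs t x zp) := by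
      apply intervalIntegral.integral_congr
      intro zp _
      beta_reduce
      exact ((hrxw x).add ((hsx x zp).const_mul (Real.sqrt μ))).deriv
    rw [hd, hcg]; ring
  -- (6) mass conservation in explicit form
  have hmass' : rt ζ t x + ((ε * rx ζ t x - β * deriv b x) * vbar t x
      + (1 + ε * ζ t x - β * b x) * rx vbar t x) = 0 := by
    have hhv : HasDerivAt (fun u => (1 + ε * ζ t u - β * b u) * vbar t u)
        ((ε * rx ζ t x - β * deriv b x) * vbar t x
          + (1 + ε * ζ t x - β * b x) * rx vbar t x) x := by
      have hin : HasDerivAt (fun u => 1 + ε * ζ t u - β * b u)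
          (ε * rx ζ t x - β * deriv b x) x :=
        ((hrxζ.const_mul ε).const_add 1).sub (hbx.const_mul β)
      exact hin.mul (hrxw x)
    have hd : rx (fun t' x' => (1 + ε * ζ t' x' - β * b x') * vbar t' x') t x
        = (ε * rx ζ t x - β * deriv b x) * vbar t x
          + (1 + ε * ζ t x - β * b x) * rx vbar t x := hhv.deriv
    have := hmass t x
    linarith [this, hd]
  -- FTC primitive for the integrated shear
  have hgc : Continuous fun zp => rx vbar t x + Real.sqrt μ * sx vs t x zp :=
    continuous_const.add (continuous_const.mul hsx_cont)
  have hIUd : ∀ z : ℝ, HasDerivAt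
      (fun y => ∫ zp in (-1 + β * b x)..y, (rx vbar t x + Real.sqrt μ * sx vs t x zp))
      (rx vbar t x + Real.sqrt μ * sx vs t x z) z := by
    intro z
    exact intervalIntegral.integral_hasDerivAt_right (hgc.intervalIntegrable _ _)
      (hgc.stronglyMeasurableAtFilter _ _) hgc.continuousAt
  have hIUcont : Continuous fun z =>
      (∫ zp in (-1 + β * b x)..z, (rx vbar t x + Real.sqrt μ * sx vs t x zp)) := by
    rw [continuous_iff_continuousAt]
    exact fun z => (hIUd z).continuousAt
  -- (7) pointwise substitution of the v* equation
  have hpt : ∀ z ∈ Set.uIcc (-1 + β * b x) (ε * ζ t x),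
      vs t x z * st vs t x z
        = ε / 2 * (((∫ zp in (-1 + β * b x)..z, (rx vbar t x + Real.sqrt μ * sx vs t x zp))
              - β * deriv b x * (vbar t x + Real.sqrt μ * vs t x (-1 + β * b x)))
            * (2 * (vs t x z * sz vs t x z)))
          - ε * vbar t x * (vs t x z * sx vs t x z)
          - ε * rx vbar t x * vs t x z ^ 2
          - ε * Real.sqrt μ * (vs t x z ^ 2 * sx vs t x z)
          + ε * Real.sqrt μ * (1 + ε * ζ t x - β * b x)⁻¹ * rx (En ε β ζ b vs) t x
              * vs t x z := by
    intro z hz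
    rw [Set.uIcc_of_le hAC] at hz
    have h := heq t x z hz.1 hz.2
    rw [hΦ z] at h
    linear_combination (vs t x z) * h
  -- continuity of the five pieces
  have hc1 : Continuous fun z =>
      ε / 2 * (((∫ zp in (-1 + β * b x)..z, (rx vbar t x + Real.sqrt μ * sx vs t x zp))
          - β * deriv b x * (vbar t x + Real.sqrt μ * vs t x (-1 + β * b x)))
        * (2 * (vs t x z * sz vs t x z))) :=
    continuous_const.mul ((hIUcont.sub continuous_const).mul
      (continuous_const.mul (hvs_cont.mul hsz_cont)))
  have hc2 : Continuous fun z => ε * vbar t x * (vs t x z * sx vs t x z) :=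
    continuous_const.mul (hvs_cont.mul hsx_cont)
  have hc3 : Continuous fun z => ε * rx vbar t x * vs t x z ^ 2 :=
    continuous_const.mul (hvs_cont.pow 2)
  have hc4 : Continuous fun z => ε * Real.sqrt μ * (vs t x z ^ 2 * sx vs t x z) :=
    continuous_const.mul ((hvs_cont.pow 2).mul hsx_cont)
  have hc5 : Continuous fun z => ε * Real.sqrt μ * (1 + ε * ζ t x - β * b x)⁻¹
      * rx (En ε β ζ b vs) t x * vs t x z :=
    continuous_const.mul hvs_cont
  -- (8) split the time integral using the equation
  have hIt : (∫ z in (-1 + β * b x)..(ε * ζ t x), vs t x z * st vs t x z)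
      = ε / 2 * (∫ z in (-1 + β * b x)..(ε * ζ t x),
            ((∫ zp in (-1 + β * b x)..z, (rx vbar t x + Real.sqrt μ * sx vs t x zp))
              - β * deriv b x * (vbar t x + Real.sqrt μ * vs t x (-1 + β * b x)))
            * (2 * (vs t x z * sz vs t x z)))
        - ε * vbar t x * (∫ z in (-1 + β * b x)..(ε * ζ t x), vs t x z * sx vs t x z)
        - ε * rx vbar t x * (∫ z in (-1 + β * b x)..(ε * ζ t x), vs t x z ^ 2)
        - ε * Real.sqrt μ
            * (∫ z in (-1 + β * b x)..(ε * ζ t x), vs t x z ^ 2 * sx vs t x z) := by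
    rw [intervalIntegral.integral_congr hpt]
    rw [intervalIntegral.integral_add
      ((((hc1.fun_sub hc2).fun_sub hc3).fun_sub hc4).intervalIntegrable _ _)
      (hc5.intervalIntegrable _ _)]
    rw [intervalIntegral.integral_sub
      (((hc1.fun_sub hc2).fun_sub hc3).intervalIntegrable _ _) (hc4.intervalIntegrable _ _)]
    rw [intervalIntegral.integral_sub
      ((hc1.fun_sub hc2).intervalIntegrable _ _) (hc3.intervalIntegrable _ _)]
    rw [intervalIntegral.integral_sub
      (hc1.intervalIntegrable _ _) (hc2.intervalIntegrable _ _)]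
    rw [intervalIntegral.integral_const_mul, intervalIntegral.integral_const_mul,
      intervalIntegral.integral_const_mul, intervalIntegral.integral_const_mul,
      intervalIntegral.integral_const_mul]
    rw [hmean t x, mul_zero, add_zero]
  -- (9) integration by parts
  have hvsq : ∀ z : ℝ, HasDerivAt (fun y => vs t x y ^ 2)
      (2 * (vs t x z * sz vs t x z)) z := by
    intro z
    have h := (hszd z).fun_pow 2
    refine h.congr_deriv ?_
    push_cast; ring
  have hIBP : (∫ z in (-1 + β * b x)..(ε * ζ t x),
        ((∫ zp in (-1 + β * b x)..z, (rx vbar t x + Real.sqrt μ * sx vs t x zp))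
          - β * deriv b x * (vbar t x + Real.sqrt μ * vs t x (-1 + β * b x)))
        * (2 * (vs t x z * sz vs t x z)))
      = (rx vbar t x * (ε * ζ t x - (-1 + β * b x))
          + Real.sqrt μ * (∫ z in (-1 + β * b x)..(ε * ζ t x), sx vs t x z)
          - β * deriv b x * (vbar t x + Real.sqrt μ * vs t x (-1 + β * b x)))
            * vs t x (ε * ζ t x) ^ 2
        + β * deriv b x * (vbar t x + Real.sqrt μ * vs t x (-1 + β * b x))
            * vs t x (-1 + β * b x) ^ 2
        - (rx vbar t x * (∫ z in (-1 + β * b x)..(ε * ζ t x), vs t x z ^ 2)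
            + Real.sqrt μ
              * (∫ z in (-1 + β * b x)..(ε * ζ t x), vs t x z ^ 2 * sx vs t x z)) := by
    have hint := intervalIntegral.integral_mul_deriv_eq_deriv_mul
      (a := -1 + β * b x) (b := ε * ζ t x)
      (u := fun y => (∫ zp in (-1 + β * b x)..y, (rx vbar t x + Real.sqrt μ * sx vs t x zp))
        - β * deriv b x * (vbar t x + Real.sqrt μ * vs t x (-1 + β * b x)))
      (u' := fun z => rx vbar t x + Real.sqrt μ * sx vs t x z)
      (v := fun y => vs t x y ^ 2)
      (v' := fun z => 2 * (vs t x z * sz vs t x z))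
      (fun z _ => (hIUd z).sub_const _)
      (fun z _ => hvsq z)
      (hgc.intervalIntegrable _ _)
      ((continuous_const.mul (hvs_cont.mul hsz_cont)).intervalIntegrable _ _)
    rw [hint]
    beta_reduce
    have hUA : (∫ zp in (-1 + β * b x)..(-1 + β * b x),
        (rx vbar t x + Real.sqrt μ * sx vs t x zp)) = 0 := intervalIntegral.integral_same
    have hUC : (∫ zp in (-1 + β * b x)..(ε * ζ t x),
          (rx vbar t x + Real.sqrt μ * sx vs t x zp))
        = rx vbar t x * (ε * ζ t x - (-1 + β * b x))
          + Real.sqrt μ * (∫ z in (-1 + β * b x)..(ε * ζ t x), sx vs t x z) := by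
      rw [intervalIntegral.integral_add intervalIntegrable_const
        ((continuous_const.fun_mul hsx_cont).intervalIntegrable _ _),
        intervalIntegral.integral_const, intervalIntegral.integral_const_mul]
      simp [smul_eq_mul]
      ring
    have hP : (∫ z in (-1 + β * b x)..(ε * ζ t x),
          (rx vbar t x + Real.sqrt μ * sx vs t x z) * vs t x z ^ 2)
        = rx vbar t x * (∫ z in (-1 + β * b x)..(ε * ζ t x), vs t x z ^ 2)
          + Real.sqrt μ
            * (∫ z in (-1 + β * b x)..(ε * ζ t x), vs t x z ^ 2 * sx vs t x z) := by
      rw [intervalIntegral.integral_congr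
        (g := fun z => rx vbar t x * vs t x z ^ 2
          + Real.sqrt μ * (vs t x z ^ 2 * sx vs t x z)) (fun z _ => by ring)]
      rw [intervalIntegral.integral_add
        ((continuous_const.fun_mul (hvs_cont.fun_pow 2)).intervalIntegrable _ _)
        ((continuous_const.fun_mul ((hvs_cont.fun_pow 2).fun_mul hsx_cont)).intervalIntegrable _ _),
        intervalIntegral.integral_const_mul, intervalIntegral.integral_const_mul]
    rw [hUA, hUC, hP]
    ring
  -- final assembly
  have hE : En ε β ζ b vs t x = ∫ z in (-1 + β * b x)..(ε * ζ t x), vs t x z ^ 2 := rfl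
  rw [hE]
  linear_combination h1 + (ε * vbar t x) * h2 + (ε * Real.sqrt μ) * h3 + 2 * hIt
    + ε * hIBP + (ε * Real.sqrt μ * vs t x (ε * ζ t x) ^ 2) * hS
    + (ε * vs t x (ε * ζ t x) ^ 2) * hmass'
end
end
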